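/- arXiv:math/9902164 — 7 statements merged into one kernel-verified Lean document; each statement's English description precedes it below -/
import Mathlib

section
/- Let ℓ be a prime, N a finite group of order prime to ℓ, and K a complete discrete valuation field of characteristic zero and residue characteristic ℓ with valuation ring O_K and maximal ideal m. Let V be a finite-dimensional K-vector space that is a simple K[N]-module, let f : V × V → K be a nondegenerate N-invariant K-bilinear pairing, and let T be an N-stable O_K-lattice in V with f(T,T) = O_K. Then the restriction f : T × T → O_K is a perfect pairing, and the reduction f̄ : T/mT × T/mT → O_K/m is nondegenerate. -/
open Submodule IsLocalRing Pointwise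

theorem aux_nzsd {O : Type} [CommRing O] {K : Type} [Field K] [Algebra O K]
    [IsFractionRing O K] {V : Type} [AddCommGroup V] [Module K V] [Module O V]
    [IsScalarTower O K V] (T : Submodule O V) : NoZeroSMulDivisors O ↥T := by
  constructor
  intro c x h
  rcases eq_or_ne c 0 with hc | hc
  · exact Or.inl hc
  · right
    have h' : c • (x : V) = 0 := by
      have := congrArg (Subtype.val) h
      simpa using this
    rw [← algebraMap_smul K c (x : V)] at h'
    have hc' : algebraMap O K c ≠ 0 :=
      (map_ne_zero_iff _ (IsFractionRing.injective O K)).mpr hc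
    exact Subtype.ext ((smul_eq_zero.mp h').resolve_left hc')

theorem aux_ilm {O : Type} [CommRing O] [IsDomain O] {K : Type} [Field K] [Algebra O K]
    [IsFractionRing O K] {V : Type} [AddCommGroup V] [Module K V] [Module O V]
    [IsScalarTower O K V] (T : Submodule O V)
    (hTspan : Submodule.span K (T : Set V) = ⊤) :
    IsLocalizedModule (nonZeroDivisors O) T.subtype := by
  constructor
  · intro s
    rw [Module.End.isUnit_iff]
    have hs : (algebraMap O K) (s : O) ≠ 0 :=
      (map_ne_zero_iff _ (IsFractionRing.injective O K)).mpr (nonZeroDivisors.coe_ne_zero s)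
    constructor
    · intro x y hxy
      simp only [Module.algebraMap_end_apply] at hxy
      rw [← algebraMap_smul K (s : O) x, ← algebraMap_smul K (s : O) y] at hxy
      exact smul_right_injective V hs hxy
    · intro y
      refine ⟨(algebraMap O K (s : O))⁻¹ • y, ?_⟩
      rw [Module.algebraMap_end_apply, ← algebraMap_smul K (s : O), smul_smul,
        mul_inv_cancel₀ hs, one_smul]
  · intro y
    have hy : y ∈ Submodule.span K (T : Set V) := by rw [hTspan]; trivial
    obtain ⟨n, cf, gv, hsum⟩ := mem_span_set'.mp hy
    obtain ⟨d, hd⟩ := IsLocalization.exist_integer_multiples_of_finite (nonZeroDivisors O) cf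
    choose a ha using hd
    have hmem : (d : O) • y ∈ T := by
      rw [← hsum, Finset.smul_sum]
      refine Submodule.sum_mem _ fun i _ => ?_
      have h1 : (d : O) • (cf i • (gv i : V)) = a i • (gv i : V) := by
        rw [← algebraMap_smul K (d : O), smul_smul, ← algebraMap_smul K (a i),
          ha i, Algebra.smul_def]
      rw [h1]
      exact T.smul_mem _ (gv i).2
    exact ⟨⟨⟨(d : O) • y, hmem⟩, d⟩, rfl⟩
  · intro x y h
    exact ⟨1, by rw [Subtype.ext h]⟩

/-- restriction of the representation to the lattice `T` -/
noncomputable def rhoT {O : Type} [CommRing O] {K : Type} [Field K] [Algebra O K]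
    {V : Type} [AddCommGroup V] [Module K V] [Module O V] [IsScalarTower O K V]
    {N : Type} [Group N] (ρ : Representation K N V) (T : Submodule O V)
    (h : ∀ n : N, ∀ v ∈ T, ρ n v ∈ T) (n : N) : ↥T →ₗ[O] ↥T :=
  ((ρ n).restrictScalars O).restrict (fun x hx => h n x hx)

@[simp] theorem rhoT_coe {O : Type} [CommRing O] {K : Type} [Field K] [Algebra O K]
    {V : Type} [AddCommGroup V] [Module K V] [Module O V] [IsScalarTower O K V]
    {N : Type} [Group N] (ρ : Representation K N V) (T : Submodule O V)
    (h : ∀ n : N, ∀ v ∈ T, ρ n v ∈ T) (n : N) (t : ↥T) :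
    (rhoT ρ T h n t : V) = ρ n (t : V) := rfl

theorem rhoT_inv_self {O : Type} [CommRing O] {K : Type} [Field K] [Algebra O K]
    {V : Type} [AddCommGroup V] [Module K V] [Module O V] [IsScalarTower O K V]
    {N : Type} [Group N] (ρ : Representation K N V) (T : Submodule O V)
    (h : ∀ n : N, ∀ v ∈ T, ρ n v ∈ T) (n : N) (t : ↥T) :
    rhoT ρ T h n (rhoT ρ T h n⁻¹ t) = t := by
  apply Subtype.ext
  have : ρ n (ρ n⁻¹ (t : V)) = (t : V) := by
    rw [← Module.End.mul_apply, ← map_mul, mul_inv_cancel, map_one, Module.End.one_apply]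
  simpa using this

theorem rhoT_comp_eq {O : Type} [CommRing O] {K : Type} [Field K] [Algebra O K]
    {V : Type} [AddCommGroup V] [Module K V] [Module O V] [IsScalarTower O K V]
    {N : Type} [Group N] (ρ : Representation K N V) (T : Submodule O V)
    (h : ∀ n : N, ∀ v ∈ T, ρ n v ∈ T) (n n' : N) (t : ↥T) :
    rhoT ρ T h n (rhoT ρ T h n' t) = rhoT ρ T h (n * n') t := by
  apply Subtype.ext
  have : ρ n (ρ n' (t : V)) = ρ (n * n') (t : V) := by
    rw [map_mul, Module.End.mul_apply]
  simpa using this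

theorem aux_surj {O : Type} [CommRing O] [IsDomain O] [IsDiscreteValuationRing O]
    {M : Type} [AddCommGroup M] [Module O M] [Module.Finite O M] [Module.Free O M]
    (G : M →ₗ[O] M →ₗ[O] O) (hinj : Function.Injective ⇑G)
    (hsmall : ∀ v : M, (∀ w, G v w ∈ maximalIdeal O) →
      v ∈ maximalIdeal O • (⊤ : Submodule O M)) :
    Function.Surjective ⇑G := by
  classical
  set b : Module.Basis (Module.Free.ChooseBasisIndex O M) O M := Module.Free.chooseBasis O M with hbdef
  set ι := Module.Free.ChooseBasisIndex O M
  set bd : Module.Basis ι O (M →ₗ[O] O) := b.dualBasis with hbd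
  obtain ⟨nsm, snf⟩ := (LinearMap.range G).smithNormalForm bd
  have hcard : Fintype.card ι = nsm := by
    refine le_antisymm ?_ (by simpa using Fintype.card_le_of_injective snf.f snf.f.injective)
    have h1 : LinearIndependent O (fun i => G (b i)) :=
      b.linearIndependent.map' G (LinearMap.ker_eq_bot.mpr hinj)
    have h2 : LinearIndependent O
        (fun i : ι => (⟨G (b i), LinearMap.mem_range_self G (b i)⟩ : ↥(LinearMap.range G))) := by
      apply LinearIndependent.of_comp (LinearMap.range G).subtype
      exact h1
    simpa using Module.Basis.card_le_card_of_linearIndependent snf.bN h2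
  have hfsurj : Function.Surjective ⇑snf.f :=
    ((Fintype.bijective_iff_injective_and_card ⇑snf.f).mpr
      ⟨snf.f.injective, by simp [hcard]⟩).2
  obtain ⟨π, hπ⟩ := IsDiscreteValuationRing.exists_irreducible O
  have hπm : maximalIdeal O = Ideal.span {π} :=
    (IsDiscreteValuationRing.irreducible_iff_uniformizer π).mp hπ
  have haunit : ∀ i, IsUnit (snf.a i) := by
    intro i
    by_contra hai
    have haim : snf.a i ∈ maximalIdeal O := (mem_maximalIdeal _).mpr hai
    obtain ⟨t, ht⟩ := (snf.bN i).2
    have hsm : ∀ w, G t w ∈ maximalIdeal O := by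
      intro w
      rw [ht, snf.snf i, LinearMap.smul_apply, smul_eq_mul]
      exact Ideal.mul_mem_right _ _ haim
    have hmem := hsmall t hsm
    rw [hπm, Submodule.ideal_span_singleton_smul] at hmem
    obtain ⟨t', -, ht'⟩ := Set.mem_smul_set.mp hmem
    set y : ↥(LinearMap.range G) := ⟨G t', LinearMap.mem_range_self G t'⟩ with hydef
    have hy : snf.bN i = π • y := by
      apply Subtype.ext
      rw [← ht, ← ht']
      simp [hydef, map_smul]
    have h1 : (1 : O) = π * (snf.bN.repr y i) := by
      calc (1 : O) = snf.bN.repr (snf.bN i) i := by simp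
      _ = snf.bN.repr (π • y) i := by rw [← hy]
      _ = π * (snf.bN.repr y i) := by rw [map_smul, Finsupp.smul_apply, smul_eq_mul]
    exact hπ.not_isUnit (IsUnit.of_mul_eq_one _ h1.symm)
  rw [← LinearMap.range_eq_top, eq_top_iff, ← snf.bM.span_eq, Submodule.span_le]
  rintro _ ⟨j, rfl⟩
  obtain ⟨i, rfl⟩ := hfsurj j
  obtain ⟨u, hu⟩ := haunit i
  have hbm : snf.bM (snf.f i) = (↑u⁻¹ : O) • ((snf.bN i : M →ₗ[O] O)) := by
    rw [snf.snf i, ← hu, smul_smul, Units.inv_mul, one_smul]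
  rw [SetLike.mem_coe, hbm]
  exact Submodule.smul_mem _ _ (snf.bN i).2

theorem keyLattice
    {O : Type} [CommRing O] [IsDomain O] [IsDiscreteValuationRing O]
    [IsAdicComplete (maximalIdeal O) O]
    {K : Type} [Field K] [Algebra O K] [IsFractionRing O K]
    {V : Type} [AddCommGroup V] [Module K V] [Module O V] [IsScalarTower O K V]
    {N : Type} [Group N] [Finite N]
    (ρ : Representation K N V)
    (hsimple : ∀ U : Submodule K V, (∀ n : N, ∀ v ∈ U, ρ n v ∈ U) → U = ⊥ ∨ U = ⊤)
    (hu : IsUnit ((Nat.card N : O)))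
    (T : Submodule O V) (hTfg : T.FG) (hTspan : Submodule.span K (T : Set V) = ⊤)
    (hTstable : ∀ n : N, ∀ v ∈ T, ρ n v ∈ T)
    (L : Submodule O ↥T) (hmL : maximalIdeal O • ⊤ ≤ L)
    (hLstable : ∀ (n : N) (t : ↥T), t ∈ L → rhoT ρ T hTstable n t ∈ L) :
    L = maximalIdeal O • ⊤ ∨ L = ⊤ := by
  classical
  by_contra hcon
  push_neg at hcon
  obtain ⟨hL1, hL2⟩ := hcon
  haveI : Module.Finite O ↥T := Module.Finite.iff_fg.mpr hTfg
  haveI := aux_nzsd (K := K) T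
  haveI : Module.Free O ↥T := Module.free_of_finite_type_torsion_free'
  haveI := aux_ilm T hTspan
  haveI := Fintype.ofFinite N
  set m : Ideal O := maximalIdeal O with hmdef
  set mT : Submodule O ↥T := m • ⊤ with hmTdef
  set R := rhoT ρ T hTstable with hRdef
  -- Smith normal form for L
  obtain ⟨nsm, snf⟩ := L.smithNormalForm (Module.Free.chooseBasis O ↥T)
  set ι := Module.Free.ChooseBasisIndex O ↥T
  set cb : Module.Basis ι O ↥T := snf.bM with hcbdef
  obtain ⟨π, hπ⟩ := IsDiscreteValuationRing.exists_irreducible O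
  have hπm : m = Ideal.span {π} :=
    (IsDiscreteValuationRing.irreducible_iff_uniformizer π).mp hπ
  have hπmem : π ∈ m := by rw [hπm]; exact Ideal.mem_span_singleton_self π
  -- nsm = card ι
  have hcard : Fintype.card ι = nsm := by
    refine le_antisymm ?_ (by simpa using Fintype.card_le_of_injective snf.f snf.f.injective)
    have hind0 : LinearIndependent O (fun i : ι => π • cb i) := by
      rw [linearIndependent_iff']
      intro s g hg i hi
      have hg' : ∑ j ∈ s, (g j * π) • cb j = 0 := by
        rw [← hg]
        exact Finset.sum_congr rfl fun j _ => by rw [smul_smul]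
      have := linearIndependent_iff'.mp cb.linearIndependent s (fun j => g j * π) hg' i hi
      exact (mul_eq_zero.mp this).resolve_right hπ.ne_zero
    have hind : LinearIndependent O
        (fun i : ι => (⟨π • cb i, hmL (smul_mem_smul hπmem mem_top)⟩ : ↥L)) := by
      apply LinearIndependent.of_comp L.subtype
      exact hind0
    simpa using Module.Basis.card_le_card_of_linearIndependent snf.bN hind
  have hfsurj : Function.Surjective ⇑snf.f :=
    ((Fintype.bijective_iff_injective_and_card ⇑snf.f).mpr
      ⟨snf.f.injective, by simp [hcard]⟩).2
  -- reindexed diagonal entries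
  have hsnf' : ∀ i : ι, ∃ j : Fin nsm, snf.f j = i ∧ ((snf.bN j : ↥T)) = snf.a j • cb i := by
    intro i
    obtain ⟨j, hj⟩ := hfsurj i
    exact ⟨j, hj, by rw [snf.snf j, hj]⟩
  choose jdx hjdx1 hjdx2 using hsnf'
  set a' : ι → O := fun i => snf.a (jdx i) with ha'def
  have hmemL : ∀ i : ι, a' i • cb i ∈ L := fun i => by
    rw [← hjdx2 i]; exact (snf.bN (jdx i)).2
  -- the projection p
  set p : ↥T →ₗ[O] ↥T := cb.constr (M' := ↥T) O (fun i => if a' i ∈ m then 0 else cb i)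
    with hpdef
  have hpc : ∀ i, p (cb i) = if a' i ∈ m then 0 else cb i := fun i =>
    cb.constr_basis O _ i
  have hcbL : ∀ i, a' i ∉ m → cb i ∈ L := by
    intro i hi
    have hui : IsUnit (a' i) := by
      by_contra h; exact hi ((mem_maximalIdeal _).mpr h)
    obtain ⟨u, hu'⟩ := hui
    have : cb i = (↑u⁻¹ : O) • (a' i • cb i) := by
      rw [← hu', smul_smul, Units.inv_mul, one_smul]
    rw [this]
    exact L.smul_mem _ (hmemL i)
  have hpL : ∀ x : ↥T, p x ∈ L := by
    intro x
    have hx : x ∈ Submodule.span O (Set.range cb) := by rw [cb.span_eq]; trivial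
    induction hx using Submodule.span_induction with
    | mem y hy =>
      obtain ⟨i, rfl⟩ := hy
      rw [hpc i]
      split
      · exact L.zero_mem
      · exact hcbL i (by assumption)
    | zero => rw [map_zero]; exact L.zero_mem
    | add y z _ _ hy hz => rw [map_add]; exact L.add_mem hy hz
    | smul c y _ hy => rw [map_smul]; exact L.smul_mem c hy
  have hpdiff : ∀ x ∈ L, x - p x ∈ mT := by
    have hLspan : L ≤ Submodule.span O (Set.range (fun j : Fin nsm => (snf.bN j : ↥T))) := by
      intro x hx
      have : (⟨x, hx⟩ : ↥L) ∈ Submodule.span O (Set.range snf.bN) := by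
        rw [snf.bN.span_eq]; trivial
      have h2 := Submodule.mem_map_of_mem (f := L.subtype) this
      rw [Submodule.map_span, ← Set.range_comp] at h2
      exact h2
    intro x hx
    have hx' := hLspan hx
    clear hx
    induction hx' using Submodule.span_induction with
    | mem y hy =>
      obtain ⟨j, rfl⟩ := hy
      show ((snf.bN j : ↥T)) - p ((snf.bN j : ↥T)) ∈ mT
      have h1 : jdx (snf.f j) = j := snf.f.injective (hjdx1 (snf.f j))
      have hbn : ((snf.bN j : ↥T)) = a' (snf.f j) • cb (snf.f j) := by
        simp only [ha'def]
        conv_lhs => rw [← h1]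
        exact hjdx2 (snf.f j)
      rw [hbn]
      by_cases hcase : a' (snf.f j) ∈ m
      · rw [map_smul, hpc _, if_pos hcase, smul_zero, sub_zero]
        exact smul_mem_smul hcase mem_top
      · rw [map_smul, hpc _, if_neg hcase, sub_self]
        exact mT.zero_mem
    | zero => rw [map_zero, sub_zero]; exact mT.zero_mem
    | add y z _ _ hy hz =>
      rw [map_add]
      have : y + z - (p y + p z) = (y - p y) + (z - p z) := by abel
      rw [this]; exact mT.add_mem hy hz
    | smul c y _ hy =>
      rw [map_smul]
      have : c • y - c • p y = c • (y - p y) := by rw [smul_sub]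
      rw [this]; exact mT.smul_mem c hy
  -- averaging
  set u := hu.unit with hudef
  have huspec : (↑u : O) = (Nat.card N : O) := hu.unit_spec
  set Esum : ↥T →ₗ[O] ↥T := ∑ n : N, (R n) ∘ₗ p ∘ₗ (R n⁻¹) with hEsumdef
  set E : ↥T →ₗ[O] ↥T := (↑u⁻¹ : O) • Esum with hEdef
  have hstab_mT : ∀ (q : ↥T →ₗ[O] ↥T) (x : ↥T), x ∈ mT → q x ∈ mT := by
    intro q x hx
    have h1 : Submodule.map q mT ≤ mT := by
      rw [hmTdef, Submodule.map_smul'']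
      exact Submodule.smul_mono le_rfl le_top
    exact h1 (Submodule.mem_map_of_mem hx)
  have hEsumapp : ∀ x, Esum x = ∑ n : N, (R n) (p ((R n⁻¹) x)) := by
    intro x
    rw [hEsumdef, LinearMap.sum_apply]
    rfl
  have hEsumL : ∀ x, Esum x ∈ L := by
    intro x
    rw [hEsumapp]
    exact Submodule.sum_mem _ fun n _ => hLstable n _ (hpL _)
  have hEL : ∀ x, E x ∈ L := fun x => by
    rw [hEdef, LinearMap.smul_apply]; exact L.smul_mem _ (hEsumL x)
  have hEid : ∀ x ∈ L, E x - x ∈ mT := by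
    intro x hx
    have hterm : ∀ n : N, (R n) (p ((R n⁻¹) x)) - x ∈ mT := by
      intro n
      have hy : (R n⁻¹) x ∈ L := hLstable n⁻¹ x hx
      have h1 : p ((R n⁻¹) x) - (R n⁻¹) x ∈ mT := by
        have := hpdiff _ hy
        have h2 := mT.neg_mem this
        rwa [neg_sub] at h2
      have h2 : (R n) (p ((R n⁻¹) x) - (R n⁻¹) x) ∈ mT := hstab_mT _ _ h1
      rw [map_sub] at h2
      rwa [hRdef, rhoT_inv_self ρ T hTstable n x] at h2
    have hsum : Esum x - (Nat.card N : O) • x ∈ mT := by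
      have heq : Esum x - (Nat.card N : O) • x = ∑ n : N, ((R n) (p ((R n⁻¹) x)) - x) := by
        rw [Finset.sum_sub_distrib, ← hEsumapp, Finset.sum_const, Finset.card_univ,
          Nat.cast_smul_eq_nsmul, Nat.card_eq_fintype_card]
      rw [heq]
      exact Submodule.sum_mem _ fun n _ => hterm n
    have heq2 : E x - x = (↑u⁻¹ : O) • (Esum x - (Nat.card N : O) • x) := by
      rw [smul_sub, hEdef, LinearMap.smul_apply, smul_smul, ← huspec, Units.inv_mul, one_smul]
    rw [heq2]
    exact mT.smul_mem _ hsum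
  have hEequi : ∀ (n : N) (x : ↥T), (R n) (E x) = E ((R n) x) := by
    intro n x
    rw [hEdef, LinearMap.smul_apply, map_smul, LinearMap.smul_apply]
    congr 1
    rw [hEsumapp, hEsumapp, map_sum]
    refine Fintype.sum_equiv (Equiv.mulLeft n) _ _ ?_
    intro g
    have h1 : (R n) ((R g) (p ((R g⁻¹) x))) = (R (n * g)) (p ((R g⁻¹) x)) :=
      rhoT_comp_eq ρ T hTstable n g _
    have h2 : (R ((n * g)⁻¹)) ((R n) x) = (R g⁻¹) x := by
      rw [hRdef, rhoT_comp_eq ρ T hTstable]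
      congr 1
      group
    rw [h1, Equiv.coe_mulLeft, h2]
  -- matrices
  set Φ := LinearMap.toMatrixAlgEquiv cb with hΦdef
  have hMat : ∀ (q : ↥T →ₗ[O] ↥T) (I : Ideal O),
      (∀ i j, Φ q i j ∈ I) ↔ ∀ x, q x ∈ I • (⊤ : Submodule O ↥T) := by
    intro q I
    constructor
    · intro h x
      have hx : x ∈ Submodule.span O (Set.range cb) := by rw [cb.span_eq]; trivial
      induction hx using Submodule.span_induction with
      | mem y hy =>
        obtain ⟨j, rfl⟩ := hy
        have heq : q (cb j) = ∑ i, Φ q i j • cb i := by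
          conv_lhs => rw [← cb.sum_repr (q (cb j))]
          refine Finset.sum_congr rfl fun i _ => ?_
          rw [hΦdef, LinearMap.toMatrixAlgEquiv_apply]
        rw [heq]
        exact Submodule.sum_mem _ fun i _ => smul_mem_smul (h i j) mem_top
      | zero => rw [map_zero]; exact Submodule.zero_mem _
      | add y z _ _ hy hz => rw [map_add]; exact Submodule.add_mem _ hy hz
      | smul c y _ hy => rw [map_smul]; exact Submodule.smul_mem _ c hy
    · intro h i j
      have hrepr : ∀ y ∈ I • (⊤ : Submodule O ↥T), cb.repr y i ∈ I := by
        intro y hy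
        refine Submodule.smul_induction_on hy ?_ ?_
        · intro r hr z _
          rw [map_smul, Finsupp.smul_apply, smul_eq_mul]
          exact Ideal.mul_mem_right _ _ hr
        · intro y z hy hz
          rw [map_add, Finsupp.add_apply]
          exact Ideal.add_mem _ hy hz
      rw [hΦdef, LinearMap.toMatrixAlgEquiv_apply]
      exact hrepr _ (h (cb j))
  set A0 : Matrix ι ι O := Φ E with hA0def
  set Rm : N → Matrix ι ι O := fun n => Φ (R n) with hRmdef
  have hRA0 : ∀ n, Rm n * A0 = A0 * Rm n := by
    intro n
    rw [hRmdef, hA0def, ← map_mul, ← map_mul]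
    congr 1
    apply LinearMap.ext
    intro x
    rw [Module.End.mul_apply, Module.End.mul_apply]
    exact hEequi n x
  have hA0sq : ∀ i j, (A0 * A0 - A0) i j ∈ m := by
    have heq : A0 * A0 - A0 = Φ (E * E - E) := by rw [map_sub, map_mul]
    rw [heq]
    refine (hMat (E * E - E) m).mpr ?_
    intro x
    rw [LinearMap.sub_apply, Module.End.mul_apply]
    exact hEid (E x) (hEL x)
  -- entry lemmas
  have hent_mulX : ∀ (I : Ideal O) (X Y : Matrix ι ι O), (∀ i j, X i j ∈ I) →
      ∀ i j, (X * Y) i j ∈ I := by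
    intro I X Y hX i j
    rw [Matrix.mul_apply]
    exact Ideal.sum_mem _ fun l _ => Ideal.mul_mem_right _ _ (hX i l)
  have hent_mulY : ∀ (I : Ideal O) (X Y : Matrix ι ι O), (∀ i j, Y i j ∈ I) →
      ∀ i j, (X * Y) i j ∈ I := by
    intro I X Y hY i j
    rw [Matrix.mul_apply]
    exact Ideal.sum_mem _ fun l _ => Ideal.mul_mem_left _ _ (hY l j)
  have hent_mul2 : ∀ (I J : Ideal O) (X Y : Matrix ι ι O), (∀ i j, X i j ∈ I) →
      (∀ i j, Y i j ∈ J) → ∀ i j, (X * Y) i j ∈ I * J := by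
    intro I J X Y hX hY i j
    rw [Matrix.mul_apply]
    exact Ideal.sum_mem _ fun l _ => Ideal.mul_mem_mul (hX i l) (hY l j)
  -- iteration
  set itf : Polynomial O → Polynomial O := fun q => q ^ 2 * (3 - 2 * q) with hitf
  set Qp : ℕ → Polynomial O := fun k => itf^[k] Polynomial.X with hQp
  set A : ℕ → Matrix ι ι O := fun k => Polynomial.aeval A0 (Qp k) with hAdef
  have hA00 : A 0 = A0 := by
    simp [hAdef, hQp]
  have hQsucc : ∀ k, Qp (k + 1) = (Qp k) ^ 2 * (3 - 2 * Qp k) := by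
    intro k
    simp only [hQp, hitf, Function.iterate_succ_apply']
  have hAsq : ∀ k, ∀ i j, (A k * A k - A k) i j ∈ m ^ (2 ^ k) := by
    intro k
    induction k with
    | zero =>
      simpa [hA00] using hA0sq
    | succ k ih =>
      have hidpoly : Qp (k+1) * Qp (k+1) - Qp (k+1) =
          ((Qp k * Qp k - Qp k) * (Qp k * Qp k - Qp k)) * (-((3 - 2 * Qp k) * (2 * Qp k + 1))) := by
        rw [hQsucc]; ring
      have hid : A (k+1) * A (k+1) - A (k+1) =
          ((A k * A k - A k) * (A k * A k - A k)) *
            (Polynomial.aeval A0 (-((3 - 2 * Qp k) * (2 * Qp k + 1)))) := by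
        have := congrArg (Polynomial.aeval A0) hidpoly
        simpa only [map_sub, map_mul, map_add, map_neg, hAdef] using this
      rw [hid]
      intro i j
      refine hent_mulX _ _ _ ?_ i j
      intro i' j'
      have h2 : (2:ℕ) ^ (k+1) = 2 ^ k + 2 ^ k := by
        rw [pow_succ, Nat.mul_two]
      rw [h2, pow_add]
      exact hent_mul2 _ _ _ _ ih ih i' j'
  have hAdiff : ∀ k, ∀ i j, (A (k+1) - A k) i j ∈ m ^ (2 ^ k) := by
    intro k
    have hidpoly : Qp (k+1) - Qp k = (Qp k * Qp k - Qp k) * (-(2 * Qp k - 1)) := by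
      rw [hQsucc]; ring
    have hid : A (k+1) - A k = (A k * A k - A k) * (Polynomial.aeval A0 (-(2 * Qp k - 1))) := by
      have := congrArg (Polynomial.aeval A0) hidpoly
      simpa only [map_sub, map_mul, hAdef] using this
    rw [hid]
    exact fun i j => hent_mulX _ _ _ (hAsq k) i j
  have hpow_le : ∀ {k1 k2 : ℕ}, k1 ≤ k2 → m ^ k2 ≤ m ^ k1 := fun h =>
    Ideal.pow_le_pow_right h
  have hAcau : ∀ {k k' : ℕ}, k ≤ k' → ∀ i j, (A k' - A k) i j ∈ m ^ k := by
    intro k k' hkk'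
    induction k', hkk' using Nat.le_induction with
    | base => intro i j; simp
    | succ k' hk ih =>
      intro i j
      have h1 : (A (k'+1) - A k) i j = (A (k'+1) - A k') i j + (A k' - A k) i j := by
        simp [Matrix.sub_apply]
      rw [h1]
      refine Ideal.add_mem _ ?_ (ih i j)
      exact hpow_le (le_trans hk (le_of_lt (Nat.lt_two_pow_self (n := k')))) (hAdiff k' i j)
  -- limits entrywise
  have hsmultop : ∀ (I : Ideal O) (x : O), x ∈ I • (⊤ : Submodule O O) ↔ x ∈ I := by
    intro I x
    constructor
    · intro hx
      refine Submodule.smul_induction_on hx ?_ ?_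
      · intro r hr z _; rw [smul_eq_mul]; exact Ideal.mul_mem_right _ _ hr
      · intro y z hy hz; exact Ideal.add_mem _ hy hz
    · intro hx
      have h9 := Submodule.smul_mem_smul hx (Submodule.mem_top (x := (1:O)))
      simpa using h9
  have hBex : ∀ i j, ∃ Lc : O, ∀ k, A k i j - Lc ∈ m ^ k := by
    intro i j
    have hpre : IsPrecomplete m O := IsAdicComplete.toIsPrecomplete
    have hcau2 : ∀ {k k' : ℕ}, k ≤ k' →
        A k i j ≡ A k' i j [SMOD ((m ^ k • ⊤ : Submodule O O))] := by
      intro k k' hkk'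
      rw [SModEq.sub_mem]
      apply (hsmultop _ _).mpr
      have h1 := hAcau hkk' i j
      have h2 := (m ^ k).neg_mem h1
      rw [Matrix.sub_apply] at h2
      rwa [neg_sub] at h2
    obtain ⟨Lc, hLc⟩ := hpre.prec (f := fun k => A k i j) hcau2
    refine ⟨Lc, fun k => ?_⟩
    have h3 := hLc k
    rw [SModEq.sub_mem] at h3
    exact (hsmultop _ _).mp h3
  choose Bf hB using hBex
  set B : Matrix ι ι O := Matrix.of Bf with hBdef
  have hBk : ∀ k i j, A k i j - B i j ∈ m ^ k := fun k i j => hB i j k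
  have hzero : ∀ x : O, (∀ k, x ∈ m ^ k) → x = 0 := by
    intro x hx
    refine IsHausdorff.haus (IsAdicComplete.toIsHausdorff : IsHausdorff m O) x fun k => ?_
    rw [SModEq.zero]
    exact (hsmultop _ _).mpr (hx k)
  have hcongmul : ∀ (k : ℕ) (X Y : Matrix ι ι O), (∀ i j, A k i j - X i j ∈ m ^ k) →
      (∀ i j, A k i j - Y i j ∈ m ^ k) → ∀ i j, (A k * A k) i j - (X * Y) i j ∈ m ^ k := by
    intro k X Y hX hY i j
    rw [Matrix.mul_apply, Matrix.mul_apply, ← Finset.sum_sub_distrib]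
    refine Ideal.sum_mem _ fun l _ => ?_
    have heq : A k i l * A k l j - X i l * Y l j =
        A k i l * (A k l j - Y l j) + (A k i l - X i l) * Y l j := by ring
    rw [heq]
    exact Ideal.add_mem _ (Ideal.mul_mem_left _ _ (hY l j)) (Ideal.mul_mem_right _ _ (hX i l))
  have hBB : B * B = B := by
    apply Matrix.ext
    intro i j
    rw [← sub_eq_zero]
    refine hzero _ fun k => ?_
    have h1 := hcongmul k B B (hBk k) (hBk k) i j
    have h2 := hpow_le (le_of_lt (Nat.lt_two_pow_self (n := k))) (hAsq k i j)
    have h3 := hBk k i j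
    have heq : (B * B) i j - B i j =
        -((A k * A k) i j - (B * B) i j) + ((A k * A k) i j - A k i j) + (A k i j - B i j) := by
      ring
    rw [heq]
    rw [Matrix.sub_apply] at h2
    exact Ideal.add_mem _ (Ideal.add_mem _ ((m ^ k).neg_mem h1) h2) h3
  have hBA0 : ∀ i j, (B - A0) i j ∈ m := by
    intro i j
    have h1 := hBk 1 i j
    have h2 := hAdiff 0 i j
    rw [pow_one] at h1
    have heq : (B - A0) i j = -(A 1 i j - B i j) + (A 1 - A 0) i j := by
      rw [Matrix.sub_apply, Matrix.sub_apply, hA00]; ring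
    rw [heq]
    refine Ideal.add_mem _ (m.neg_mem h1) ?_
    simpa [pow_one] using h2
  have hARc : ∀ (k : ℕ) (n : N), Rm n * A k = A k * Rm n := by
    intro k n
    have h1 : A k ∈ Algebra.adjoin O ({A0} : Set (Matrix ι ι O)) := by
      rw [Algebra.adjoin_singleton_eq_range_aeval]
      exact ⟨Qp k, rfl⟩
    have h2 : Algebra.adjoin O ({A0} : Set (Matrix ι ι O)) ≤
        Subalgebra.centralizer O {Rm n} := by
      apply Algebra.adjoin_le
      intro x hx
      rw [Set.mem_singleton_iff] at hx
      subst hx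
      exact (Subalgebra.mem_centralizer_iff O).mpr (fun y hy => by
        rw [Set.mem_singleton_iff] at hy
        subst hy
        exact hRA0 n)
    have h3 := h2 h1
    exact (Subalgebra.mem_centralizer_iff O).mp h3 (Rm n) rfl
  have hBR : ∀ n, Rm n * B = B * Rm n := by
    intro n
    apply Matrix.ext
    intro i j
    rw [← sub_eq_zero]
    refine hzero _ fun k => ?_
    have hXk : ∀ i j, (B - A k) i j ∈ m ^ k := by
      intro i j
      have := (m ^ k).neg_mem (hBk k i j)
      rwa [neg_sub, ← Matrix.sub_apply] at this
    have h1 : ∀ i j, (Rm n * (B - A k)) i j ∈ m ^ k := hent_mulY _ _ _ hXk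
    have h2 : ∀ i j, ((B - A k) * Rm n) i j ∈ m ^ k := hent_mulX _ _ _ hXk
    have heq : (Rm n * B) i j - (B * Rm n) i j =
        (Rm n * (B - A k)) i j - ((B - A k) * Rm n) i j +
          ((Rm n * A k) i j - (A k * Rm n) i j) := by
      rw [Matrix.mul_sub, Matrix.sub_mul]
      simp [Matrix.sub_apply]
      ring
    rw [heq, hARc k n, sub_self, add_zero]
    exact Ideal.sub_mem _ (h1 i j) (h2 i j)
  -- back to endomorphisms
  set Ee : ↥T →ₗ[O] ↥T := Φ.symm B with hEedef
  have hΦEe : Φ Ee = B := Φ.apply_symm_apply B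
  have hEeidem : ∀ x, Ee (Ee x) = Ee x := by
    have h1 : Ee * Ee = Ee := by
      apply Φ.injective
      rw [map_mul, hΦEe, hBB]
    intro x
    have := congrArg (fun q : ↥T →ₗ[O] ↥T => q x) h1
    simpa [Module.End.mul_apply] using this
  have hEeequi : ∀ (n : N) (x : ↥T), (R n) (Ee x) = Ee ((R n) x) := by
    intro n x
    have h1 : (R n) * Ee = Ee * (R n) := by
      apply Φ.injective
      rw [map_mul, map_mul, hΦEe]
      exact hBR n
    have := congrArg (fun q : ↥T →ₗ[O] ↥T => q x) h1
    simpa [Module.End.mul_apply] using this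
  have hEeE : ∀ x, Ee x - E x ∈ mT := by
    have h1 : ∀ x, (Ee - E) x ∈ m • (⊤ : Submodule O ↥T) :=
      (hMat (Ee - E) m).mp (by
        intro i j
        rw [map_sub, hΦEe]
        exact hBA0 i j)
    intro x
    have := h1 x
    rwa [LinearMap.sub_apply] at this
  have hEeL : ∀ x, Ee x ∈ L := fun x => by
    have heq : Ee x = E x + (Ee x - E x) := by abel
    rw [heq]
    exact L.add_mem (hEL x) (hmL (hEeE x))
  have hEeid : ∀ x ∈ L, Ee x - x ∈ mT := fun x hx => by
    have heq : Ee x - x = (Ee x - E x) + (E x - x) := by abel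
    rw [heq]
    exact mT.add_mem (hEeE x) (hEid x hx)
  obtain ⟨x0, hx0L, hx0m⟩ : ∃ x ∈ L, x ∉ mT := by
    by_contra h
    push_neg at h
    exact hL1 (le_antisymm h hmL)
  have hEex0 : Ee x0 ≠ 0 := by
    intro h0
    apply hx0m
    have := hEeid x0 hx0L
    rw [h0, zero_sub] at this
    have h2 := mT.neg_mem this
    rwa [neg_neg] at h2
  -- scalar extension
  set cV : Module.Basis ι K V := Module.Basis.ofIsLocalizedModule K (nonZeroDivisors O) T.subtype cb
    with hcVdef
  have hcV : ∀ i, cV i = (cb i : V) := fun i =>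
    Module.Basis.ofIsLocalizedModule_apply K (nonZeroDivisors O) T.subtype cb i
  set EV : V →ₗ[K] V := cV.constr (M' := V) K (fun i => ((Ee (cb i) : ↥T) : V)) with hEVdef
  have hAgree : ∀ t : ↥T, EV (t : V) = ((Ee t : ↥T) : V) := by
    have hcomp : (LinearMap.restrictScalars O EV) ∘ₗ T.subtype = T.subtype ∘ₗ Ee := by
      apply Module.Basis.ext cb
      intro i
      rw [LinearMap.comp_apply, LinearMap.comp_apply, LinearMap.restrictScalars_apply]
      have h1 : T.subtype (cb i) = cV i := (hcV i).symm
      rw [h1, hEVdef, Module.Basis.constr_basis]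
      rfl
    intro t
    have := LinearMap.congr_fun hcomp t
    simpa using this
  set W : Submodule K V := Submodule.span K {v : V | ∃ t : ↥T, ((Ee t : ↥T) : V) = v}
    with hWdef
  have hWstab : ∀ n : N, ∀ v ∈ W, ρ n v ∈ W := by
    intro n v hv
    induction hv using Submodule.span_induction with
    | mem y hy =>
      obtain ⟨t, rfl⟩ := hy
      apply Submodule.subset_span
      refine ⟨R n t, ?_⟩
      rw [← hEeequi n t]
      rfl
    | zero => rw [map_zero]; exact W.zero_mem
    | add y z _ _ hy hz => rw [map_add]; exact W.add_mem hy hz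
    | smul c y _ hy => rw [map_smul]; exact W.smul_mem c hy
  rcases hsimple W hWstab with hW | hW
  · apply hEex0
    have h1 : ((Ee x0 : ↥T) : V) ∈ W := Submodule.subset_span ⟨x0, rfl⟩
    rw [hW, Submodule.mem_bot] at h1
    exact Subtype.ext h1
  · have hWle : W ≤ LinearMap.range EV := by
      rw [hWdef, Submodule.span_le]
      rintro _ ⟨t, rfl⟩
      exact ⟨(t : V), hAgree t⟩
    have hsurjEV : Function.Surjective ⇑EV := by
      rw [← LinearMap.range_eq_top]
      exact top_le_iff.mp (hW ▸ hWle)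
    have hidem : ∀ v, EV (EV v) = EV v := by
      have e1 : ∀ i, EV (cV i) = ((Ee (cb i) : ↥T) : V) := by
        intro i
        simp only [hEVdef, Module.Basis.constr_basis]
      have hc : EV ∘ₗ EV = EV := by
        apply Module.Basis.ext cV
        intro i
        calc (EV ∘ₗ EV) (cV i) = EV (EV (cV i)) := rfl
        _ = EV ((Ee (cb i) : ↥T) : V) := by rw [e1 i]
        _ = ((Ee (Ee (cb i)) : ↥T) : V) := hAgree _
        _ = ((Ee (cb i) : ↥T) : V) := by rw [hEeidem]
        _ = EV (cV i) := (e1 i).symm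
      exact fun v => LinearMap.congr_fun hc v
    have hEVid : ∀ v, EV v = v := by
      intro v
      obtain ⟨w, rfl⟩ := hsurjEV v
      rw [hidem]
    have hEet : ∀ t : ↥T, Ee t = t := by
      intro t
      have h1 := hAgree t
      rw [hEVid] at h1
      exact Subtype.ext h1.symm
    apply hL2
    rw [eq_top_iff]
    intro t _
    rw [← hEet t]
    exact hEeL t

/-- Proposition 3.6: let `ℓ` be a prime, `N` a finite group of order prime to `ℓ`, `K` a
complete discrete valuation field of characteristic zero and residue characteristic `ℓ` with
valuation ring `O` and maximal ideal `m`.  Let `V` be a finite-dimensional `K`-vector space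
which is a simple `K[N]`-module, `f` a nondegenerate `N`-invariant `K`-bilinear pairing on
`V`, and `T` an `N`-stable `O`-lattice with `f(T,T) = O`.  Then `f` restricts to a perfect
`O`-valued pairing on `T`, and its reduction mod `m` is nondegenerate. -/
theorem stmt_3 (ℓ : ℕ) (hℓ : ℓ.Prime)
    (N : Type) [Group N] [Finite N] (hN : (Nat.card N).Coprime ℓ)
    (O : Type) [CommRing O] [IsDomain O] [IsDiscreteValuationRing O]
    [IsAdicComplete (IsLocalRing.maximalIdeal O) O]
    (K : Type) [Field K] [Algebra O K] [IsFractionRing O K] [CharZero K]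
    (hres : (ℓ : O) ∈ IsLocalRing.maximalIdeal O)
    (V : Type) [AddCommGroup V] [Module K V] [FiniteDimensional K V]
    [Module O V] [IsScalarTower O K V]
    (ρ : Representation K N V)
    (hsimple : ∀ U : Submodule K V, (∀ n : N, ∀ v ∈ U, ρ n v ∈ U) → U = ⊥ ∨ U = ⊤)
    (f : V →ₗ[K] V →ₗ[K] K)
    (hnondeg₁ : ∀ v : V, (∀ w : V, f v w = 0) → v = 0)
    (hnondeg₂ : ∀ w : V, (∀ v : V, f v w = 0) → w = 0)
    (hinv : ∀ n : N, ∀ v w : V, f (ρ n v) (ρ n w) = f v w)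
    (T : Submodule O V) (hTfg : T.FG) (hTspan : Submodule.span K (T : Set V) = ⊤)
    (hTstable : ∀ n : N, ∀ v ∈ T, ρ n v ∈ T)
    (hfTT : Submodule.span O {x : K | ∃ v ∈ T, ∃ w ∈ T, f v w = x} = (1 : Submodule O K)) :
    ∃ g : T →ₗ[O] T →ₗ[O] O,
      (∀ v w : T, algebraMap O K (g v w) = f (v : V) (w : V)) ∧
      Function.Bijective ⇑g ∧ Function.Bijective ⇑g.flip ∧
      (∀ v : T, (∀ w : T, g v w ∈ IsLocalRing.maximalIdeal O) →
        (v : V) ∈ (IsLocalRing.maximalIdeal O) • T) ∧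
      (∀ w : T, (∀ v : T, g v w ∈ IsLocalRing.maximalIdeal O) →
        (w : V) ∈ (IsLocalRing.maximalIdeal O) • T) := by
  classical
  haveI : Module.Finite O ↥T := Module.Finite.iff_fg.mpr hTfg
  haveI := aux_nzsd (K := K) T
  haveI : Module.Free O ↥T := Module.free_of_finite_type_torsion_free'
  have hinjOK := IsFractionRing.injective O K
  -- values of f on T lie in O
  have hval : ∀ v w : ↥T, ∃ c : O, algebraMap O K c = f (v : V) (w : V) := by
    intro v w
    have h1 : f (v : V) (w : V) ∈
        Submodule.span O {x : K | ∃ v ∈ T, ∃ w ∈ T, f v w = x} :=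
      Submodule.subset_span ⟨(v : V), v.2, (w : V), w.2, rfl⟩
    rw [hfTT, Submodule.one_eq_range] at h1
    obtain ⟨c, hc⟩ := h1
    exact ⟨c, hc⟩
  choose G hG using hval
  -- the bilinear map g
  have hadd1 : ∀ (v v' w : ↥T), G (v + v') w = G v w + G v' w := by
    intro v v' w
    apply hinjOK
    rw [map_add, hG, hG, hG, Submodule.coe_add, map_add, LinearMap.add_apply]
  have hsmul1 : ∀ (c : O) (v w : ↥T), G (c • v) w = c • G v w := by
    intro c v w
    apply hinjOK
    rw [hG]
    have h1 : ((c • v : ↥T) : V) = algebraMap O K c • (v : V) := by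
      rw [Submodule.coe_smul, algebraMap_smul]
    rw [h1, map_smul, LinearMap.smul_apply, smul_eq_mul, smul_eq_mul, map_mul, hG]
  have hadd2 : ∀ (v w w' : ↥T), G v (w + w') = G v w + G v w' := by
    intro v w w'
    apply hinjOK
    rw [map_add, hG, hG, hG, Submodule.coe_add, map_add]
  have hsmul2 : ∀ (c : O) (v w : ↥T), G v (c • w) = c • G v w := by
    intro c v w
    apply hinjOK
    rw [hG]
    have h1 : ((c • w : ↥T) : V) = algebraMap O K c • (w : V) := by
      rw [Submodule.coe_smul, algebraMap_smul]
    rw [h1, map_smul, smul_eq_mul, smul_eq_mul, map_mul, hG]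
  set g : ↥T →ₗ[O] ↥T →ₗ[O] O := LinearMap.mk₂ O G hadd1 hsmul1 hadd2 hsmul2 with hgdef
  have hgG : ∀ v w, g v w = G v w := fun v w => rfl
  have hcompat : ∀ v w : ↥T, algebraMap O K (g v w) = f (v : V) (w : V) := fun v w => hG v w
  set m : Ideal O := IsLocalRing.maximalIdeal O with hmdef
  -- |N| is a unit of O
  have hcardunit : IsUnit ((Nat.card N : O)) := by
    by_contra hnu
    have h1 : ((Nat.card N : O)) ∈ m := (IsLocalRing.mem_maximalIdeal _).mpr hnu
    have hb : ((1:ℕ) : ℤ) = (Nat.card N) * Nat.gcdA (Nat.card N) ℓ +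
        ℓ * Nat.gcdB (Nat.card N) ℓ := by
      have h2 := Nat.gcd_eq_gcd_ab (Nat.card N) ℓ
      rwa [hN] at h2
    have h3 := congrArg (fun z : ℤ => (z : O)) hb
    push_cast at h3
    have h4 : (1 : O) ∈ m := by
      rw [h3]
      exact Ideal.add_mem _ (Ideal.mul_mem_right _ _ h1) (Ideal.mul_mem_right _ _ hres)
    exact (Ideal.ne_top_iff_one _).mp (IsLocalRing.maximalIdeal.isMaximal O).ne_top h4
  -- equivariance relations for g
  have hrho_cancel : ∀ (n : N) (x : V), ρ n (ρ n⁻¹ x) = x := by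
    intro n x
    rw [← Module.End.mul_apply, ← map_mul, mul_inv_cancel, map_one, Module.End.one_apply]
  have hrho_cancel' : ∀ (n : N) (x : V), ρ n⁻¹ (ρ n x) = x := by
    intro n x
    rw [← Module.End.mul_apply, ← map_mul, inv_mul_cancel, map_one, Module.End.one_apply]
  have hginv1 : ∀ (n : N) (t w : ↥T),
      g (rhoT ρ T hTstable n t) w = g t (rhoT ρ T hTstable n⁻¹ w) := by
    intro n t w
    apply hinjOK
    rw [hcompat, hcompat, rhoT_coe, rhoT_coe]
    conv_lhs => rw [show (w : V) = ρ n (ρ n⁻¹ (w : V)) from (hrho_cancel n _).symm]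
    exact hinv n (t : V) (ρ n⁻¹ (w : V))
  have hginv2 : ∀ (n : N) (v t : ↥T),
      g v (rhoT ρ T hTstable n t) = g (rhoT ρ T hTstable n⁻¹ v) t := by
    intro n v t
    apply hinjOK
    rw [hcompat, hcompat, rhoT_coe, rhoT_coe]
    conv_lhs => rw [show (v : V) = ρ n (ρ n⁻¹ (v : V)) from (hrho_cancel n _).symm]
    have := hinv n (ρ n⁻¹ (v : V)) (t : V)
    rw [← this, hrho_cancel n]
  -- the left kernel submodule mod m
  set L₁ : Submodule O ↥T :=
    { carrier := {t : ↥T | ∀ w : ↥T, g t w ∈ m}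
      add_mem' := fun {x y} hx hy w => by
        rw [map_add, LinearMap.add_apply]; exact m.add_mem (hx w) (hy w)
      zero_mem' := fun w => by
        rw [map_zero, LinearMap.zero_apply]; exact m.zero_mem
      smul_mem' := fun c x hx w => by
        rw [map_smul, LinearMap.smul_apply, smul_eq_mul]
        exact Ideal.mul_mem_left _ _ (hx w) } with hL₁def
  have hmemL₁ : ∀ t : ↥T, t ∈ L₁ ↔ ∀ w, g t w ∈ m := fun t => Iff.rfl
  set L₂ : Submodule O ↥T :=
    { carrier := {t : ↥T | ∀ v : ↥T, g v t ∈ m}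
      add_mem' := fun {x y} hx hy v => by
        rw [map_add]; exact m.add_mem (hx v) (hy v)
      zero_mem' := fun v => by
        rw [map_zero]; exact m.zero_mem
      smul_mem' := fun c x hx v => by
        rw [map_smul, smul_eq_mul]
        exact Ideal.mul_mem_left _ _ (hx v) } with hL₂def
  have hmemL₂ : ∀ t : ↥T, t ∈ L₂ ↔ ∀ v, g v t ∈ m := fun t => Iff.rfl
  -- m•⊤ is contained in both
  have hmL₁ : IsLocalRing.maximalIdeal O • ⊤ ≤ L₁ := by
    rw [Submodule.smul_le]
    intro r hr x _
    intro w
    rw [map_smul, LinearMap.smul_apply, smul_eq_mul]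
    exact Ideal.mul_mem_right _ _ hr
  have hmL₂ : IsLocalRing.maximalIdeal O • ⊤ ≤ L₂ := by
    rw [Submodule.smul_le]
    intro r hr x _
    intro v
    rw [map_smul, smul_eq_mul]
    exact Ideal.mul_mem_right _ _ hr
  -- stability
  have hstab₁ : ∀ (n : N) (t : ↥T), t ∈ L₁ → rhoT ρ T hTstable n t ∈ L₁ := by
    intro n t ht w
    rw [hginv1]
    exact ht _
  have hstab₂ : ∀ (n : N) (t : ↥T), t ∈ L₂ → rhoT ρ T hTstable n t ∈ L₂ := by
    intro n t ht v
    rw [hginv2]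
    exact ht _
  -- not all values in m
  have hone : (1 : K) ∈ (1 : Submodule O K) := by
    rw [Submodule.one_eq_range]
    exact ⟨1, by rw [Algebra.linearMap_apply, map_one]⟩
  have hnetop : ∀ L : Submodule O ↥T, (∀ t ∈ L, ∀ w, g t w ∈ m) →
      (∀ t w, g t w ∈ m → g w t ∈ m → True) → L = ⊤ → False := by
    intro L hL _ htop
    have hallm : {x : K | ∃ v ∈ T, ∃ w ∈ T, f v w = x} ⊆
        ↑(Submodule.map (Algebra.linearMap O K) (m : Submodule O O)) := by
      rintro s ⟨v, hv, w, hw, rfl⟩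
      have h1 : g ⟨v, hv⟩ ⟨w, hw⟩ ∈ m := by
        apply hL
        rw [htop]; trivial
      exact ⟨g ⟨v, hv⟩ ⟨w, hw⟩, h1, hcompat _ _⟩
    have hle : Submodule.span O {x : K | ∃ v ∈ T, ∃ w ∈ T, f v w = x} ≤
        Submodule.map (Algebra.linearMap O K) (m : Submodule O O) :=
      Submodule.span_le.mpr hallm
    rw [hfTT] at hle
    obtain ⟨c, hcm, hc1⟩ := hle hone
    have hc : c = 1 := by
      apply hinjOK
      rw [map_one]
      exact hc1
    rw [hc] at hcm
    exact (Ideal.ne_top_iff_one _).mp (IsLocalRing.maximalIdeal.isMaximal O).ne_top hcm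
  have hne1 : L₁ ≠ ⊤ := fun h => hnetop L₁ (fun t ht w => ht w) (fun _ _ _ _ => trivial) h
  have hne2 : L₂ ≠ ⊤ := by
    intro h
    apply hnetop L₂ ?_ (fun _ _ _ _ => trivial) ?_
    · intro t ht w
      have hwL : w ∈ L₂ := by rw [h]; trivial
      exact hwL t
    · exact h
  -- key lattice theorem
  have hL₁eq : L₁ = IsLocalRing.maximalIdeal O • ⊤ :=
    (keyLattice ρ hsimple hcardunit T hTfg hTspan hTstable L₁ hmL₁ hstab₁).resolve_right hne1
  have hL₂eq : L₂ = IsLocalRing.maximalIdeal O • ⊤ :=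
    (keyLattice ρ hsimple hcardunit T hTfg hTspan hTstable L₂ hmL₂ hstab₂).resolve_right hne2
  have hsmall1 : ∀ v : ↥T, (∀ w, g v w ∈ IsLocalRing.maximalIdeal O) →
      v ∈ IsLocalRing.maximalIdeal O • (⊤ : Submodule O ↥T) := by
    intro v hv
    have : v ∈ L₁ := hv
    rwa [hL₁eq] at this
  have hsmall2 : ∀ w : ↥T, (∀ v, g v w ∈ IsLocalRing.maximalIdeal O) →
      w ∈ IsLocalRing.maximalIdeal O • (⊤ : Submodule O ↥T) := by
    intro w hw
    have : w ∈ L₂ := hw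
    rwa [hL₂eq] at this
  -- injectivity
  have hspanT : ∀ x : V, x ∈ Submodule.span K (T : Set V) := by
    intro x; rw [hTspan]; trivial
  have hginj : Function.Injective ⇑g := by
    refine (injective_iff_map_eq_zero g).mpr ?_
    intro v hv
    have hfv : ∀ x ∈ Submodule.span K (T : Set V), f (v : V) x = 0 := by
      intro x hx
      induction hx using Submodule.span_induction with
      | mem y hy =>
        have h1 := hcompat v ⟨y, hy⟩
        rw [hv, LinearMap.zero_apply, map_zero] at h1
        exact h1.symm
      | zero => rw [map_zero]
      | add y z _ _ hy hz => rw [map_add, hy, hz, add_zero]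
      | smul c y _ hy => rw [map_smul, hy, smul_zero]
    have h2 : (v : V) = 0 := hnondeg₁ _ (fun x => hfv x (hspanT x))
    exact Subtype.ext h2
  have hflipinj : Function.Injective ⇑g.flip := by
    refine (injective_iff_map_eq_zero g.flip).mpr ?_
    intro w hw
    have hfw : ∀ x ∈ Submodule.span K (T : Set V), f x (w : V) = 0 := by
      intro x hx
      induction hx using Submodule.span_induction with
      | mem y hy =>
        have h1 := hcompat ⟨y, hy⟩ w
        have h2 : g ⟨y, hy⟩ w = g.flip w ⟨y, hy⟩ := rfl
        rw [h2, hw, LinearMap.zero_apply, map_zero] at h1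
        exact h1.symm
      | zero => rw [map_zero, LinearMap.zero_apply]
      | add y z _ _ hy hz => rw [map_add, LinearMap.add_apply, hy, hz, add_zero]
      | smul c y _ hy => rw [map_smul, LinearMap.smul_apply, hy, smul_zero]
    have h2 : (w : V) = 0 := hnondeg₂ _ (fun x => hfw x (hspanT x))
    exact Subtype.ext h2
  -- surjectivity
  have hgsurj : Function.Surjective ⇑g := aux_surj g hginj hsmall1
  have hflipsurj : Function.Surjective ⇑g.flip := by
    refine aux_surj g.flip hflipinj ?_
    intro w hw
    exact hsmall2 w (fun v => hw v)
  refine ⟨g, hcompat, ⟨hginj, hgsurj⟩, ⟨hflipinj, hflipsurj⟩, ?_, ?_⟩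
  · intro v hv
    have h1 : v ∈ IsLocalRing.maximalIdeal O • (⊤ : Submodule O ↥T) := hsmall1 v hv
    have h2 := Submodule.mem_map_of_mem (f := T.subtype) h1
    rwa [Submodule.map_smul'', Submodule.map_subtype_top] at h2
  · intro w hw
    have h1 : w ∈ IsLocalRing.maximalIdeal O • (⊤ : Submodule O ↥T) := hsmall2 w hw
    have h2 := Submodule.mem_map_of_mem (f := T.subtype) h1
    rwa [Submodule.map_smul'', Submodule.map_subtype_top] at h2
end

section
/- Let ℓ be a prime, K a complete discrete valuation field of characteristic zero and residue characteristic ℓ with absolute ramification index e = v(ℓ). Suppose A ∈ GL_m(K) is not a scalar matrix but A^ℓ is a scalar matrix. Then m ≥ (ℓ − 1)/e. -/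
/-!
If `c = A^ℓ` is not an `ℓ`-th power in `K`, then `X^ℓ - c` is irreducible, hence it is the
minimal polynomial of `A`, and `ℓ ≤ m`. Otherwise `A` rescales to a non-scalar `B` with `B^ℓ = 1`,
whose minimal polynomial shares an irreducible factor `q` with `Φ_ℓ`, so `deg q ≤ m`.

All irreducible factors of `Φ_ℓ` over `K` have the degree `[K(ζ_ℓ) : K] = deg q`, so there are
`r = (ℓ - 1) / deg q` of them. They lift to monic factors over the integrally closed ring `O`, and
since `Φ_ℓ ≡ (X - 1)^(ℓ-1)` modulo the maximal ideal `𝔪`, each of them takes a value in `𝔪` at `1`.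
Hence `ℓ = Φ_ℓ(1) ∈ 𝔪^r`, that is `r ≤ e`.
-/

open Polynomial UniqueFactorizationMonoid IntermediateField IsLocalRing

namespace Polynomial

variable {K : Type*} [Field K]

theorem natDegree_eq_finrank_adjoin_of_irreducible {L : Type*} [Field L] [Algebra K L]
    {p : K[X]} (hp : Irreducible p) {x : L} (hx : aeval x p = 0) :
    p.natDegree = Module.finrank K K⟮x⟯ := by
  have hint : IsIntegral K x := (show IsAlgebraic K x from ⟨p, hp.ne_zero, hx⟩).isIntegral
  rw [adjoin.finrank hint, ← minpoly.eq_of_irreducible hp hx,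
    natDegree_mul_C (inv_ne_zero (leadingCoeff_ne_zero.2 hp.ne_zero))]

theorem natDegree_eq_of_irreducible_dvd_cyclotomic {n : ℕ} [NeZero (n : K)] {p q : K[X]}
    (hp : Irreducible p) (hpn : p ∣ cyclotomic n K) (hq : Irreducible q)
    (hqn : q ∣ cyclotomic n K) : p.natDegree = q.natDegree := by
  let L := AlgebraicClosure K
  have : NeZero n := NeZero.of_neZero_natCast K
  have : NeZero (n : L) := NeZero.nat_of_injective (algebraMap K L).injective
  have hroot : ∀ f : K[X], Irreducible f → f ∣ cyclotomic n K →
      ∃ ζ : L, IsPrimitiveRoot ζ n ∧ f.natDegree = Module.finrank K K⟮ζ⟯ := by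
    intro f hf hfn
    obtain ⟨ζ, hζ⟩ := IsAlgClosed.exists_aeval_eq_zero L f (degree_pos_of_irreducible hf).ne'
    refine ⟨ζ, ?_, natDegree_eq_finrank_adjoin_of_irreducible hf hζ⟩
    rw [← isRoot_cyclotomic_iff, ← map_cyclotomic n (algebraMap K L), IsRoot,
      eval_map_algebraMap]
    exact aeval_eq_zero_of_dvd_aeval_eq_zero hfn hζ
  have hle : ∀ ζ η : L, IsPrimitiveRoot ζ n → IsPrimitiveRoot η n → K⟮η⟯ ≤ K⟮ζ⟯ := by
    intro ζ η hζ hη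
    obtain ⟨i, -, rfl⟩ := hζ.eq_pow_of_pow_eq_one hη.pow_eq_one
    exact adjoin_simple_le_iff.2 (pow_mem (mem_adjoin_simple_self K ζ) i)
  obtain ⟨ζ, hζ, hpζ⟩ := hroot p hp hpn
  obtain ⟨η, hη, hqη⟩ := hroot q hq hqn
  rw [hpζ, hqη, le_antisymm (hle η ζ hη hζ) (hle ζ η hζ hη)]

theorem card_normalizedFactors_cyclotomic_mul_natDegree [DecidableEq K] {n : ℕ} [NeZero (n : K)]
    {q : K[X]} (hq : Irreducible q) (hqn : q ∣ cyclotomic n K) :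
    Multiset.card (normalizedFactors (cyclotomic n K)) * q.natDegree = n.totient := by
  set S := normalizedFactors (cyclotomic n K)
  have hS : S.prod = cyclotomic n K := by
    rw [prod_normalizedFactors_eq (cyclotomic_ne_zero n K), (cyclotomic.monic n K).normalize_eq_self]
  have hdeg : ∀ s ∈ S, s.natDegree = q.natDegree := fun s hs =>
    natDegree_eq_of_irreducible_dvd_cyclotomic (irreducible_of_normalized_factor s hs)
      (dvd_of_mem_normalizedFactors hs) hq hqn
  rw [← natDegree_cyclotomic n K, ← hS, natDegree_multiset_prod _ (zero_notMem_normalizedFactors _),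
    Multiset.map_congr rfl hdeg, Multiset.map_const', Multiset.sum_replicate, smul_eq_mul]

end Polynomial

theorem Ideal.multiset_prod_map_mem_pow_card {R ι : Type*} [CommSemiring R] {I : Ideal R}
    {s : Multiset ι} {f : ι → R} (hf : ∀ i ∈ s, f i ∈ I) :
    (s.map f).prod ∈ I ^ Multiset.card s := by
  induction s using Multiset.induction_on with
  | empty => simp
  | cons a s ih =>
    rw [Multiset.map_cons, Multiset.prod_cons, Multiset.card_cons, pow_succ']
    exact Ideal.mul_mem_mul (hf a (Multiset.mem_cons_self a s))
      (ih fun i hi => hf i (Multiset.mem_cons_of_mem hi))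

section LocalRing

variable {O : Type*} [CommRing O] [IsLocalRing O] {ℓ : ℕ}

theorem eval_one_mem_maximalIdeal_of_dvd_cyclotomic (hℓ : ℓ.Prime)
    (hres : (ℓ : O) ∈ maximalIdeal O) {Q : O[X]} (hQ : Q.Monic) (hdeg : 0 < Q.natDegree)
    (hQℓ : Q ∣ cyclotomic ℓ O) : Q.eval 1 ∈ maximalIdeal O := by
  have := Fact.mk hℓ
  have : CharP (ResidueField O) ℓ := (CharP.charP_iff_prime_eq_zero hℓ).2 <| by
    rw [← map_natCast (residue O), residue_eq_zero_iff]; exact hres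
  have hcyc : cyclotomic ℓ (ResidueField O) = (X - C 1) ^ (ℓ - 1) := by
    simpa using cyclotomic_mul_prime_eq_pow_of_not_dvd (ResidueField O) (n := 1) hℓ.not_dvd_one
  have hdvd : Q.map (residue O) ∣ (X - C 1) ^ (ℓ - 1) := by
    simpa [hcyc] using map_dvd (mapRingHom (residue O)) hQℓ
  obtain ⟨i, -, hi⟩ := (dvd_prime_pow (prime_X_sub_C 1) _).1 hdvd
  have hi0 : i ≠ 0 := by
    rintro rfl
    have := natDegree_eq_zero_of_isUnit (associated_one_iff_isUnit.1 hi)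
    rw [hQ.natDegree_map] at this
    omega
  rw [← residue_eq_zero_iff, ← eval_one_map, ← IsRoot, ← dvd_iff_isRoot]
  exact (dvd_pow_self _ hi0).trans hi.symm.dvd

variable [IsIntegrallyClosed O] {K : Type*} [Field K] [Algebra O K]
  [IsFractionRing O K]

theorem natCast_mem_maximalIdeal_pow_card_normalizedFactors_cyclotomic [DecidableEq K]
    (hℓ : ℓ.Prime) (hres : (ℓ : O) ∈ maximalIdeal O) :
    (ℓ : O) ∈ maximalIdeal O ^ Multiset.card (normalizedFactors (cyclotomic ℓ K)) := by
  have := Fact.mk hℓ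
  set S := normalizedFactors (cyclotomic ℓ K)
  have hinj := IsFractionRing.injective O K
  have hlift : ∀ s ∈ S, ∃ Q : O[X], Q.map (algebraMap O K) = s := by
    intro s hs
    have hsm : s.Monic := ((Polynomial.mem_normalizedFactors_iff (cyclotomic_ne_zero ℓ K)).1 hs).2.1
    obtain ⟨Q, hQ⟩ := IsIntegrallyClosed.eq_map_mul_C_of_dvd K (g := s) (cyclotomic.monic ℓ O)
      (by rw [map_cyclotomic]; exact dvd_of_mem_normalizedFactors hs)
    exact ⟨Q, by rwa [hsm.leadingCoeff, C_1, mul_one] at hQ⟩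
  choose! lift hlift using hlift
  have hprod : (S.map lift).prod = cyclotomic ℓ O := by
    apply map_injective _ hinj
    rw [Polynomial.map_multiset_prod, Multiset.map_map, Multiset.map_congr rfl (f := map (algebraMap O K) ∘ lift) (g := id) hlift,
      Multiset.map_id, map_cyclotomic, prod_normalizedFactors_eq (cyclotomic_ne_zero ℓ K),
      (cyclotomic.monic ℓ K).normalize_eq_self]
  rw [← eval_one_cyclotomic_prime (R := O), ← hprod, eval_multiset_prod, Multiset.map_map]
  refine Ideal.multiset_prod_map_mem_pow_card fun s hs => ?_
  have hs' := (Polynomial.mem_normalizedFactors_iff (cyclotomic_ne_zero ℓ K)).1 hs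
  have hdeg : (lift s).natDegree = s.natDegree := by
    rw [← natDegree_map_eq_of_injective hinj, hlift s hs]
  exact eval_one_mem_maximalIdeal_of_dvd_cyclotomic hℓ hres
    (monic_of_injective hinj ((hlift s hs).symm ▸ hs'.2.1))
    (hdeg ▸ hs'.1.natDegree_pos) (hprod ▸ Multiset.dvd_prod (Multiset.mem_map_of_mem lift hs))

theorem sub_one_le_mul_natDegree_of_irreducible_dvd_cyclotomic {e : ℕ} (hℓ : ℓ.Prime)
    (hres : (ℓ : O) ∈ maximalIdeal O) (he : (ℓ : O) ∉ maximalIdeal O ^ (e + 1))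
    {q : K[X]} (hq : Irreducible q) (hqℓ : q ∣ cyclotomic ℓ K) :
    ℓ - 1 ≤ e * q.natDegree := by
  classical
  have : NeZero (ℓ : K) := ⟨by
    rw [← map_natCast (algebraMap O K), (IsFractionRing.injective O K).ne_iff' (map_zero _)]
    rintro h
    exact he (h ▸ zero_mem _)⟩
  have hcard : Multiset.card (normalizedFactors (cyclotomic ℓ K)) ≤ e := by
    by_contra! h
    exact he (Ideal.pow_le_pow_right h
      (natCast_mem_maximalIdeal_pow_card_normalizedFactors_cyclotomic hℓ hres))
  rw [← Nat.totient_prime hℓ, ← card_normalizedFactors_cyclotomic_mul_natDegree hq hqℓ]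
  exact Nat.mul_le_mul_right _ hcard

end LocalRing

theorem exists_irreducible_dvd_cyclotomic_dvd_minpoly_of_pow_eq_one {K A : Type*} [Field K]
    [Ring A] [Algebra K A] {ℓ : ℕ} (hℓ : ℓ.Prime) {x : A} (hx : x ^ ℓ = 1)
    (hxK : x ∉ Set.range (algebraMap K A)) :
    ∃ q : K[X], Irreducible q ∧ q ∣ cyclotomic ℓ K ∧ q ∣ minpoly K x := by
  have := Fact.mk hℓ
  have : Nontrivial A := not_subsingleton_iff_nontrivial.1 fun _ => hxK ⟨0, Subsingleton.elim _ _⟩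
  have hint : IsIntegral K x := IsIntegral.of_pow hℓ.pos (hx ▸ isIntegral_one)
  by_contra! h
  have hcop : IsCoprime (minpoly K x) (cyclotomic ℓ K) :=
    isCoprime_of_irreducible_dvd (fun h0 => minpoly.ne_zero hint h0.1)
      fun q hq hqx hqℓ => h q hq hqℓ hqx
  have hdvd : minpoly K x ∣ X - C 1 := by
    refine hcop.dvd_of_dvd_mul_left (minpoly.dvd K x ?_)
    simp [cyclotomic_prime_mul_X_sub_one, hx]
  have := natDegree_le_of_dvd hdvd (X_sub_C_ne_zero 1)
  rw [natDegree_X_sub_C] at this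
  have := (minpoly.two_le_natDegree_iff hint).2 hxK
  omega

namespace Matrix

variable {n K : Type*} [Fintype n] [DecidableEq n] [Field K]

theorem natDegree_le_of_dvd_minpoly {M : Matrix n n K} {p : K[X]} (hp : p ∣ minpoly K M) :
    p.natDegree ≤ Fintype.card n := by
  rw [← charpoly_natDegree_eq_dim M]
  exact natDegree_le_of_dvd (hp.trans (minpoly_dvd_charpoly M)) (charpoly_monic M).ne_zero

theorem prime_le_card_or_exists_irreducible_dvd_cyclotomic {ℓ : ℕ} (hℓ : ℓ.Prime)
    {M : Matrix n n K} {c : K} (hc : c ≠ 0) (hM : M ^ ℓ = c • 1)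
    (hMK : ¬ ∃ a : K, M = a • 1) :
    ℓ ≤ Fintype.card n ∨
      ∃ q : K[X], Irreducible q ∧ q ∣ cyclotomic ℓ K ∧ q.natDegree ≤ Fintype.card n := by
  by_cases hroot : ∃ γ : K, γ ^ ℓ = c
  · obtain ⟨γ, rfl⟩ := hroot
    have hγ : γ ≠ 0 := by rintro rfl; exact hc (zero_pow hℓ.ne_zero)
    have hpow : (γ⁻¹ • M) ^ ℓ = 1 := by
      rw [_root_.smul_pow, hM, smul_smul, inv_pow, inv_mul_cancel₀ (pow_ne_zero _ hγ), one_smul]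
    have hK : γ⁻¹ • M ∉ Set.range (algebraMap K (Matrix n n K)) := by
      rintro ⟨a, ha⟩
      refine hMK ⟨γ * a, ?_⟩
      rw [Algebra.algebraMap_eq_smul_one, eq_inv_smul_iff₀ hγ] at ha
      rw [← ha, smul_smul]
    obtain ⟨q, hq, hqℓ, hqM⟩ := exists_irreducible_dvd_cyclotomic_dvd_minpoly_of_pow_eq_one hℓ hpow hK
    exact Or.inr ⟨q, hq, hqℓ, natDegree_le_of_dvd_minpoly hqM⟩
  · push Not at hroot
    have : Nontrivial (Matrix n n K) :=
      not_subsingleton_iff_nontrivial.1 fun _ => hMK ⟨0, Subsingleton.elim _ _⟩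
    have hMdvd : minpoly K M ∣ X ^ ℓ - C c :=
      minpoly.dvd K M (by simp [hM, Algebra.algebraMap_eq_smul_one])
    have hdvd : X ^ ℓ - C c ∣ minpoly K M :=
      (((X_pow_sub_C_irreducible_of_prime hℓ hroot).dvd_iff.1 hMdvd).resolve_left
        (minpoly.not_isUnit K M)).dvd
    simpa [natDegree_X_pow_sub_C] using Or.inl (natDegree_le_of_dvd_minpoly hdvd)

end Matrix

theorem stmt_8_general (ℓ e m : ℕ) (hℓ : ℓ.Prime)
    (O : Type) [CommRing O] [IsDomain O] [IsDiscreteValuationRing O]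
    (K : Type) [Field K] [Algebra O K] [IsFractionRing O K]
    (hres : (ℓ : O) ∈ IsLocalRing.maximalIdeal O)
    (he : (ℓ : O) ∈ (IsLocalRing.maximalIdeal O) ^ e ∧
          (ℓ : O) ∉ (IsLocalRing.maximalIdeal O) ^ (e + 1))
    (A : GL (Fin m) K)
    (hnotscalar : ¬ ∃ c : K, (A : Matrix (Fin m) (Fin m) K) = c • (1 : Matrix (Fin m) (Fin m) K))
    (hscalar : ∃ c : K, ((A ^ ℓ : GL (Fin m) K) : Matrix (Fin m) (Fin m) K)
        = c • (1 : Matrix (Fin m) (Fin m) K)) :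
    ℓ - 1 ≤ m * e := by
  obtain ⟨c, hc⟩ := hscalar
  rw [Units.val_pow_eq_pow_val] at hc
  have hc0 : c ≠ 0 := by
    rintro rfl
    have : Subsingleton (Matrix (Fin m) (Fin m) K) :=
      subsingleton_of_zero_eq_one (isUnit_zero_iff.1 (by simpa [hc] using (A ^ ℓ).isUnit))
    exact hnotscalar ⟨0, Subsingleton.elim _ _⟩
  have he0 : e ≠ 0 := by rintro rfl; exact he.2 (by simpa using hres)
  rcases Matrix.prime_le_card_or_exists_irreducible_dvd_cyclotomic hℓ hc0 hc hnotscalar with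
    hℓm | ⟨q, hq, hqℓ, hqm⟩
  · rw [Fintype.card_fin] at hℓm
    calc ℓ - 1 ≤ m * 1 := by omega
      _ ≤ m * e := Nat.mul_le_mul_left m (Nat.one_le_iff_ne_zero.2 he0)
  · rw [Fintype.card_fin] at hqm
    calc ℓ - 1 ≤ e * q.natDegree :=
          sub_one_le_mul_natDegree_of_irreducible_dvd_cyclotomic hℓ hres he.2 hq hqℓ
      _ ≤ e * m := Nat.mul_le_mul_left e hqm
      _ = m * e := mul_comm e m

/-- Lemma 3.10: let `K` be a complete discrete valuation field of characteristic zero and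
residue characteristic `ℓ`, with absolute ramification index `e`.  If `A ∈ GL_m(K)` is not
a scalar matrix but `A^ℓ` is a scalar matrix, then `m ≥ (ℓ - 1)/e`, i.e. `ℓ - 1 ≤ m·e`. -/
theorem stmt_8 (ℓ e m : ℕ) (hℓ : ℓ.Prime)
    (O : Type) [CommRing O] [IsDomain O] [IsDiscreteValuationRing O]
    [IsAdicComplete (IsLocalRing.maximalIdeal O) O]
    (K : Type) [Field K] [Algebra O K] [IsFractionRing O K] [CharZero K]
    (hres : (ℓ : O) ∈ IsLocalRing.maximalIdeal O)
    (he : (ℓ : O) ∈ (IsLocalRing.maximalIdeal O) ^ e ∧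
          (ℓ : O) ∉ (IsLocalRing.maximalIdeal O) ^ (e + 1))
    (A : GL (Fin m) K)
    (hnotscalar : ¬ ∃ c : K, (A : Matrix (Fin m) (Fin m) K) = c • (1 : Matrix (Fin m) (Fin m) K))
    (hscalar : ∃ c : K, ((A ^ ℓ : GL (Fin m) K) : Matrix (Fin m) (Fin m) K)
        = c • (1 : Matrix (Fin m) (Fin m) K)) :
    ℓ - 1 ≤ m * e :=
  stmt_8_general ℓ e m hℓ O K hres he A hnotscalar hscalar
end

section
/- Let ℓ be an odd prime, K an unramified extension of Q_ℓ, M = K(ζ_ℓ), M⁺ = K(ζ_ℓ + ζ_ℓ^{-1}), η = ζ_ℓ − ζ_ℓ^{-1}. Suppose δ ∈ M⁺ satisfies tr_{M/K}(δ·O_M) ⊆ O_K. Then tr_{M/K}(δ·η^{ℓ−2}·O_M) ⊆ ℓ·O_K. -/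
/-!
Let `σ` be the automorphism `ζ ↦ ζ⁻¹` of `M/K`; it fixes `δ` and negates `η`. Since `ℓ` is prime
in `O_K`, the polynomial `Φ_ℓ(X + 1)` is Eisenstein over `O_K`, so `O_M = O_K[ζ]` and therefore
`x ≡ σ x (mod η)` for every `x ∈ O_M`. As `w = δ η^(ℓ-2)` satisfies `σ w = -w`, this gives
`2 tr(w x) = tr(w (x - σ x)) ∈ tr(δ η^(ℓ-1) O_M) ⊆ ℓ tr(δ O_M) ⊆ ℓ O_K`, because `ℓ` divides
`η^(ℓ-1)` in `O_M`. Since `ℓ` is odd, `tr(w x) ∈ ℓ O_K`.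
-/

open Polynomial Algebra

theorem exists_mem_eq_natCast_mul_of_two_mul_eq {A S : Type*} [CommRing A] [SetLike S A]
    [SubringClass S A] {s : S} {n : ℕ} (hn : Odd n) {a b : A} (ha : a ∈ s) (hb : b ∈ s)
    (h : 2 * a = n * b) : ∃ y ∈ s, a = n * y := by
  obtain ⟨k, m, hkm⟩ : IsCoprime (2 : ℤ) n :=
    mod_cast Nat.isCoprime_iff_coprime.2 (Nat.coprime_two_left.2 hn)
  refine ⟨k • b + m • a, add_mem (zsmul_mem hb k) (zsmul_mem ha m), ?_⟩
  have : (k : A) * 2 + m * n = 1 := by exact_mod_cast congrArg (Int.cast : ℤ → A) hkm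
  simp only [zsmul_eq_mul]
  linear_combination (k : A) * h - a * this

theorem Algebra.trace_mul_sub_algEquiv {K L : Type*} [Field K] [Field L] [Algebra K L]
    (σ : L ≃ₐ[K] L) {w : L} (hw : σ w = -w) (x : L) :
    trace K L (w * (x - σ x)) = 2 * trace K L (w * x) := by
  have h := trace_eq_of_algEquiv σ (w * x)
  rw [map_mul, hw, neg_mul, map_neg] at h
  rw [mul_sub, map_sub, ← h]
  ring

theorem Algebra.exists_mem_adjoin_sub_map_eq_mul {R A : Type*} [CommRing R] [CommRing A]
    [Algebra R A] (f : A →ₐ[R] A) {a x : A} (hfa : f a ∈ adjoin R {a}) (hx : x ∈ adjoin R {a}) :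
    ∃ c ∈ adjoin R {a}, x - f x = (a - f a) * c := by
  obtain ⟨P, rfl⟩ := (adjoin_singleton_eq_range_aeval R a ▸ hx : _ ∈ (aeval a).range)
  obtain ⟨c, hc⟩ := sub_dvd_eval_sub (⟨a, self_mem_adjoin_singleton R a⟩ : adjoin R {a})
    ⟨f a, hfa⟩ (P.map (algebraMap R _))
  refine ⟨c, c.2, ?_⟩
  simpa [eval_map_algebraMap, ← aeval_algHom_apply, aeval_algHom_apply]
    using congrArg Subtype.val hc

theorem IsPrimitiveRoot.isCyclotomicExtension_of_adjoin_eq_top {K L : Type*} [CommRing K]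
    [CommRing L] [Algebra K L] {n : ℕ} [NeZero n] {ζ : L} (hζ : IsPrimitiveRoot ζ n)
    (h : adjoin K {ζ} = ⊤) : IsCyclotomicExtension {n} K L :=
  (hζ.adjoin_isCyclotomicExtension K).equiv _ _ _
    ((Subalgebra.equivOfEq _ _ h).trans Subalgebra.topEquiv)

section Cyclotomic

variable {p : ℕ} [hp : Fact p.Prime]

theorem cyclotomic_comp_X_add_one_isEisensteinAt_of_prime {R : Type*} [CommRing R] [IsDomain R]
    (hpR : Prime (p : R)) :
    ((cyclotomic p R).comp (X + 1)).IsEisensteinAt (Submodule.span R {(p : R)}) := by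
  have hmap : ((cyclotomic p ℤ).comp (X + 1)).map (Int.castRingHom R) =
      (cyclotomic p R).comp (X + 1) := by
    simp [Polynomial.map_comp, map_cyclotomic]
  have hmonic : ((cyclotomic p R).comp (X + 1)).Monic := by
    rw [← C_1]; exact (cyclotomic.monic p R).comp_X_add_C 1
  refine hmonic.isEisensteinAt_of_mem_of_notMem
    ((Ideal.span_singleton_prime hpR.ne_zero).2 hpR).ne_top (fun hn ↦ ?_) ?_
  · have := ((cyclotomic_comp_X_add_one_isEisensteinAt p).isWeaklyEisensteinAt.map
      (Int.castRingHom R)).mem (hmap ▸ hn)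
    simpa [hmap, Ideal.map_span] using this
  · rw [coeff_zero_eq_eval_zero, eval_comp, eval_add, eval_X, eval_one, zero_add,
      eval_one_cyclotomic_prime, Ideal.submodule_span_eq, Ideal.span_singleton_pow,
      Ideal.mem_span_singleton, pow_two]
    exact fun h ↦ hpR.not_isUnit (isUnit_of_dvd_one
      ((mul_dvd_mul_iff_left hpR.ne_zero).1 (by simpa using h)))

theorem IsPrimitiveRoot.associated_sub_one_pow_prime {A : Type*} [CommRing A] [IsDomain A]
    {ζ : A} (hζ : IsPrimitiveRoot ζ p) : Associated ((ζ - 1) ^ (p - 1)) (p : A) := by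
  rw [← eval_one_cyclotomic_prime (R := A) (p := p), cyclotomic_eq_prod_X_sub_primitiveRoots hζ,
    eval_prod, ← Nat.totient_prime hp.out, ← hζ.card_primitiveRoots, ← Finset.prod_const]
  refine Associated.prod _ _ _ fun η hη ↦ ?_
  obtain ⟨i, -, hi, rfl⟩ := hζ.isPrimitiveRoot_iff.1 (isPrimitiveRoot_of_mem_primitiveRoots hη)
  simpa using (hζ.associated_sub_one_pow_sub_one_of_coprime hi).neg_right

theorem IsPrimitiveRoot.exists_isIntegral_sub_inv_pow_eq_mul (R : Type*) {L : Type*} [CommRing R]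
    [Field L] [Algebra R L] {ζ : L} (hζ : IsPrimitiveRoot ζ p) :
    ∃ u : L, IsIntegral R u ∧ (ζ - ζ⁻¹) ^ (p - 1) = p * u := by
  have hζint : IsIntegral R ζ := (hζ.isIntegral hp.out.pos).tower_top
  have hζinvint : IsIntegral R ζ⁻¹ := (hζ.inv.isIntegral hp.out.pos).tower_top
  obtain ⟨v, hv⟩ := (IsPrimitiveRoot.coe_submonoidClass_iff.1 hζ :
    IsPrimitiveRoot (⟨ζ, hζint⟩ : integralClosure R L) p).associated_sub_one_pow_prime.symm.dvd
  refine ⟨(ζ⁻¹ * (ζ + 1)) ^ (p - 1) * v, ((hζinvint.mul (hζint.add isIntegral_one)).pow _).mul v.2,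
    ?_⟩
  have hζ0 : ζ ≠ 0 := hζ.ne_zero hp.out.ne_zero
  have hfactor : ζ - ζ⁻¹ = ζ⁻¹ * (ζ + 1) * (ζ - 1) := by field_simp; ring
  rw [hfactor, mul_pow, (by simpa using congrArg Subtype.val hv : (ζ - 1) ^ (p - 1) = p * v)]
  ring

section FractionField

variable {R K : Type*} [CommRing R] [IsDomain R] [IsIntegrallyClosed R] [Field K] [Algebra R K]
  [IsFractionRing R K]

theorem Polynomial.cyclotomic.irreducible_of_prime_natCast (hpR : Prime (p : R)) :
    Irreducible (cyclotomic p K) := by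
  have hmonic : ((cyclotomic p R).comp (X + 1)).Monic := by
    rw [← C_1]; exact (cyclotomic.monic p R).comp_X_add_C 1
  have hirr := (cyclotomic_comp_X_add_one_isEisensteinAt_of_prime hpR).irreducible
    ((Ideal.span_singleton_prime hpR.ne_zero).2 hpR) hmonic.isPrimitive (by
      rw [natDegree_comp, ← C_1, natDegree_X_add_C, natDegree_cyclotomic, Nat.totient_prime hp.out]
      have := hp.out.two_le; omega)
  rw [hmonic.irreducible_iff_irreducible_map_fraction_map (K := K)] at hirr
  rw [← MulEquiv.irreducible_iff (taylorEquiv (1 : K))]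
  change Irreducible (taylor 1 _)
  rw [taylor_apply, C_1]
  simpa [Polynomial.map_comp, map_cyclotomic] using hirr

variable {L : Type*} [Field L] [Algebra K L] [IsCyclotomicExtension {p} K L] {ζ : L}

theorem IsPrimitiveRoot.exists_algEquiv_apply_eq_inv (hζ : IsPrimitiveRoot ζ p)
    (hirr : Irreducible (cyclotomic p K)) : ∃ σ : L ≃ₐ[K] L, σ ζ = ζ⁻¹ := by
  have := IsCyclotomicExtension.neZero' p K L
  have hmin : minpoly K (hζ.powerBasis K).gen = minpoly K (hζ.inv.powerBasis K).gen := by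
    simp only [powerBasis_gen, ← hζ.minpoly_eq_cyclotomic_of_irreducible hirr,
      ← hζ.inv.minpoly_eq_cyclotomic_of_irreducible hirr]
  refine ⟨(hζ.powerBasis K).equivOfMinpoly (hζ.inv.powerBasis K) hmin, ?_⟩
  simpa using (hζ.powerBasis K).equivOfMinpoly_gen (hζ.inv.powerBasis K) hmin

variable (K) in
theorem IsPrimitiveRoot.mem_adjoin_of_isIntegral [Algebra R L] [IsScalarTower R K L]
    (hpodd : Odd p) (hpR : Prime (p : R)) (hζ : IsPrimitiveRoot ζ p) {x : L}
    (hx : IsIntegral R x) : x ∈ adjoin R {ζ} := by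
  have hirr : Irreducible (cyclotomic p K) := cyclotomic.irreducible_of_prime_natCast (R := R) hpR
  have hζint : IsIntegral R ζ := (hζ.isIntegral hp.out.pos).tower_top
  have := IsCyclotomicExtension.finiteDimensional {p} K L
  have := IsCyclotomicExtension.isSeparable {p} K L
  have hadj : adjoin R {ζ} = adjoin R {ζ - 1} := le_antisymm
    (adjoin_le (by simpa using add_mem (self_mem_adjoin_singleton R (ζ - 1)) (one_mem _)))
    (adjoin_le (by simpa using sub_mem (self_mem_adjoin_singleton R ζ) (one_mem _)))
  have hp2 : p ≠ 2 := by rintro rfl; exact Nat.not_odd_iff_even.2 even_two hpodd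
  -- `disc(ζ) = ± p^(p-2)` puts `p^(p-2) x` in `R[ζ]`; Eisenstein at `p` then divides out `p`.
  have hdiscr := discr_mul_isIntegral_mem_adjoin K (B := hζ.powerBasis K) (by simpa using hζint) hx
  rw [IsCyclotomicExtension.discr_odd_prime hζ hirr hp2, powerBasis_gen] at hdiscr
  have hsmul : (p : R) ^ (p - 2) • x ∈ adjoin R {ζ} := by
    convert Subalgebra.smul_mem _ hdiscr ((-1 : R) ^ ((p - 1) / 2)) using 1
    simp only [Algebra.smul_def, map_mul, map_pow, map_neg, map_one, map_natCast]
    rw [← mul_assoc, ← mul_assoc, ← mul_pow, neg_one_mul, neg_neg, one_pow, one_mul]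
  have hmin : minpoly R (ζ - 1) = (cyclotomic p R).comp (X + 1) := by
    apply map_injective _ (IsFractionRing.injective R K)
    rw [← minpoly.isIntegrallyClosed_eq_field_fractions' K (hζint.sub isIntegral_one),
      hζ.minpoly_sub_one_eq_cyclotomic_comp hirr]
    simp [Polynomial.map_comp, map_cyclotomic]
  rw [hadj] at hsmul ⊢
  exact mem_adjoin_of_smul_prime_pow_smul_of_minpoly_isEisensteinAt (B := hζ.subOnePowerBasis K)
    hpR (by simpa using hζint.sub isIntegral_one) hx (by simpa using hsmul)
    (by simpa [hmin] using cyclotomic_comp_X_add_one_isEisensteinAt_of_prime hpR)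

theorem IsPrimitiveRoot.exists_isIntegral_sub_map_eq_mul [Algebra R L] [IsScalarTower R K L]
    (hpodd : Odd p) (hpR : Prime (p : R)) (hζ : IsPrimitiveRoot ζ p) (σ : L ≃ₐ[K] L) {x : L}
    (hx : IsIntegral R x) : ∃ c : L, IsIntegral R c ∧ x - σ x = (ζ - σ ζ) * c := by
  obtain ⟨i, -, hi⟩ :=
    hζ.eq_pow_of_pow_eq_one (ξ := σ ζ) (by rw [← map_pow, hζ.pow_eq_one, map_one])
  obtain ⟨c, hc, hxc⟩ := exists_mem_adjoin_sub_map_eq_mul ((σ : L →ₐ[K] L).restrictScalars R)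
    (by simpa [← hi] using pow_mem (self_mem_adjoin_singleton R ζ) i)
    (hζ.mem_adjoin_of_isIntegral K hpodd hpR hx)
  exact ⟨c, adjoin_le_integralClosure (hζ.isIntegral hp.out.pos).tower_top hc, hxc⟩

end FractionField

end Cyclotomic

theorem stmt_9_general (ℓ : ℕ) [Fact ℓ.Prime] (hodd : Odd ℓ)
    (K : Type) [Field K] [Algebra ℚ_[ℓ] K] [FiniteDimensional ℚ_[ℓ] K]
    [Algebra ℤ_[ℓ] K] [IsScalarTower ℤ_[ℓ] ℚ_[ℓ] K]
    (hunram : Prime (algebraMap ℤ_[ℓ] (integralClosure ℤ_[ℓ] K) (ℓ : ℤ_[ℓ])))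
    (M : Type) [Field M] [Algebra K M]
    [Algebra ℤ_[ℓ] M] [IsScalarTower ℤ_[ℓ] K M]
    (ζ : M) (hζ : IsPrimitiveRoot ζ ℓ) (hM : Algebra.adjoin K {ζ} = ⊤)
    (δ : M) (hδ : δ ∈ Algebra.adjoin K ({ζ + ζ⁻¹} : Set M))
    (htr : ∀ x ∈ integralClosure ℤ_[ℓ] M,
      Algebra.trace K M (δ * x) ∈ integralClosure ℤ_[ℓ] K) :
    ∀ x ∈ integralClosure ℤ_[ℓ] M,
      ∃ y ∈ integralClosure ℤ_[ℓ] K,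
        Algebra.trace K M (δ * (ζ - ζ⁻¹) ^ (ℓ - 2) * x) = (ℓ : K) * y := by
  intro x hx
  set OK := integralClosure ℤ_[ℓ] K
  have : IsFractionRing OK K := integralClosure.isFractionRing_of_finite_extension ℚ_[ℓ] K
  have : IsIntegrallyClosed OK := integralClosure.isIntegrallyClosedOfFiniteExtension ℚ_[ℓ]
  have : IsCyclotomicExtension {ℓ} K M := hζ.isCyclotomicExtension_of_adjoin_eq_top hM
  have hℓ : Prime (ℓ : OK) := by simpa using hunram
  have h2ℓ : 2 ≤ ℓ := (Fact.out : ℓ.Prime).two_le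
  obtain ⟨σ, hσ⟩ :=
    hζ.exists_algEquiv_apply_eq_inv (cyclotomic.irreducible_of_prime_natCast (K := K) hℓ)
  obtain ⟨c, hc, hxc⟩ := hζ.exists_isIntegral_sub_map_eq_mul hodd hℓ σ (hx.tower_top (A := OK))
  obtain ⟨u, hu, hηu⟩ := hζ.exists_isIntegral_sub_inv_pow_eq_mul ℤ_[ℓ]
  set η := ζ - ζ⁻¹
  have hσδ : σ δ = δ := AlgHom.adjoin_le_equalizer (σ : M →ₐ[K] M) (AlgHom.id K M)
    (by simp [Set.EqOn, hσ, add_comm]) hδ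
  have hw : σ (δ * η ^ (ℓ - 2)) = -(δ * η ^ (ℓ - 2)) := by
    rw [map_mul, map_pow, hσδ, show σ η = -η by simp [η, hσ],
      (Nat.Odd.sub_even h2ℓ hodd even_two).neg_pow, mul_neg]
  have key : 2 * trace K M (δ * η ^ (ℓ - 2) * x) = ℓ * trace K M (δ * (u * c)) := by
    rw [show ℓ - 1 = ℓ - 2 + 1 by omega, pow_succ] at hηu
    rw [← trace_mul_sub_algEquiv σ hw, hxc, hσ, ← nsmul_eq_mul, ← map_nsmul, nsmul_eq_mul]
    congr 1
    linear_combination (δ * c) * hηu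
  have hηint : η ∈ integralClosure ℤ_[ℓ] M :=
    ((hζ.isIntegral (by omega)).sub (hζ.inv.isIntegral (by omega))).tower_top
  exact exists_mem_eq_natCast_mul_of_two_mul_eq hodd
    (by simpa [mul_assoc] using htr _ (mul_mem (pow_mem hηint _) hx))
    (htr _ (mul_mem hu (isIntegral_trans (R := ℤ_[ℓ]) (A := OK) c hc))) key

/-- Lemma 3.11: let `ℓ` be an odd prime, `K` an unramified extension of `ℚ_ℓ`
(`ℓ` stays prime in the ring of integers of `K`), `M = K(ζ_ℓ)`,
`M⁺ = K(ζ_ℓ + ζ_ℓ⁻¹)`, and `η = ζ_ℓ - ζ_ℓ⁻¹`.  If `δ ∈ M⁺` satisfies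
`tr_{M/K}(δ·O_M) ⊆ O_K`, then `tr_{M/K}(δ·η^(ℓ-2)·O_M) ⊆ ℓ·O_K`. -/
theorem stmt_9 (ℓ : ℕ) [Fact ℓ.Prime] (hodd : Odd ℓ)
    (K : Type) [Field K] [Algebra ℚ_[ℓ] K] [FiniteDimensional ℚ_[ℓ] K]
    [Algebra ℤ_[ℓ] K] [IsScalarTower ℤ_[ℓ] ℚ_[ℓ] K]
    (hunram : Prime (algebraMap ℤ_[ℓ] (integralClosure ℤ_[ℓ] K) (ℓ : ℤ_[ℓ])))
    (M : Type) [Field M] [Algebra K M] [FiniteDimensional K M]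
    [Algebra ℤ_[ℓ] M] [IsScalarTower ℤ_[ℓ] K M]
    (ζ : M) (hζ : IsPrimitiveRoot ζ ℓ) (hM : Algebra.adjoin K {ζ} = ⊤)
    (δ : M) (hδ : δ ∈ Algebra.adjoin K ({ζ + ζ⁻¹} : Set M))
    (htr : ∀ x ∈ integralClosure ℤ_[ℓ] M,
      Algebra.trace K M (δ * x) ∈ integralClosure ℤ_[ℓ] K) :
    ∀ x ∈ integralClosure ℤ_[ℓ] M,
      ∃ y ∈ integralClosure ℤ_[ℓ] K,
        Algebra.trace K M (δ * (ζ - ζ⁻¹) ^ (ℓ - 2) * x) = (ℓ : K) * y :=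
  stmt_9_general ℓ hodd K hunram M ζ hζ hM δ hδ htr
end

section
/- Let ℓ be a prime and K a discrete valuation field of characteristic zero and residue characteristic ℓ, with maximal ideal m of O_K and absolute ramification index e = v(ℓ). Let S be a free O_K-module of finite rank and A an O_K-linear automorphism of S of finite order. If 2e < ℓ − 1 and (A − 1)² ∈ m·End(S), then A = 1. -/
/-!
Pass to a power `M` of `A` of prime order `p` and write `M = 1 + N`. The binomial theorem gives
`p • (N + N² v) + N ^ p = 0`. If `v(p) = e` with `2e < p - 1` (for `p = ℓ` by hypothesis, and with
`e = 0` for `p ≠ ℓ`, which is then a unit), then `N² ∈ 𝔪^β End(S)` forces `p N ∈ 𝔪^(e+β) End(S)`,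
hence `p² N² ∈ 𝔪^(2e+β+1) End(S)` and, as `End(S)` is torsion free, `N² ∈ 𝔪^(β+1) End(S)`.
By Krull's intersection theorem `N² = 0`, so `N ^ p = 0`, `p N = 0` and `N = 0`.
-/

open Finset IsLocalRing Pointwise

namespace Submodule

variable {O R : Type*} [CommRing O] [Ring R] [Algebra O R] {I J : Ideal O} {x y : R}

theorem mul_mem_smul_top (hx : x ∈ I • (⊤ : Submodule O R)) (hy : y ∈ J • (⊤ : Submodule O R)) :
    x * y ∈ (I * J) • (⊤ : Submodule O R) := by
  refine smul_induction_on hx (fun a ha x' _ ↦ ?_) fun x₁ x₂ h₁ h₂ ↦ by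
    rw [add_mul]; exact add_mem h₁ h₂
  refine smul_induction_on hy (fun b hb y' _ ↦ ?_) fun y₁ y₂ h₁ h₂ ↦ by
    rw [mul_add]; exact add_mem h₁ h₂
  rw [smul_mul_smul_comm]
  exact smul_mem_smul (Ideal.mul_mem_mul ha hb) mem_top

theorem mul_mem_smul_top_left (a : R) (hx : x ∈ I • (⊤ : Submodule O R)) :
    a * x ∈ I • (⊤ : Submodule O R) := by
  simpa using mul_mem_smul_top (I := ⊤) (by simp) hx

theorem mul_mem_smul_top_right (hx : x ∈ I • (⊤ : Submodule O R)) (a : R) :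
    x * a ∈ I • (⊤ : Submodule O R) := by
  simpa using mul_mem_smul_top (J := ⊤) hx (by simp)

theorem pow_mem_pow_smul_top (hx : x ∈ I • (⊤ : Submodule O R)) (n : ℕ) :
    x ^ n ∈ (I ^ n) • (⊤ : Submodule O R) := by
  induction n with
  | zero => simp
  | succ n ih => rw [pow_succ, pow_succ]; exact mul_mem_smul_top ih hx

theorem sq_pow_sub_one_mem_smul_top {M : R}
    (hM : (M - 1) ^ 2 ∈ I • (⊤ : Submodule O R)) (k : ℕ) :
    (M ^ k - 1) ^ 2 ∈ I • (⊤ : Submodule O R) := by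
  have hfactor :
      (M ^ k - 1) ^ 2 = (∑ i ∈ range k, M ^ i) * (M - 1) ^ 2 * ∑ i ∈ range k, M ^ i := by
    rw [sq, sq, ← mul_assoc, geom_sum_mul, mul_assoc, mul_geom_sum]
  rw [hfactor]
  exact mul_mem_smul_top_right (mul_mem_smul_top_left _ hM) _

end Submodule

theorem exists_one_add_pow_prime_eq {R : Type*} [Ring R] {p : ℕ} (hp : p.Prime) (N : R) :
    ∃ v : R, (1 + N) ^ p = 1 + p • (N + N ^ 2 * v) + N ^ p := by
  obtain ⟨q, rfl⟩ : ∃ q, p = q + 2 := ⟨p - 2, by have := hp.two_le; omega⟩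
  have hdvd (k : ℕ) (hk : k < q) : q + 2 ∣ (q + 2).choose (k + 2) :=
    hp.dvd_choose_self (by omega) (by omega)
  refine ⟨∑ k ∈ range q, ((q + 2).choose (k + 2) / (q + 2)) • N ^ k, ?_⟩
  rw [add_comm 1 N, (Commute.one_right N).add_pow, sum_range_succ, sum_range_succ',
    sum_range_succ']
  simp only [one_pow, mul_one, Nat.choose_self, Nat.cast_one, pow_zero, Nat.choose_zero_right,
    zero_add, pow_one, Nat.choose_one_right, smul_add, mul_sum, smul_sum]
  have hmid : ∀ k ∈ range q, N ^ (k + 1 + 1) * ((q + 2).choose (k + 1 + 1) : R) =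
      (q + 2) • (N ^ 2 * ((q + 2).choose (k + 2) / (q + 2)) • N ^ k) := by
    intro k hk
    rw [mul_smul_comm, smul_smul, Nat.mul_div_cancel' (hdvd k (mem_range.1 hk)), ← nsmul_eq_mul',
      ← pow_add, add_assoc, add_comm k]
  rw [sum_congr rfl hmid, nsmul_eq_mul' N]
  abel

section DVR

variable {O : Type*} [CommRing O] [IsDomain O] [IsDiscreteValuationRing O]

local notation "𝔪" => maximalIdeal O

theorem Irreducible.maximalIdeal_pow_smul_top {M : Type*} [AddCommGroup M] [Module O M]
    {ϖ : O} (hϖ : Irreducible ϖ) (n : ℕ) : 𝔪 ^ n • (⊤ : Submodule O M) = ϖ ^ n • ⊤ := by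
  rw [hϖ.maximalIdeal_eq, Ideal.span_singleton_pow, Submodule.ideal_span_singleton_smul]

theorem mem_maximalIdeal_pow_smul_top_of_smul_mem {M : Type*} [AddCommGroup M] [Module O M]
    [Module.IsTorsionFree O M] {a : O} {j k : ℕ} {x : M} (ha : a ∉ 𝔪 ^ (j + 1))
    (hax : a • x ∈ 𝔪 ^ (j + k) • (⊤ : Submodule O M)) : x ∈ 𝔪 ^ k • (⊤ : Submodule O M) := by
  obtain ⟨ϖ, hϖ⟩ := IsDiscreteValuationRing.exists_irreducible O
  obtain ⟨i, u, rfl⟩ := IsDiscreteValuationRing.eq_unit_mul_pow_irreducible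
    (show a ≠ 0 by rintro rfl; exact ha (zero_mem _)) hϖ
  have hij : i ≤ j := by
    by_contra! hji
    refine ha ?_
    rw [hϖ.maximalIdeal_eq, Ideal.span_singleton_pow, Ideal.mem_span_singleton]
    exact (pow_dvd_pow ϖ hji).mul_left _
  rw [hϖ.maximalIdeal_pow_smul_top, Submodule.mem_smul_pointwise_iff_exists] at hax ⊢
  obtain ⟨y, -, hy⟩ := hax
  have hux : u • x = ϖ ^ (j - i + k) • y := by
    apply smul_right_injective M (pow_ne_zero i hϖ.ne_zero)
    simp only [smul_smul, ← pow_add, Units.smul_def]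
    rw [mul_comm, show i + (j - i + k) = j + k by omega, hy]
  refine ⟨(u⁻¹ : Oˣ) • ϖ ^ (j - i) • y, Submodule.mem_top, ?_⟩
  rw [smul_comm, smul_smul, ← pow_add, add_comm, ← hux, inv_smul_smul]

variable {R : Type*} [Ring R] [Algebra O R] [Module.IsTorsionFree O R]

theorem sq_mem_maximalIdeal_pow_succ_smul_top {p e β : ℕ} (hpe : (p : O) ∈ 𝔪 ^ e)
    (hpe' : (p : O) ∉ 𝔪 ^ (e + 1)) (hep : 2 * e < p - 1) (hβ : 1 ≤ β) {N v : R}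
    (hN : (p : O) • (N + N ^ 2 * v) + N ^ p = 0) (hN2 : N ^ 2 ∈ 𝔪 ^ β • (⊤ : Submodule O R)) :
    N ^ 2 ∈ 𝔪 ^ (β + 1) • (⊤ : Submodule O R) := by
  have hNp : N ^ p ∈ 𝔪 ^ (e + β) • (⊤ : Submodule O R) := by
    have hsplit : N ^ p = (N ^ 2) ^ (p / 2) * N ^ (p % 2) := by
      rw [← pow_mul, ← pow_add, Nat.div_add_mod]
    -- `2e < p - 1` means `p / 2 ≥ e + 1`, which is what makes `N ^ p` small enough.
    have hexp : e + β ≤ β * (p / 2) := by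
      have : e + 1 ≤ p / 2 := by omega
      nlinarith
    rw [hsplit]
    refine Submodule.smul_mono_left (Ideal.pow_le_pow_right hexp) ?_
    rw [pow_mul]
    exact Submodule.mul_mem_smul_top_right (Submodule.pow_mem_pow_smul_top hN2 _) _
  have hpv : (p : O) • (N ^ 2 * v) ∈ 𝔪 ^ (e + β) • (⊤ : Submodule O R) := by
    rw [pow_add, Submodule.mul_smul]
    exact Submodule.smul_mem_smul hpe (Submodule.mul_mem_smul_top_right hN2 v)
  have hpN : (p : O) • N ∈ 𝔪 ^ (e + β) • (⊤ : Submodule O R) := by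
    rw [smul_add, add_assoc, add_eq_zero_iff_eq_neg] at hN
    exact hN ▸ neg_mem (add_mem hpv hNp)
  have hppN2 : (p : O) • (p : O) • N ^ 2 ∈ 𝔪 ^ (e + (e + (β + 1))) • (⊤ : Submodule O R) := by
    rw [sq, smul_smul, ← smul_mul_smul_comm]
    refine Submodule.smul_mono_left ?_ (Submodule.mul_mem_smul_top hpN hpN)
    rw [← pow_add]
    exact Ideal.pow_le_pow_right (by omega)
  exact mem_maximalIdeal_pow_smul_top_of_smul_mem hpe'
    (mem_maximalIdeal_pow_smul_top_of_smul_mem hpe' hppN2)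

theorem eq_one_of_pow_prime_eq_one [Module.Finite O R] {p e : ℕ} (hp : p.Prime)
    (hpe : (p : O) ∈ 𝔪 ^ e) (hpe' : (p : O) ∉ 𝔪 ^ (e + 1)) (hep : 2 * e < p - 1) {M : R}
    (hMp : M ^ p = 1) (hM : (M - 1) ^ 2 ∈ 𝔪 • (⊤ : Submodule O R)) : M = 1 := by
  set N := M - 1
  obtain ⟨v, hv⟩ := exists_one_add_pow_prime_eq hp N
  have hN : (p : O) • (N + N ^ 2 * v) + N ^ p = 0 := by
    rw [add_sub_cancel, hMp, add_assoc, left_eq_add, ← Nat.cast_smul_eq_nsmul O] at hv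
    exact hv
  have hN2 : N ^ 2 = 0 := by
    have hall (β : ℕ) : N ^ 2 ∈ 𝔪 ^ (β + 1) • (⊤ : Submodule O R) := by
      induction β with
      | zero => simpa using hM
      | succ β ih => exact sq_mem_maximalIdeal_pow_succ_smul_top hpe hpe' hep (by omega) hN ih
    refine IsHausdorff.haus' (I := 𝔪) _ fun n ↦ ?_
    rw [SModEq.zero]
    exact Submodule.smul_mono_left (Ideal.pow_le_pow_right n.le_succ) (hall n)
  have hNp : N ^ p = 0 := by rw [← pow_mul_pow_sub N hp.two_le, hN2, zero_mul]
  have hp0 : (p : O) ≠ 0 := fun h ↦ hpe' (h ▸ zero_mem _)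
  rw [hN2, zero_mul, add_zero, hNp, add_zero, smul_eq_zero_iff_right hp0, sub_eq_zero] at hN
  exact hN

theorem eq_one_of_isOfFinOrder [Module.Finite O R]
    (hram : ∀ p : ℕ, p.Prime → ∃ e, (p : O) ∈ 𝔪 ^ e ∧ (p : O) ∉ 𝔪 ^ (e + 1) ∧ 2 * e < p - 1)
    {M : R} (hfin : IsOfFinOrder M) (hM : (M - 1) ^ 2 ∈ 𝔪 • (⊤ : Submodule O R)) : M = 1 := by
  obtain ⟨n, hn, hMn⟩ := isOfFinOrder_iff_pow_eq_one.1 hfin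
  induction n using Nat.strong_induction_on with
  | _ n ih =>
    obtain rfl | hn1 := eq_or_ne n 1
    · simpa using hMn
    obtain ⟨p, hp, k, rfl⟩ := Nat.exists_prime_and_dvd hn1
    obtain ⟨e, hpe, hpe', hep⟩ := hram p hp
    have hk : 0 < k := Nat.pos_of_mul_pos_left hn
    have hMk : M ^ k = 1 :=
      eq_one_of_pow_prime_eq_one hp hpe hpe' hep (by rwa [← pow_mul, mul_comm])
        (Submodule.sq_pow_sub_one_mem_smul_top hM k)
    exact ih k (lt_mul_left hk hp.one_lt) hk hMk

end DVR

theorem IsLocalRing.natCast_notMem_maximalIdeal_of_prime {O : Type*} [CommRing O] [IsLocalRing O]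
    {ℓ p : ℕ} (hℓ : ℓ.Prime) (hp : p.Prime) (hpℓ : p ≠ ℓ) (hres : (ℓ : O) ∈ maximalIdeal O) :
    (p : O) ∉ maximalIdeal O := by
  obtain ⟨a, b, hab⟩ := ((Nat.coprime_primes hp hℓ).2 hpℓ).cast (R := O)
  rcases isUnit_or_isUnit_of_add_one hab with h | h
  · exact mem_nonunits_iff.not.2 (not_not.2 (isUnit_of_mul_isUnit_right h))
  · exact absurd (isUnit_of_mul_isUnit_right h) hres

theorem stmt_10_general (ℓ e : ℕ) (hℓ : ℓ.Prime)
    (O : Type) [CommRing O] [IsDomain O] [IsDiscreteValuationRing O]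
    (hres : (ℓ : O) ∈ IsLocalRing.maximalIdeal O)
    (he : (ℓ : O) ∈ (IsLocalRing.maximalIdeal O) ^ e ∧
          (ℓ : O) ∉ (IsLocalRing.maximalIdeal O) ^ (e + 1))
    (hbound : 2 * e < ℓ - 1)
    (S : Type) [AddCommGroup S] [Module O S] [Module.Free O S] [Module.Finite O S]
    (A : S ≃ₗ[O] S) (hfin : IsOfFinOrder A)
    (hA : ((A : Module.End O S) - 1) ^ 2 ∈
        (IsLocalRing.maximalIdeal O) • (⊤ : Submodule O (Module.End O S))) :
    A = 1 := by
  have hram (p : ℕ) (hp : p.Prime) : ∃ e, (p : O) ∈ maximalIdeal O ^ e ∧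
      (p : O) ∉ maximalIdeal O ^ (e + 1) ∧ 2 * e < p - 1 := by
    obtain rfl | hpℓ := eq_or_ne p ℓ
    · exact ⟨e, he.1, he.2, hbound⟩
    · refine ⟨0, by simp, ?_, by have := hp.two_le; omega⟩
      simpa using natCast_notMem_maximalIdeal_of_prime hℓ hp hpℓ hres
  apply LinearEquiv.toLinearMap_injective
  exact eq_one_of_isOfFinOrder hram
    (LinearEquiv.automorphismGroup.toLinearMapMonoidHom.isOfFinOrder hfin) hA

/-- Rigidity (Proposition 3.12(a)): let `O` be the valuation ring of a discrete valuation
field of characteristic zero and residue characteristic `ℓ`, with maximal ideal `m` and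
absolute ramification index `e` (so `ℓ ∈ m^e \ m^(e+1)`).  If `S` is a free `O`-module of
finite rank and `A` is a finite-order `O`-linear automorphism of `S` with
`(A - 1)² ∈ m·End(S)` and `2e < ℓ - 1`, then `A = 1`. -/
theorem stmt_10 (ℓ e : ℕ) (hℓ : ℓ.Prime)
    (O : Type) [CommRing O] [IsDomain O] [IsDiscreteValuationRing O] [CharZero O]
    (hres : (ℓ : O) ∈ IsLocalRing.maximalIdeal O)
    (he : (ℓ : O) ∈ (IsLocalRing.maximalIdeal O) ^ e ∧
          (ℓ : O) ∉ (IsLocalRing.maximalIdeal O) ^ (e + 1))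
    (hbound : 2 * e < ℓ - 1)
    (S : Type) [AddCommGroup S] [Module O S] [Module.Free O S] [Module.Finite O S]
    (A : S ≃ₗ[O] S) (hfin : IsOfFinOrder A)
    (hA : ((A : Module.End O S) - 1) ^ 2 ∈
        (IsLocalRing.maximalIdeal O) • (⊤ : Submodule O (Module.End O S))) :
    A = 1 :=
  stmt_10_general ℓ e hℓ O hres he hbound S A hfin hA
end

section
/- Let ℓ be a prime and K a discrete valuation field of characteristic zero and residue characteristic ℓ, with maximal ideal m and ramification index e = v(ℓ). Let S be a free O_K-module of finite rank and A an automorphism of S of finite order. If e < ℓ − 1 and A − 1 ∈ m·End(S), then A = 1. -/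
/-!
Call `x ∈ E = End(S)` congruent to `1` when `x - 1 ∈ π E`. Such elements form a submonoid, so
if one of them had finite order `N > 1`, then for a prime `p ∣ N` the element `A^(N/p)` would be
a congruent element of order `p`. Write `p = w π^d` with `w` a unit (`d = e` if `p = ℓ`, and
`d = 0` otherwise, `p` then being prime to the residue characteristic). If `x^p = 1` and
`B = x - 1 ∈ π^n E` with `n ≥ 1`, the expansion `(1 + B)^p = 1 + B^p + p B (1 + B (…))` gives
`p B ∈ π^(n+d+1) E`, since `np ≥ n + d + 1` exactly when `n (p - 1) > d`; cancelling `π^d`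
gives `B ∈ π^(n+1) E`. So `B` lies in every `π^n E`, and Krull's intersection theorem forces
`B = 0`.
-/

open IsLocalRing
open scoped Pointwise

section PowSmulTop

variable {R E : Type*} [CommRing R] [Ring E] [Algebra R E] {π : R}

theorem mem_pow_smul_top_iff {k : ℕ} {x : E} :
    x ∈ π ^ k • (⊤ : Submodule R E) ↔ ∃ y, π ^ k • y = x := by
  simp [Submodule.mem_smul_pointwise_iff_exists]

theorem pow_smul_top_antitone {a b : ℕ} (h : a ≤ b) :
    π ^ b • (⊤ : Submodule R E) ≤ π ^ a • ⊤ := by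
  intro x hx
  obtain ⟨y, rfl⟩ := mem_pow_smul_top_iff.1 hx
  refine mem_pow_smul_top_iff.2 ⟨π ^ (b - a) • y, ?_⟩
  rw [smul_smul, ← pow_add, Nat.add_sub_cancel' h]

theorem mul_mem_pow_add_smul_top {a b : ℕ} {x y : E}
    (hx : x ∈ π ^ a • (⊤ : Submodule R E)) (hy : y ∈ π ^ b • (⊤ : Submodule R E)) :
    x * y ∈ π ^ (a + b) • (⊤ : Submodule R E) := by
  obtain ⟨x, rfl⟩ := mem_pow_smul_top_iff.1 hx
  obtain ⟨y, rfl⟩ := mem_pow_smul_top_iff.1 hy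
  exact mem_pow_smul_top_iff.2 ⟨x * y, by rw [smul_mul_smul_comm, pow_add]⟩

theorem pow_mem_pow_mul_smul_top {a : ℕ} {x : E} (hx : x ∈ π ^ a • (⊤ : Submodule R E))
    (m : ℕ) : x ^ m ∈ π ^ (a * m) • (⊤ : Submodule R E) := by
  obtain ⟨x, rfl⟩ := mem_pow_smul_top_iff.1 hx
  exact mem_pow_smul_top_iff.2 ⟨x ^ m, by rw [smul_pow, pow_mul]⟩

theorem mem_pow_smul_top_of_pow_smul_mem (hπ : IsSMulRegular E π) {a b : ℕ} {x : E}
    (hx : π ^ a • x ∈ π ^ (a + b) • (⊤ : Submodule R E)) :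
    x ∈ π ^ b • (⊤ : Submodule R E) := by
  obtain ⟨y, hy⟩ := mem_pow_smul_top_iff.1 hx
  exact mem_pow_smul_top_iff.2 ⟨y, hπ.pow a (by
    show π ^ a • π ^ b • y = π ^ a • x
    rw [smul_smul, ← pow_add, hy])⟩

variable (π) in
def congruenceSubmonoid : Submonoid E where
  carrier := {x | x - 1 ∈ π • (⊤ : Submodule R E)}
  one_mem' := by simp
  mul_mem' {x y} hx hy := by
    obtain ⟨z, hz⟩ := (Submodule.mem_smul_pointwise_iff_exists _ _ _).1 hy
    have hxy : x * y - 1 = π • (x * z) + (x - 1) := by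
      rw [← mul_smul_comm, hz.2, mul_sub, mul_one, sub_add_sub_cancel]
    rw [Set.mem_ofPred_eq, hxy]
    exact add_mem (Submodule.smul_mem_pointwise_smul _ _ _ trivial) hx

theorem mem_congruenceSubmonoid_iff {x : E} :
    x ∈ congruenceSubmonoid π ↔ x - 1 ∈ π • (⊤ : Submodule R E) :=
  Iff.rfl

theorem sub_one_mem_pow_succ_smul_top_of_pow_eq_one (hπ : IsSMulRegular E π) {p d n : ℕ}
    (hp : p.Prime) {w : R} (hw : IsUnit w) (hpw : (p : R) = π ^ d * w) (hd : d + 1 < p)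
    (hn : 1 ≤ n) {x : E} (hxp : x ^ p = 1) (hx : x - 1 ∈ π ^ n • (⊤ : Submodule R E)) :
    x - 1 ∈ π ^ (n + 1) • (⊤ : Submodule R E) := by
  set B := x - 1
  set T := ∑ k ∈ Finset.Ioo 0 p, B ^ (k - 1) * ((p.choose k / p : ℕ) : E) with hT_def
  have hexp : B ^ p + (p : E) * B * T = 0 := by
    have h := (Commute.one_right B).add_pow_prime_eq hp
    rw [show B + 1 = x from sub_add_cancel x 1, hxp, add_right_comm] at h
    simp only [one_pow, mul_one] at h
    exact left_eq_add.mp (h.trans (add_comm _ _))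
  have hB1 : B ∈ π ^ 1 • (⊤ : Submodule R E) := pow_smul_top_antitone hn hx
  have hT : T - 1 ∈ π ^ 1 • (⊤ : Submodule R E) := by
    have hT1 : T = 1 + ∑ k ∈ Finset.Ico 2 p, B ^ (k - 1) * ((p.choose k / p : ℕ) : E) := by
      rw [hT_def, ← Finset.Ico_add_one_left_eq_Ioo, zero_add,
        Finset.sum_eq_sum_Ico_succ_bot hp.one_lt]
      simp [Nat.div_self hp.pos]
    rw [hT1, add_sub_cancel_left]
    refine Submodule.sum_mem _ fun k hk => ?_
    rw [← Nat.cast_comm, ← nsmul_eq_mul]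
    refine Submodule.smul_of_tower_mem _ _
      (pow_smul_top_antitone ?_ (pow_mem_pow_mul_smul_top hB1 (k - 1)))
    simp only [Finset.mem_Ico] at hk
    omega
  have hpE : (p : E) ∈ π ^ d • (⊤ : Submodule R E) :=
    mem_pow_smul_top_iff.2 ⟨algebraMap R E w, by
      rw [Algebra.smul_def, ← map_mul, ← hpw, map_natCast]⟩
  have hpB : (p : E) * B ∈ π ^ (d + (n + 1)) • (⊤ : Submodule R E) := by
    have hsplit : (p : E) * B = -(B ^ p + (p : E) * B * (T - 1)) := by
      calc (p : E) * B = (p : E) * B - (B ^ p + (p : E) * B * T) := by rw [hexp, sub_zero]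
        _ = _ := by noncomm_ring
    rw [hsplit]
    refine neg_mem (add_mem ?_ ?_)
    · refine pow_smul_top_antitone ?_ (pow_mem_pow_mul_smul_top hx p)
      nlinarith
    · simpa [add_assoc] using mul_mem_pow_add_smul_top (mul_mem_pow_add_smul_top hpE hx) hT
  refine mem_pow_smul_top_of_pow_smul_mem hπ (a := d) ?_
  have : π ^ d • B = ((hw.unit⁻¹ : Rˣ) : R) • ((p : E) * B) := by
    rw [← map_natCast (algebraMap R E) p, ← Algebra.smul_def, hpw, smul_smul, mul_left_comm,
      hw.val_inv_mul, mul_one]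
  rw [this]
  exact Submodule.smul_mem _ _ hpB

theorem congruenceSubmonoid.eq_one_of_pow_prime_eq_one (hπ : IsSMulRegular E π)
    (hsep : ⨅ k : ℕ, π ^ k • (⊤ : Submodule R E) = ⊥) {p d : ℕ} (hp : p.Prime) {w : R}
    (hw : IsUnit w) (hpw : (p : R) = π ^ d * w) (hd : d + 1 < p) {x : E}
    (hx : x ∈ congruenceSubmonoid π) (hxp : x ^ p = 1) : x = 1 := by
  have hmem : ∀ n, x - 1 ∈ π ^ n • (⊤ : Submodule R E) := by
    intro n
    induction n with
    | zero => simp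
    | succ n ih =>
      rcases n.eq_zero_or_pos with rfl | hn
      · simpa [mem_congruenceSubmonoid_iff] using hx
      · exact sub_one_mem_pow_succ_smul_top_of_pow_eq_one hπ hp hw hpw hd hn hxp ih
  have h0 : x - 1 ∈ (⊥ : Submodule R E) := hsep ▸ Submodule.mem_iInf _ |>.2 hmem
  exact sub_eq_zero.1 h0

end PowSmulTop

theorem Submonoid.eq_one_of_isOfFinOrder {M : Type*} [Monoid M] {H : Submonoid M}
    (hH : ∀ g ∈ H, ∀ p : ℕ, p.Prime → g ^ p = 1 → g = 1) {g : M} (hg : g ∈ H)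
    (hfin : IsOfFinOrder g) : g = 1 := by
  by_contra hne
  obtain ⟨p, hp, hpg⟩ := Nat.exists_prime_and_dvd (orderOf_eq_one_iff.not.2 hne)
  have hord := orderOf_pow_orderOf_div hfin.orderOf_pos.ne' hpg
  have hpow : (g ^ (orderOf g / p)) ^ p = 1 := by
    rw [← pow_mul, Nat.div_mul_cancel hpg, pow_orderOf_eq_one]
  rw [hH _ (H.pow_mem hg _) p hp hpow, orderOf_one] at hord
  exact hp.one_lt.ne hord

namespace IsLocalRing

variable {R : Type*} [CommRing R] [IsLocalRing R]

theorem exists_eq_pow_mul_of_mem_pow_of_notMem {π x : R}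
    (hπ : maximalIdeal R = Ideal.span {π}) {e : ℕ} (h : x ∈ maximalIdeal R ^ e)
    (h' : x ∉ maximalIdeal R ^ (e + 1)) : ∃ w, IsUnit w ∧ x = π ^ e * w := by
  rw [hπ, Ideal.span_singleton_pow, Ideal.mem_span_singleton] at h h'
  obtain ⟨w, rfl⟩ := h
  refine ⟨w, not_not.1 fun hw => h' ?_, rfl⟩
  obtain ⟨c, rfl⟩ := Ideal.mem_span_singleton.1 (hπ ▸ (mem_maximalIdeal w).2 hw)
  exact ⟨c, by ring⟩

theorem isUnit_natCast_of_prime_ne {ℓ p : ℕ} (hℓ : ℓ.Prime) (hp : p.Prime) (hpℓ : p ≠ ℓ)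
    (hres : (ℓ : R) ∈ maximalIdeal R) : IsUnit (p : R) := by
  by_contra hpm
  obtain ⟨u, v, huv⟩ :=
    ((Nat.coprime_primes hp hℓ).2 hpℓ).isCoprime.map (Int.castRingHom R)
  have h1 : (1 : R) ∈ maximalIdeal R := by
    rw [← huv]
    simpa using add_mem (Ideal.mul_mem_left _ u hpm) (Ideal.mul_mem_left _ v hres)
  exact (maximalIdeal R).one_notMem h1

end IsLocalRing

theorem stmt_11_general (ℓ e : ℕ) (hℓ : ℓ.Prime)
    (O : Type) [CommRing O] [IsDomain O] [IsDiscreteValuationRing O]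
    (hres : (ℓ : O) ∈ IsLocalRing.maximalIdeal O)
    (he : (ℓ : O) ∈ (IsLocalRing.maximalIdeal O) ^ e ∧
          (ℓ : O) ∉ (IsLocalRing.maximalIdeal O) ^ (e + 1))
    (hbound : e < ℓ - 1)
    (S : Type) [AddCommGroup S] [Module O S] [Module.Free O S] [Module.Finite O S]
    (A : S ≃ₗ[O] S) (hfin : IsOfFinOrder A)
    (hA : ((A : Module.End O S) - 1) ∈
        (IsLocalRing.maximalIdeal O) • (⊤ : Submodule O (Module.End O S))) :
    A = 1 := by
  obtain ⟨π, hπ⟩ := IsDiscreteValuationRing.exists_irreducible O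
  have hm := hπ.maximalIdeal_eq
  have hreg : IsSMulRegular (Module.End O S) π :=
    Module.IsTorsionFree.isSMulRegular (isRegular_iff_ne_zero.2 hπ.ne_zero)
  have hsep : ⨅ k : ℕ, π ^ k • (⊤ : Submodule O (Module.End O S)) = ⊥ := by
    simpa [hm, Ideal.span_singleton_pow, Submodule.ideal_span_singleton_smul] using
      (maximalIdeal O).iInf_pow_smul_eq_bot_of_isLocalRing (M := Module.End O S)
        (maximalIdeal.isMaximal O).ne_top
  have hcong : (A : Module.End O S) ∈ congruenceSubmonoid π := by
    rwa [hm, Submodule.ideal_span_singleton_smul] at hA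
  have hfin' : IsOfFinOrder (A : Module.End O S) :=
    LinearEquiv.automorphismGroup.toLinearMapMonoidHom.isOfFinOrder hfin
  refine LinearEquiv.toLinearMap_injective <|
    (congruenceSubmonoid π).eq_one_of_isOfFinOrder (fun x hx p hp hxp => ?_) hcong hfin'
  obtain ⟨d, w, hw, hpw, hd⟩ : ∃ d w, IsUnit w ∧ (p : O) = π ^ d * w ∧ d + 1 < p := by
    rcases eq_or_ne p ℓ with rfl | hpℓ
    · obtain ⟨w, hw, hpw⟩ := exists_eq_pow_mul_of_mem_pow_of_notMem hm he.1 he.2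
      exact ⟨e, w, hw, hpw, by omega⟩
    · exact ⟨0, p, isUnit_natCast_of_prime_ne hℓ hp hpℓ hres, by simp, hp.two_le⟩
  exact congruenceSubmonoid.eq_one_of_pow_prime_eq_one hreg hsep hp hw hpw hd hx hxp

/-- Rigidity (Proposition 3.12(b)): let `O` be the valuation ring of a discrete valuation
field of characteristic zero and residue characteristic `ℓ`, with maximal ideal `m` and
absolute ramification index `e` (so `ℓ ∈ m^e \ m^(e+1)`).  If `S` is a free `O`-module of
finite rank and `A` is a finite-order `O`-linear automorphism of `S` with
`A - 1 ∈ m·End(S)` and `e < ℓ - 1`, then `A = 1`. -/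
theorem stmt_11 (ℓ e : ℕ) (hℓ : ℓ.Prime)
    (O : Type) [CommRing O] [IsDomain O] [IsDiscreteValuationRing O] [CharZero O]
    (hres : (ℓ : O) ∈ IsLocalRing.maximalIdeal O)
    (he : (ℓ : O) ∈ (IsLocalRing.maximalIdeal O) ^ e ∧
          (ℓ : O) ∉ (IsLocalRing.maximalIdeal O) ^ (e + 1))
    (hbound : e < ℓ - 1)
    (S : Type) [AddCommGroup S] [Module O S] [Module.Free O S] [Module.Finite O S]
    (A : S ≃ₗ[O] S) (hfin : IsOfFinOrder A)
    (hA : ((A : Module.End O S) - 1) ∈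
        (IsLocalRing.maximalIdeal O) • (⊤ : Submodule O (Module.End O S))) :
    A = 1 :=
  stmt_11_general ℓ e hℓ O hres he hbound S A hfin hA
end

section
/- Let ℓ be an odd prime, G = μ_ℓ, M = Q_ℓ(ζ_ℓ), and let V be M viewed as a Q_ℓ-vector space with the natural multiplication action of G. Then the pairing f(x,y) = tr_{M/Q_ℓ}(x·ȳ) (where ȳ is the image of y under the automorphism ζ_ℓ ↦ ζ_ℓ^{-1}) makes V a faithful simple orthogonal Q_ℓ[G]-module, but there exists no G-stable Z_ℓ-lattice T in V admitting a perfect symmetric G-invariant Z_ℓ-bilinear form f' : T × T → Z_ℓ. -/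
open Polynomial Finset in
lemma aux_prod {ℓ : ℕ} [Fact ℓ.Prime] {M : Type} [Field M] [DecidableEq M] {ζ : M}
    (hζ : IsPrimitiveRoot ζ ℓ) :
    (ℓ : M) = ∏ μ ∈ (nthRootsFinset ℓ (1 : M)).erase 1, (1 - μ) := by
  have hpos : 0 < ℓ := (Fact.out : ℓ.Prime).pos
  have h1 : (1 : M) ∈ nthRootsFinset ℓ (1 : M) := one_mem_nthRootsFinset hpos
  have key : (X - C 1) * ∏ μ ∈ (nthRootsFinset ℓ (1 : M)).erase 1, (X - C μ)
      = (X - C 1) * ∑ i ∈ range ℓ, (X : M[X]) ^ i := by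
    rw [Finset.mul_prod_erase (nthRootsFinset ℓ (1 : M)) (fun μ => X - C μ) h1, ← X_pow_sub_one_eq_prod hpos hζ, ← mul_geom_sum]
    simp
  have hX1 : (X - C (1:M)) ≠ 0 := X_sub_C_ne_zero 1
  have key2 := mul_left_cancel₀ hX1 key
  have := congrArg (Polynomial.eval 1) key2
  simpa [eval_prod, eval_geom_sum] using this.symm

open Polynomial Finset in
lemma aux_ts {ℓ : ℕ} [Fact ℓ.Prime] {M : Type} [Field M] [DecidableEq M] {ζ : M}
    (hζ : IsPrimitiveRoot ζ ℓ) {μ : M} (hμ : μ ∈ (nthRootsFinset ℓ (1 : M)).erase 1) :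
    ∃ t ∈ Subring.closure {ζ}, ∃ s ∈ Subring.closure {ζ},
      (1 - ζ) = (1 - μ) * t ∧ (1 - μ) = (1 - ζ) * s := by
  have hprime : ℓ.Prime := Fact.out
  have hpos : 0 < ℓ := hprime.pos
  have hμ1 : μ ≠ 1 := (Finset.mem_erase.mp hμ).1
  have hμℓ : μ ^ ℓ = 1 := (mem_nthRootsFinset hpos 1).mp (Finset.mem_erase.mp hμ).2
  have : NeZero ℓ := ⟨hpos.ne'⟩
  obtain ⟨i, hiℓ, hi⟩ := hζ.eq_pow_of_pow_eq_one hμℓ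
  have hζcl : ζ ∈ Subring.closure ({ζ} : Set M) := Subring.subset_closure rfl
  -- i is coprime to ℓ
  have hi0 : ¬ (ℓ ∣ i) := by
    intro hdvd
    exact hμ1 (hi ▸ (hζ.pow_eq_one_iff_dvd i).mpr hdvd)
  -- find a multiplicative inverse i' of i mod ℓ
  have hℓ1 : 1 < ℓ := hprime.one_lt
  have hiz : (i : ZMod ℓ) ≠ 0 := fun h => hi0 ((ZMod.natCast_eq_zero_iff i ℓ).mp h)
  haveI : Fact (1 < ℓ) := ⟨hℓ1⟩
  set i' : ℕ := ((i : ZMod ℓ)⁻¹).val with hi'def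
  have hii' : ((i * i' : ℕ) : ZMod ℓ) = ((1 : ℕ) : ZMod ℓ) := by
    push_cast
    rw [ZMod.natCast_val, ZMod.cast_id]
    field_simp
  have hmod : (i * i') % ℓ = 1 % ℓ := (ZMod.natCast_eq_natCast_iff' _ _ _).mp hii'
  have h1mod : 1 % ℓ = 1 := Nat.mod_eq_of_lt hℓ1
  obtain ⟨c, hc⟩ : ∃ c, i * i' = ℓ * c + 1 := by
    have := Nat.div_add_mod (i * i') ℓ
    exact ⟨(i * i') / ℓ, by omega⟩
  have hζμ : μ ^ i' = ζ := by
    rw [← hi, ← pow_mul, hc, pow_add, pow_mul, hζ.pow_eq_one, one_pow, pow_one, one_mul]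
  have key : ∀ (x : M) (n : ℕ), 1 - x ^ n = (1 - x) * ∑ j ∈ range n, x ^ j := by
    intro x n
    have := geom_sum_mul x n
    calc 1 - x ^ n = -((∑ j ∈ range n, x ^ j) * (x - 1)) := by rw [this]; ring
    _ = (1 - x) * ∑ j ∈ range n, x ^ j := by ring
  refine ⟨∑ j ∈ range i', μ ^ j, ?_, ∑ j ∈ range i, ζ ^ j, ?_, ?_, ?_⟩
  · exact Subring.sum_mem _ (fun j _ => Subring.pow_mem _ (hi ▸ Subring.pow_mem _ hζcl i) j)
  · exact Subring.sum_mem _ (fun j _ => Subring.pow_mem _ hζcl j)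
  · rw [← key μ i', hζμ]
  · rw [← key ζ i, hi]

open Polynomial Finset in
lemma aux_unit {ℓ : ℕ} [Fact ℓ.Prime] (hodd : Odd ℓ) {M : Type} [Field M] [DecidableEq M] {ζ : M}
    (hζ : IsPrimitiveRoot ζ ℓ) :
    ∃ w ∈ Subring.closure ({ζ} : Set M), ∃ v ∈ Subring.closure ({ζ} : Set M),
      (ζ - 1) ^ (ℓ - 1) = (ℓ : M) * w ∧ w * v = 1 := by
  have hprime : ℓ.Prime := Fact.out
  have hℓ1 : 1 < ℓ := hprime.one_lt
  have hζ1 : ζ ≠ 1 := hζ.ne_one hℓ1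
  set S := (nthRootsFinset ℓ (1 : M)).erase 1 with hS
  have hcard : S.card = ℓ - 1 := by
    rw [hS, Finset.card_erase_of_mem (one_mem_nthRootsFinset hprime.pos),
      hζ.card_nthRootsFinset]
  have hchoice := fun (μ : {x // x ∈ S}) => aux_ts hζ μ.2
  choose t ht s hs htt hss using hchoice
  have hts1 : ∀ μ, t μ * s μ = 1 := by
    intro μ
    have h1ζ : (1 - ζ) ≠ 0 := sub_ne_zero.mpr (Ne.symm hζ1)
    have : (1 - ζ) * 1 = (1 - ζ) * (s μ * t μ) := by
      calc (1 - ζ) * 1 = 1 - ζ := by ring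
      _ = (1 - μ.1) * t μ := htt μ
      _ = ((1 - ζ) * s μ) * t μ := by rw [← hss μ]
      _ = (1 - ζ) * (s μ * t μ) := by ring
    rw [mul_comm (t μ)]
    exact (mul_left_cancel₀ h1ζ this).symm
  refine ⟨∏ μ ∈ S.attach, t μ, Subring.prod_mem _ (fun μ _ => ht μ),
    ∏ μ ∈ S.attach, s μ, Subring.prod_mem _ (fun μ _ => hs μ), ?_, ?_⟩
  · have heven : Even (ℓ - 1) := Nat.Odd.sub_odd hodd odd_one
    have h1 : (ζ - 1) ^ (ℓ - 1) = (1 - ζ) ^ (ℓ - 1) := by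
      rw [← neg_sub (1:M) ζ, heven.neg_pow]
    rw [h1, ← hcard, ← Finset.prod_const, ← Finset.prod_attach S (fun _ => 1 - ζ)]
    rw [aux_prod hζ, ← hS, ← Finset.prod_attach S (fun μ => 1 - μ), ← Finset.prod_mul_distrib]
    exact Finset.prod_congr rfl (fun μ _ => htt μ)
  · rw [← Finset.prod_mul_distrib]
    exact Finset.prod_eq_one (fun μ _ => hts1 μ)

open Finset in
lemma aux_finrank {ℓ : ℕ} (hpos : 0 < ℓ) {K M : Type} [Field K] [Field M] [Algebra K M]
    {ζ : M} (hζℓ : ζ ^ ℓ = 1) (hM : Algebra.adjoin K {ζ} = ⊤) :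
    Module.finrank K M ≤ ℓ := by
  classical
  set v : Fin ℓ → M := fun i => ζ ^ (i : ℕ) with hv
  have hspan : (⊤ : Submodule K M) ≤ Submodule.span K (Set.range v) := by
    have h1 : (⊤ : Submodule K M) = Subalgebra.toSubmodule (Algebra.adjoin K {ζ}) := by
      rw [hM]; rfl
    rw [h1, Algebra.adjoin_eq_span]
    apply Submodule.span_le.mpr
    intro x hx
    obtain ⟨n, hn⟩ := Submonoid.mem_closure_singleton.mp hx
    have : ζ ^ n = v ⟨n % ℓ, Nat.mod_lt _ hpos⟩ := by
      rw [hv]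
      show ζ ^ n = ζ ^ (n % ℓ)
      conv_lhs => rw [← Nat.div_add_mod n ℓ]
      rw [pow_add, pow_mul, hζℓ, one_pow, one_mul]
    exact hn ▸ this ▸ Submodule.subset_span (Set.mem_range_self _)
  have h2 : Module.finrank K M = Module.finrank K (⊤ : Submodule K M) :=
    (finrank_top K M).symm
  have h3 : (⊤ : Submodule K M) = Submodule.span K (Set.range v) :=
    le_antisymm hspan le_top
  rw [h2, h3]
  calc Module.finrank K (Submodule.span K (Set.range v)) ≤ (Set.range v).toFinset.card :=
        finrank_span_le_card _
  _ ≤ ℓ := by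
      have := Set.toFinset_range v
      rw [this]
      exact le_trans (Finset.card_image_le) (by simp)

set_option maxHeartbeats 1600000 in
/-- Proposition 6.1: let `ℓ` be an odd prime, `G = μ_ℓ`, `M = ℚ_ℓ(ζ_ℓ)`, and `V = M`
viewed as a `ℚ_ℓ`-vector space with the natural multiplication action of `G`. Then
`f(x,y) = tr_{M/ℚ_ℓ}(x·ȳ)` (with `ȳ` the image under `ζ_ℓ ↦ ζ_ℓ⁻¹`) makes `V` a faithful
simple orthogonal `ℚ_ℓ[G]`-module, but there is no `G`-stable `ℤ_ℓ`-lattice `T` in `V`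
admitting a perfect symmetric `G`-invariant `ℤ_ℓ`-bilinear form `f' : T × T → ℤ_ℓ`. -/
theorem stmt_17 (ℓ : ℕ) [Fact ℓ.Prime] (hodd : Odd ℓ)
    (M : Type) [Field M] [Algebra ℚ_[ℓ] M] [FiniteDimensional ℚ_[ℓ] M]
    [Module ℤ_[ℓ] M] [IsScalarTower ℤ_[ℓ] ℚ_[ℓ] M]
    (ζ : M) (hζ : IsPrimitiveRoot ζ ℓ) (hM : Algebra.adjoin ℚ_[ℓ] {ζ} = ⊤)
    (σ : M ≃ₐ[ℚ_[ℓ]] M) (hσ : σ ζ = ζ⁻¹) :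
    ∀ f : M → M → ℚ_[ℓ], (∀ x y : M, f x y = Algebra.trace ℚ_[ℓ] M (x * σ y)) →
    -- `V = M` is a faithful simple orthogonal `ℚ_ℓ[μ_ℓ]`-module:
    ((∀ x y : M, f x y = f y x) ∧
     (∀ x : M, (∀ y : M, f x y = 0) → x = 0) ∧
     (∀ x y : M, f (ζ * x) (ζ * y) = f x y) ∧
     (ζ ≠ 1) ∧
     (∀ U : Submodule ℚ_[ℓ] M, (∀ x ∈ U, ζ * x ∈ U) → U = ⊥ ∨ U = ⊤)) ∧
    -- but no `G`-stable lattice carries a perfect symmetric invariant `ℤ_ℓ`-pairing: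
    ¬ ∃ (T : Submodule ℤ_[ℓ] M) (hT : ∀ x ∈ T, ζ * x ∈ T),
        T.FG ∧ Submodule.span ℚ_[ℓ] (T : Set M) = ⊤ ∧
        ∃ f' : T →ₗ[ℤ_[ℓ]] T →ₗ[ℤ_[ℓ]] ℤ_[ℓ],
          (∀ x y : T, f' x y = f' y x) ∧
          (∀ x y : T, f' ⟨ζ * (x : M), hT x x.2⟩ ⟨ζ * (y : M), hT y y.2⟩ = f' x y) ∧
          Function.Bijective ⇑f' ∧ Function.Bijective ⇑f'.flip := by
  classical
  intro f hf
  have hprime : ℓ.Prime := Fact.out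
  have hℓ1 : 1 < ℓ := hprime.one_lt
  have hζ1 : ζ ≠ 1 := hζ.ne_one hℓ1
  have hζℓ : ζ ^ ℓ = 1 := hζ.pow_eq_one
  have hζ0 : ζ ≠ 0 := by
    intro h
    have := hζℓ
    rw [h, zero_pow hprime.pos.ne'] at this
    exact zero_ne_one this
  -- σ is an involution
  have hσ2 : ∀ m : M, σ (σ m) = m := by
    have hle : Algebra.adjoin ℚ_[ℓ] {ζ} ≤
        AlgHom.equalizer (σ.toAlgHom.comp σ.toAlgHom) (AlgHom.id ℚ_[ℓ] M) := by
      apply Algebra.adjoin_le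
      intro x hx
      rcases hx with rfl
      show σ (σ x) = x
      rw [hσ, map_inv₀, hσ, inv_inv]
    intro m
    have : m ∈ AlgHom.equalizer (σ.toAlgHom.comp σ.toAlgHom) (AlgHom.id ℚ_[ℓ] M) :=
      hle (hM ▸ Algebra.mem_top)
    exact this
  have htr : ∀ z : M, Algebra.trace ℚ_[ℓ] M (σ z) = Algebra.trace ℚ_[ℓ] M z :=
    fun z => Algebra.trace_eq_of_algEquiv σ z
  constructor
  · refine ⟨?_, ?_, ?_, hζ1, ?_⟩
    · intro x y
      rw [hf x y, hf y x, ← htr (x * σ y), map_mul, hσ2, mul_comm]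
    · intro x hx
      by_contra hx0
      have h1 := hx (σ x⁻¹)
      rw [hf, hσ2, mul_inv_cancel₀ hx0] at h1
      have : Algebra.trace ℚ_[ℓ] M 1 = (Module.finrank ℚ_[ℓ] M : ℚ_[ℓ]) := by
        rw [← map_one (algebraMap ℚ_[ℓ] M), Algebra.trace_algebraMap]
        simp
      rw [this] at h1
      have hpos : 0 < Module.finrank ℚ_[ℓ] M := Module.finrank_pos
      exact (Nat.cast_ne_zero.mpr hpos.ne' : (Module.finrank ℚ_[ℓ] M : ℚ_[ℓ]) ≠ 0) h1
    · intro x y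
      rw [hf, hf]
      congr 1
      rw [map_mul, hσ]
      field_simp
    · intro U hU
      by_cases hbot : U = ⊥
      · exact Or.inl hbot
      right
      obtain ⟨x, hxU, hx0⟩ := Submodule.exists_mem_ne_zero_of_ne_bot hbot
      have hstab : ∀ c ∈ Algebra.adjoin ℚ_[ℓ] {ζ}, ∀ v ∈ U, c * v ∈ U := by
        intro c hc
        induction hc using Algebra.adjoin_induction with
        | mem z hz => rcases hz with rfl; exact fun v hv => hU v hv
        | algebraMap r => intro v hv
                          rw [← Algebra.smul_def]
                          exact U.smul_mem r hv
        | add a b _ _ ha hb => intro v hv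
                               rw [add_mul]
                               exact U.add_mem (ha v hv) (hb v hv)
        | mul a b _ _ ha hb => intro v hv
                               rw [mul_assoc]
                               exact ha _ (hb v hv)
      apply eq_top_iff.mpr
      intro m _
      have hmem : m * x⁻¹ ∈ Algebra.adjoin ℚ_[ℓ] {ζ} := hM ▸ Algebra.mem_top
      have := hstab _ hmem x hxU
      rwa [mul_assoc, inv_mul_cancel₀ hx0, mul_one] at this
  · rintro ⟨T, hT, hFG, hspanT, f', hsym, hinv, hbijA, hbijB⟩
    haveI : CharZero M := charZero_of_injective_algebraMap (algebraMap ℚ_[ℓ] M).injective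
    have hℓM : (ℓ : M) ≠ 0 := Nat.cast_ne_zero.mpr hprime.ne_zero
    have hℓ3 : 3 ≤ ℓ := by
      have h2 : ℓ % 2 = 1 := Nat.odd_iff.mp hodd
      omega
    set π : M := ζ - 1 with hπdef
    have hπ0 : π ≠ 0 := sub_ne_zero.mpr hζ1
    obtain ⟨w, hwR, v, hvR, hπℓ, hwv⟩ := aux_unit hodd hζ
    rw [← hπdef] at hπℓ
    -- multiplier closure: elements of ℤ[ζ] preserve T
    have hRT : ∀ r ∈ Subring.closure ({ζ} : Set M), ∀ t ∈ T, r * t ∈ T := by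
      intro r hr
      induction hr using Subring.closure_induction with
      | mem z hz => rcases hz with rfl; exact fun t ht => hT t ht
      | zero => intro t _; rw [zero_mul]; exact T.zero_mem
      | one => intro t ht; rw [one_mul]; exact ht
      | add a b _ _ ha hb => intro t ht; rw [add_mul]; exact T.add_mem (ha t ht) (hb t ht)
      | neg a _ ha => intro t ht; rw [neg_mul]; exact T.neg_mem (ha t ht)
      | mul a b _ _ ha hb => intro t ht; rw [mul_assoc]; exact ha _ (hb t ht)
    have hζR : ζ ∈ Subring.closure ({ζ} : Set M) := Subring.subset_closure rfl
    have hπR : π ∈ Subring.closure ({ζ} : Set M) := sub_mem hζR (one_mem _)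
    have hℓsmul : ∀ m : M, (ℓ : ℤ_[ℓ]) • m = (ℓ : M) * m := by
      intro m
      rw [Nat.cast_smul_eq_nsmul, nsmul_eq_mul]
    -- ℓ = π^{ℓ-1} * v
    have hℓπ : (ℓ : M) = π ^ (ℓ - 1) * v := by
      have : (ℓ : M) * (w * v) = (ℓ : M) * 1 := by rw [hwv]
      calc (ℓ : M) = (ℓ : M) * (w * v) := by rw [hwv, mul_one]
      _ = ((ℓ : M) * w) * v := by ring
      _ = π ^ (ℓ - 1) * v := by rw [← hπℓ]
    -- ℓ = π * m₁
    have hm₁ : ∃ m ∈ Subring.closure ({ζ} : Set M), (ℓ : M) = π * m := by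
      refine ⟨π ^ (ℓ - 2) * v, mul_mem (pow_mem hπR _) hvR, ?_⟩
      rw [hℓπ, ← mul_assoc, ← pow_succ']
      congr 2
      omega
    -- adjoint of multiplication by ζ
    have hτmem : ∀ y : T, ζ ^ (ℓ - 1) * (y : M) ∈ T :=
      fun y => hRT _ (pow_mem hζR _) _ y.2
    have hadj : ∀ x y : T,
        f' ⟨ζ * (x : M), hT x x.2⟩ y = f' x ⟨ζ ^ (ℓ - 1) * (y : M), hτmem y⟩ := by
      intro x y
      have h1 := hinv x ⟨ζ ^ (ℓ - 1) * (y : M), hτmem y⟩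
      have h2 : (⟨ζ * (ζ ^ (ℓ - 1) * (y : M)), hT _ (hτmem y)⟩ : T) = y := by
        apply Subtype.ext
        show ζ * (ζ ^ (ℓ - 1) * (y : M)) = y
        rw [← mul_assoc, ← pow_succ']
        have : ℓ - 1 + 1 = ℓ := by omega
        rw [this, hζℓ, one_mul]
      rwa [h2] at h1
    -- adjoint of multiplication by π
    have hπTmem : ∀ (r : M), r ∈ Subring.closure ({ζ} : Set M) → ∀ y : T, r * (y : M) ∈ T :=
      fun r hr y => hRT r hr _ y.2
    have hτ1R : (ζ ^ (ℓ - 1) - 1) ∈ Subring.closure ({ζ} : Set M) :=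
      sub_mem (pow_mem hζR _) (one_mem _)
    have hadj1 : ∀ (x y : T) (hx' : π * (x : M) ∈ T) (hy' : (ζ ^ (ℓ - 1) - 1) * (y : M) ∈ T),
        f' ⟨π * (x : M), hx'⟩ y = f' x ⟨(ζ ^ (ℓ - 1) - 1) * (y : M), hy'⟩ := by
      intro x y hx' hy'
      have e1 : (⟨π * (x : M), hx'⟩ : T) = ⟨ζ * (x : M), hT x x.2⟩ - x := by
        apply Subtype.ext
        show π * (x : M) = ζ * (x : M) - (x : M)
        rw [hπdef]; ring
      have e2 : (⟨(ζ ^ (ℓ - 1) - 1) * (y : M), hy'⟩ : T)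
          = ⟨ζ ^ (ℓ - 1) * (y : M), hτmem y⟩ - y := by
        apply Subtype.ext
        show (ζ ^ (ℓ - 1) - 1) * (y : M) = ζ ^ (ℓ - 1) * (y : M) - (y : M)
        ring
      rw [e1, e2, map_sub, LinearMap.sub_apply, map_sub, hadj x y]
    -- iterated adjoint
    have hadjk : ∀ (k : ℕ) (x y : T) (hx' : π ^ k * (x : M) ∈ T)
        (hy' : (ζ ^ (ℓ - 1) - 1) ^ k * (y : M) ∈ T),
        f' ⟨π ^ k * (x : M), hx'⟩ y = f' x ⟨(ζ ^ (ℓ - 1) - 1) ^ k * (y : M), hy'⟩ := by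
      intro k
      induction k with
      | zero =>
        intro x y hx' hy'
        have e1 : (⟨π ^ 0 * (x : M), hx'⟩ : T) = x := Subtype.ext (by simp)
        have e2 : (⟨(ζ ^ (ℓ - 1) - 1) ^ 0 * (y : M), hy'⟩ : T) = y := Subtype.ext (by simp)
        rw [e1, e2]
      | succ k ih =>
        intro x y hx' hy'
        have hπx : π * (x : M) ∈ T := hπTmem π hπR x
        have e1 : (⟨π ^ (k + 1) * (x : M), hx'⟩ : T)
            = ⟨π ^ k * ((⟨π * (x : M), hπx⟩ : T) : M), hπTmem _ (pow_mem hπR k) _⟩ := by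
          apply Subtype.ext
          show π ^ (k + 1) * (x : M) = π ^ k * (π * (x : M))
          rw [← mul_assoc, ← pow_succ]
        have hτky : (ζ ^ (ℓ - 1) - 1) ^ k * (y : M) ∈ T := hπTmem _ (pow_mem hτ1R k) y
        rw [e1, ih ⟨π * (x : M), hπx⟩ y _ hτky]
        have := hadj1 x ⟨(ζ ^ (ℓ - 1) - 1) ^ k * (y : M), hτky⟩
          (hπTmem π hπR x) (hπTmem _ hτ1R _)
        rw [this]
        have e3 : (⟨(ζ ^ (ℓ - 1) - 1) * ((ζ ^ (ℓ - 1) - 1) ^ k * (y : M)),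
            hπTmem _ hτ1R ⟨_, hτky⟩⟩ : T)
            = ⟨(ζ ^ (ℓ - 1) - 1) ^ (k + 1) * (y : M), hy'⟩ := by
          apply Subtype.ext
          show (ζ ^ (ℓ - 1) - 1) * ((ζ ^ (ℓ - 1) - 1) ^ k * (y : M))
              = (ζ ^ (ℓ - 1) - 1) ^ (k + 1) * (y : M)
          rw [← mul_assoc, ← pow_succ']
        rw [e3]
    -- (τ - 1)^{ℓ-2} = -(ζ^2 π^{ℓ-2})
    have hodd2 : Odd (ℓ - 2) := by
      obtain ⟨k, hk⟩ := hodd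
      exact ⟨k - 1, by omega⟩
    have htau : (ζ ^ (ℓ - 1) - 1) ^ (ℓ - 2) = -(ζ ^ 2 * π ^ (ℓ - 2)) := by
      have h1 : ζ ^ (ℓ - 1) - 1 = -(ζ ^ (ℓ - 1)) * π := by
        rw [hπdef]
        have : ζ ^ (ℓ - 1) * ζ = 1 := by
          rw [← pow_succ]
          have : ℓ - 1 + 1 = ℓ := by omega
          rw [this, hζℓ]
        linear_combination this
      rw [h1, mul_pow, neg_pow, hodd2.neg_one_pow, ← pow_mul]
      have h2 : (ℓ - 1) * (ℓ - 2) = ℓ * (ℓ - 3) + 2 := by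
        obtain ⟨m, rfl⟩ := Nat.exists_eq_add_of_le hℓ3
        have e1 : 3 + m - 1 = m + 2 := by omega
        have e2 : 3 + m - 2 = m + 1 := by omega
        have e3 : 3 + m - 3 = m := by omega
        rw [e1, e2, e3]
        ring
      rw [h2, pow_add, pow_mul, hζℓ, one_pow, one_mul]
      ring
    -- the key congruence f'(π^{ℓ-2} x, y) ≡ -f'(x, π^{ℓ-2} y)  mod ℓ
    have hπk2R : π ^ (ℓ - 2) ∈ Subring.closure ({ζ} : Set M) := pow_mem hπR _
    have hkey : ∀ (x y : T), ∃ r : ℤ_[ℓ],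
        f' ⟨π ^ (ℓ - 2) * (x : M), hπTmem _ hπk2R x⟩ y
          = -f' x ⟨π ^ (ℓ - 2) * (y : M), hπTmem _ hπk2R y⟩ + ℓ * r := by
      intro x y
      have h0 := hadjk (ℓ - 2) x y (hπTmem _ hπk2R x) (hπTmem _ (pow_mem hτ1R _) y)
      -- decompose (τ-1)^{ℓ-2} y
      have hbmem : (ζ + 1) * (w * (y : M)) ∈ T :=
        hRT _ (add_mem hζR (one_mem _)) _ (hRT _ hwR _ y.2)
      have e1 : (⟨(ζ ^ (ℓ - 1) - 1) ^ (ℓ - 2) * (y : M), hπTmem _ (pow_mem hτ1R _) y⟩ : T)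
          = -(⟨π ^ (ℓ - 2) * (y : M), hπTmem _ hπk2R y⟩
              + (ℓ : ℤ_[ℓ]) • ⟨(ζ + 1) * (w * (y : M)), hbmem⟩) := by
        apply Subtype.ext
        show (ζ ^ (ℓ - 1) - 1) ^ (ℓ - 2) * (y : M)
            = -(π ^ (ℓ - 2) * (y : M) + (ℓ : ℤ_[ℓ]) • ((ζ + 1) * (w * (y : M))))
        rw [htau, hℓsmul]
        have h3 : (ζ:M) ^ 2 * π ^ (ℓ - 2) = π ^ (ℓ - 2) + (ζ + 1) * ((ℓ:M) * w) := by
          rw [← hπℓ]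
          have h4 : π ^ (ℓ - 1) = π * π ^ (ℓ - 2) := by
            rw [← pow_succ']
            congr 1
            omega
          rw [h4, hπdef]
          ring
        calc -(ζ ^ 2 * π ^ (ℓ - 2)) * (y:M)
            = -((π ^ (ℓ - 2) + (ζ + 1) * ((ℓ:M) * w)) * (y:M)) := by rw [← h3]; ring
        _ = -(π ^ (ℓ - 2) * (y:M) + (ℓ : M) * ((ζ + 1) * (w * (y:M)))) := by ring
      rw [e1, map_neg, map_add, map_smul] at h0
      refine ⟨-f' x ⟨(ζ + 1) * (w * (y : M)), hbmem⟩, ?_⟩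
      rw [h0, smul_eq_mul]
      ring
    -- there is x₀ ∈ T with π^{ℓ-2} x₀ ∉ ℓ T
    have hstep6 : ∃ x₀ : T, ∀ s ∈ T, π ^ (ℓ - 2) * (x₀ : M) ≠ (ℓ : M) * s := by
      by_contra hcon
      push_neg at hcon
      -- every t ∈ T satisfies π^{ℓ-2} t ∈ ℓ T
      have hstep : ∀ t ∈ T, ∃ s ∈ T, π ^ (ℓ - 2) * t = (ℓ : M) * s := by
        intro t ht
        obtain ⟨s, hs, heq⟩ := hcon ⟨t, ht⟩
        exact ⟨s, hs, heq⟩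
      have hiter : ∀ (k : ℕ), ∀ t ∈ T, ∃ s ∈ T, π ^ ((ℓ - 2) * k) * t = (ℓ : M) ^ k * s := by
        intro k
        induction k with
        | zero => intro t ht; exact ⟨t, ht, by simp⟩
        | succ k ih =>
          intro t ht
          obtain ⟨s, hs, heq⟩ := ih t ht
          obtain ⟨s', hs', heq'⟩ := hstep s hs
          refine ⟨s', hs', ?_⟩
          calc π ^ ((ℓ - 2) * (k + 1)) * t = π ^ (ℓ - 2) * (π ^ ((ℓ - 2) * k) * t) := by
                rw [← mul_assoc, ← pow_add]
                congr 2
                ring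
          _ = π ^ (ℓ - 2) * ((ℓ : M) ^ k * s) := by rw [heq]
          _ = (ℓ : M) ^ k * (π ^ (ℓ - 2) * s) := by ring
          _ = (ℓ : M) ^ k * ((ℓ : M) * s') := by rw [heq']
          _ = (ℓ : M) ^ (k + 1) * s' := by ring
      -- conclude T ⊆ ℓ T
      have hsub : ∀ t ∈ T, ∃ s ∈ T, t = (ℓ : ℤ_[ℓ]) • s := by
        intro t ht
        obtain ⟨s, hs, heq⟩ := hiter (ℓ - 1) t ht
        have h1 : π ^ ((ℓ - 2) * (ℓ - 1)) = (ℓ : M) ^ (ℓ - 2) * w ^ (ℓ - 2) := by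
          rw [mul_comm (ℓ - 2), pow_mul, hπℓ, mul_pow]
        have h2 : (ℓ : M) ^ (ℓ - 1) = (ℓ : M) ^ (ℓ - 2) * (ℓ : M) := by
          rw [← pow_succ]
          congr 1
          omega
        rw [h1, h2] at heq
        have h3 : w ^ (ℓ - 2) * t = (ℓ : M) * s := by
          apply mul_left_cancel₀ (pow_ne_zero (ℓ - 2) hℓM)
          calc (ℓ:M) ^ (ℓ-2) * (w ^ (ℓ-2) * t) = (ℓ:M) ^ (ℓ-2) * w ^ (ℓ-2) * t := by ring
          _ = (ℓ:M) ^ (ℓ-2) * (ℓ:M) * s := heq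
          _ = (ℓ:M) ^ (ℓ-2) * ((ℓ:M) * s) := by ring
        refine ⟨v ^ (ℓ - 2) * s, hRT _ (pow_mem hvR _) s hs, ?_⟩
        have h4 : (w * v) ^ (ℓ - 2) = 1 := by rw [hwv, one_pow]
        calc t = (w * v) ^ (ℓ - 2) * t := by rw [h4, one_mul]
        _ = v ^ (ℓ - 2) * (w ^ (ℓ - 2) * t) := by rw [mul_pow]; ring
        _ = v ^ (ℓ - 2) * ((ℓ : M) * s) := by rw [h3]
        _ = (ℓ : M) * (v ^ (ℓ - 2) * s) := by ring
        _ = (ℓ : ℤ_[ℓ]) • (v ^ (ℓ - 2) * s) := (hℓsmul _).symm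
      -- Nakayama
      have hTbot : T = ⊥ := by
        apply Submodule.eq_bot_of_le_smul_of_le_jacobson_bot (Ideal.span {(ℓ : ℤ_[ℓ])}) T hFG
        · intro t ht
          obtain ⟨s, hs, heq⟩ := hsub t ht
          rw [heq]
          exact Submodule.smul_mem_smul (Ideal.mem_span_singleton_self _) hs
        · rw [IsLocalRing.jacobson_eq_maximalIdeal ⊥ bot_ne_top]
          rw [Ideal.span_le]
          intro x hx
          rcases hx with rfl
          rw [SetLike.mem_coe, IsLocalRing.mem_maximalIdeal, mem_nonunits_iff,
            PadicInt.isUnit_iff]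
          intro h1
          have := PadicInt.norm_p (p := ℓ)
          rw [h1] at this
          have h2 : (1:ℝ) < (ℓ:ℝ) := by exact_mod_cast hℓ1
          have h3 : (0:ℝ) < (ℓ:ℝ) := by positivity
          rw [eq_comm, inv_eq_one] at this
          rw [this] at h2
          exact lt_irrefl _ h2
      rw [hTbot] at hspanT
      have h1 : (1 : M) ∈ Submodule.span ℚ_[ℓ] ((⊥ : Submodule ℤ_[ℓ] M) : Set M) := by
        rw [hspanT]; trivial
      simp only [Submodule.bot_coe, Submodule.span_singleton_eq_bot.mpr rfl,
        Submodule.mem_bot] at h1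
      exact one_ne_zero h1
    obtain ⟨x₀, hx₀⟩ := hstep6
    -- x₀ ∉ π T
    have hx₀π : ∀ s ∈ T, (x₀ : M) ≠ π * s := by
      intro s hs heq
      apply hx₀ (w * s) (hRT _ hwR s hs)
      calc π ^ (ℓ - 2) * (x₀ : M) = π ^ (ℓ - 2) * (π * s) := by rw [heq]
      _ = π ^ (ℓ - 1) * s := by
          rw [← mul_assoc, ← pow_succ]
          congr 2
          omega
      _ = (ℓ : M) * (w * s) := by rw [hπℓ]; ring
    -- scalar coherence
    have hzsmul : ∀ (z : ℤ_[ℓ]) (m : M), z • m = ((z : ℚ_[ℓ])) • m := by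
      intro z m
      rw [← PadicInt.algebraMap_apply, algebraMap_smul]
    have hswap : ∀ (c : ℤ_[ℓ]) (q m : M), c • (q * m) = q * (c • m) := by
      intro c q m
      rw [hzsmul, hzsmul, mul_smul_comm]
    have hnonunit : ∀ c : ℤ_[ℓ], ¬IsUnit c → ∃ c₂ : ℤ_[ℓ], c = (ℓ : ℤ_[ℓ]) * c₂ := by
      intro c hc
      have h1 : ‖c‖ < 1 :=
        lt_of_le_of_ne (PadicInt.norm_le_one c) (fun h => hc (PadicInt.isUnit_iff.mpr h))
      exact (PadicInt.norm_lt_one_iff_dvd c).mp h1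
    have hfr : Module.finrank ℚ_[ℓ] M ≤ ℓ := aux_finrank hprime.pos hζℓ hM
    set n : ℕ := ℓ - 1 with hn
    -- every z ∈ T is congruent to a multiple of x₀ modulo π T
    have hcyc : ∀ z : T, ∃ (b : ℤ_[ℓ]) (s : M), s ∈ T ∧ (z : M) = b • (x₀ : M) + π * s := by
      intro z
      set V : Fin n ⊕ Fin n → M :=
        Sum.elim (fun i => π ^ (i : ℕ) * (x₀ : M)) (fun i => π ^ (i : ℕ) * (z : M)) with hV
      have hdep : ¬ LinearIndependent ℚ_[ℓ] V := by
        intro h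
        have hcard := h.fintype_card_le_finrank
        rw [Fintype.card_sum, Fintype.card_fin] at hcard
        omega
      obtain ⟨g, hgsum, i₀, hgi₀⟩ := Fintype.not_linearIndependent_iff.mp hdep
      obtain ⟨k₀, -, hk₀⟩ := Finset.exists_max_image Finset.univ (fun k => ‖g k‖)
        ⟨i₀, Finset.mem_univ _⟩
      have hgk₀ : g k₀ ≠ 0 := by
        intro h0
        apply hgi₀
        have h2 := hk₀ i₀ (Finset.mem_univ _)
        rw [h0, norm_zero] at h2
        exact norm_le_zero_iff.mp h2
      have hnorm : ∀ k, ‖g k / g k₀‖ ≤ 1 := by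
        intro k
        rw [norm_div]
        exact div_le_one_of_le₀ (hk₀ k (Finset.mem_univ _)) (norm_nonneg _)
      set A : Fin n ⊕ Fin n → ℤ_[ℓ] := fun k => ⟨g k / g k₀, hnorm k⟩ with hA
      have hAk₀ : A k₀ = 1 := by
        apply Subtype.ext
        show g k₀ / g k₀ = ((1 : ℤ_[ℓ]) : ℚ_[ℓ])
        rw [div_self hgk₀]
        rfl
      have hAsum : ∑ k, A k • V k = 0 := by
        have h3 : ∀ k, A k • V k = (g k₀)⁻¹ • (g k • V k) := by
          intro k
          rw [hzsmul]
          show (g k / g k₀) • V k = _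
          rw [div_eq_inv_mul, mul_comm, mul_smul]
          rw [smul_comm]
        rw [Finset.sum_congr rfl (fun k _ => h3 k), ← Finset.smul_sum, hgsum, smul_zero]
      set a : Fin n → ℤ_[ℓ] := fun i => A (Sum.inl i) with ha
      set b : Fin n → ℤ_[ℓ] := fun i => A (Sum.inr i) with hb
      set u : Fin n → M := fun i => a i • (x₀ : M) + b i • (z : M) with hu
      have huT : ∀ i, u i ∈ T := fun i => T.add_mem (T.smul_mem _ x₀.2) (T.smul_mem _ z.2)
      have husum : ∑ i : Fin n, π ^ (i : ℕ) * u i = 0 := by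
        rw [← hAsum, Fintype.sum_sum_type, ← Finset.sum_add_distrib]
        apply Finset.sum_congr rfl
        intro i _
        show π ^ (i : ℕ) * (a i • (x₀ : M) + b i • (z : M))
            = A (Sum.inl i) • V (Sum.inl i) + A (Sum.inr i) • V (Sum.inr i)
        have e1 : V (Sum.inl i) = π ^ (i : ℕ) * (x₀ : M) := rfl
        have e2 : V (Sum.inr i) = π ^ (i : ℕ) * (z : M) := rfl
        rw [e1, e2, hswap, hswap, mul_add]
      -- the minimal index carrying a unit coefficient
      have hJne : ∃ i : Fin n, IsUnit (a i) ∨ IsUnit (b i) := by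
        rcases k₀ with i | i
        · exact ⟨i, Or.inl (by show IsUnit (A (Sum.inl i)); rw [hAk₀]; exact isUnit_one)⟩
        · exact ⟨i, Or.inr (by show IsUnit (A (Sum.inr i)); rw [hAk₀]; exact isUnit_one)⟩
      set J : Finset (Fin n) := Finset.univ.filter (fun i => IsUnit (a i) ∨ IsUnit (b i)) with hJ
      have hJne' : J.Nonempty :=
        ⟨hJne.choose, Finset.mem_filter.mpr ⟨Finset.mem_univ _, hJne.choose_spec⟩⟩
      set j : Fin n := J.min' hJne' with hj
      have hjJ : j ∈ J := J.min'_mem hJne'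
      have hjunit : IsUnit (a j) ∨ IsUnit (b j) := (Finset.mem_filter.mp hjJ).2
      have hjmin : ∀ i : Fin n, i < j → ¬IsUnit (a i) ∧ ¬IsUnit (b i) := by
        intro i hij
        by_contra hcon2
        have h4 : i ∈ J := by
          rw [hJ, Finset.mem_filter]
          refine ⟨Finset.mem_univ _, ?_⟩
          tauto
        exact absurd (J.min'_le i h4) (not_le.mpr hij)
      have hjn : (j : ℕ) < n := j.isLt
      -- each other term lies in π^{j+1} T
      have hterm : ∀ i : Fin n, i ≠ j →
          ∃ s, s ∈ T ∧ π ^ (i : ℕ) * u i = π ^ ((j : ℕ) + 1) * s := by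
        intro i hij
        rcases lt_or_gt_of_ne hij with hlt | hgt
        · -- i < j : both coefficients divisible by ℓ
          obtain ⟨ha2, hb2⟩ := hjmin i hlt
          obtain ⟨a₂, ha₂⟩ := hnonunit _ ha2
          obtain ⟨b₂, hb₂⟩ := hnonunit _ hb2
          set X : M := a₂ • (x₀ : M) + b₂ • (z : M) with hX
          have hXT : X ∈ T := T.add_mem (T.smul_mem _ x₀.2) (T.smul_mem _ z.2)
          have hu2 : u i = (ℓ : M) * X := by
            show a i • (x₀ : M) + b i • (z : M) = (ℓ : M) * X
            rw [ha₂, hb₂, mul_smul, mul_smul, hℓsmul, hℓsmul, hX, mul_add]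
          have hilt : (i : ℕ) < (j : ℕ) := hlt
          refine ⟨π ^ ((i : ℕ) + ℓ - 2 - (j : ℕ)) * (v * X),
            hRT _ (pow_mem hπR _) _ (hRT _ hvR _ hXT), ?_⟩
          rw [hu2, hℓπ]
          calc π ^ (i : ℕ) * (π ^ (ℓ - 1) * v * X)
              = π ^ ((i : ℕ) + (ℓ - 1)) * (v * X) := by rw [pow_add]; ring
          _ = π ^ (((j : ℕ) + 1) + ((i : ℕ) + ℓ - 2 - (j : ℕ))) * (v * X) := by
              congr 2
              omega
          _ = π ^ ((j : ℕ) + 1) * (π ^ ((i : ℕ) + ℓ - 2 - (j : ℕ)) * (v * X)) := by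
              rw [pow_add]; ring
        · -- j < i
          refine ⟨π ^ ((i : ℕ) - (j : ℕ) - 1) * u i, hRT _ (pow_mem hπR _) _ (huT i), ?_⟩
          rw [← mul_assoc, ← pow_add]
          congr 2
          have : (j : ℕ) < (i : ℕ) := hgt
          omega
      -- sum the non-j terms
      obtain ⟨s, hsT, hserase⟩ : ∃ s, s ∈ T ∧
          ∑ i ∈ Finset.univ.erase j, π ^ (i : ℕ) * u i = π ^ ((j : ℕ) + 1) * s := by
        have hch := fun (i : {x // x ∈ Finset.univ.erase j}) =>
          hterm i.1 (Finset.ne_of_mem_erase i.2)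
        choose sf hsfT hsf using hch
        refine ⟨∑ i ∈ (Finset.univ.erase j).attach, sf i,
          Submodule.sum_mem T (fun i _ => hsfT i), ?_⟩
        rw [← Finset.sum_attach (Finset.univ.erase j) (fun i => π ^ (i : ℕ) * u i),
          Finset.mul_sum]
        exact Finset.sum_congr rfl (fun i _ => hsf i)
      have hj1 : π ^ (j : ℕ) * u j = π ^ ((j : ℕ) + 1) * (-s) := by
        have h0 : π ^ (j : ℕ) * u j + ∑ i ∈ Finset.univ.erase j, π ^ (i : ℕ) * u i
            = ∑ i : Fin n, π ^ (i : ℕ) * u i :=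
          Finset.add_sum_erase Finset.univ (fun i : Fin n => π ^ (i : ℕ) * u i)
            (Finset.mem_univ j)
        rw [husum, hserase] at h0
        have := eq_neg_of_add_eq_zero_left h0
        rw [this]
        ring
      have huj : u j = π * (-s) := by
        apply mul_left_cancel₀ (pow_ne_zero (j : ℕ) hπ0)
        rw [hj1, pow_succ]
        ring
      by_cases hub : IsUnit (b j)
      · obtain ⟨cu, hcu⟩ := hub
        set c : ℤ_[ℓ] := ((cu⁻¹ : Units ℤ_[ℓ]) : ℤ_[ℓ]) with hcdef
        have hc2 : c * b j = 1 := by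
          rw [← hcu, hcdef]
          exact Units.inv_mul cu
        refine ⟨-(c * a j), c • (-s), T.smul_mem _ (T.neg_mem hsT), ?_⟩
        have h6 : c • (u j) = (c * a j) • (x₀ : M) + (z : M) := by
          show c • (a j • (x₀ : M) + b j • (z : M)) = _
          rw [smul_add, smul_smul, smul_smul, hc2, one_smul]
        have h7 : c • (u j) = π * (c • (-s)) := by rw [huj, hswap]
        have h8 : (c * a j) • (x₀ : M) + (z : M) = π * (c • (-s)) := by rw [← h6, h7]
        have h9 := eq_sub_of_add_eq' h8
        rw [h9, neg_smul]
        abel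
      · have hua : IsUnit (a j) := hjunit.resolve_right hub
        obtain ⟨m₁, hm₁R, hm₁eq⟩ := hm₁
        obtain ⟨cu, hcu⟩ := hua
        set c : ℤ_[ℓ] := ((cu⁻¹ : Units ℤ_[ℓ]) : ℤ_[ℓ]) with hcdef
        have hc2 : c * a j = 1 := by
          rw [← hcu, hcdef]
          exact Units.inv_mul cu
        obtain ⟨b₂, hb₂⟩ := hnonunit _ hub
        have h8 : (b j) • (z : M) = π * (m₁ * (b₂ • (z : M))) := by
          rw [hb₂, mul_smul, hℓsmul, hm₁eq]
          ring
        have h9 : (a j) • (x₀ : M) = π * (-s - m₁ * (b₂ • (z : M))) := by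
          have h10 : a j • (x₀ : M) + b j • (z : M) = π * (-s) := huj
          have h11 := eq_sub_of_add_eq h10
          rw [h11, h8]
          ring
        have h12 : (x₀ : M) = π * (c • (-s - m₁ * (b₂ • (z : M)))) := by
          calc (x₀ : M) = (c * a j) • (x₀ : M) := by rw [hc2, one_smul]
          _ = c • (a j • (x₀ : M)) := by rw [mul_smul]
          _ = c • (π * (-s - m₁ * (b₂ • (z : M)))) := by rw [h9]
          _ = π * (c • (-s - m₁ * (b₂ • (z : M)))) := hswap _ _ _
        exact absurd h12 (hx₀π _ (T.smul_mem _ (T.sub_mem (T.neg_mem hsT)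
          (hRT _ hm₁R _ (T.smul_mem _ z.2)))) )
    -- dividing by 2 modulo ℓ
    have hdvd2 : ∀ r : ℤ_[ℓ], (∃ q, 2 * r = (ℓ : ℤ_[ℓ]) * q) → ∃ q, r = (ℓ : ℤ_[ℓ]) * q := by
      intro r ⟨q, hq⟩
      have hcop : Nat.gcd 2 ℓ = 1 := Nat.coprime_two_left.mpr hodd
      have hbez := Int.gcd_eq_gcd_ab 2 ℓ
      rw [show Int.gcd 2 ℓ = 1 by rw [Int.gcd]; simp [hcop]] at hbez
      have hbez2 : (1 : ℤ_[ℓ]) = 2 * ((Int.gcdA 2 ℓ : ℤ_[ℓ])) + (ℓ : ℤ_[ℓ]) * (Int.gcdB 2 ℓ : ℤ_[ℓ]) := by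
        have := congrArg (fun z : ℤ => (z : ℤ_[ℓ])) hbez
        push_cast at this
        exact this
      refine ⟨(Int.gcdA 2 ℓ : ℤ_[ℓ]) * q + (Int.gcdB 2 ℓ : ℤ_[ℓ]) * r, ?_⟩
      calc r = 1 * r := (one_mul r).symm
      _ = (2 * (Int.gcdA 2 ℓ : ℤ_[ℓ]) + (ℓ : ℤ_[ℓ]) * (Int.gcdB 2 ℓ : ℤ_[ℓ])) * r := by
          rw [← hbez2]
      _ = (Int.gcdA 2 ℓ : ℤ_[ℓ]) * (2 * r) + (ℓ : ℤ_[ℓ]) * ((Int.gcdB 2 ℓ : ℤ_[ℓ]) * r) := by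
          ring
      _ = (ℓ : ℤ_[ℓ]) * ((Int.gcdA 2 ℓ : ℤ_[ℓ]) * q + (Int.gcdB 2 ℓ : ℤ_[ℓ]) * r) := by
          rw [hq]; ring
    -- the distinguished element t₀ = π^{ℓ-2} x₀
    set t₀ : T := ⟨π ^ (ℓ - 2) * (x₀ : M), hπTmem _ hπk2R x₀⟩ with ht₀
    have hstep8 : ∃ r, f' t₀ x₀ = (ℓ : ℤ_[ℓ]) * r := by
      obtain ⟨r, hr⟩ := hkey x₀ x₀
      apply hdvd2
      refine ⟨r, ?_⟩
      have h1 : f' x₀ ⟨π ^ (ℓ - 2) * (x₀ : M), hπTmem _ hπk2R x₀⟩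
          = f' ⟨π ^ (ℓ - 2) * (x₀ : M), hπTmem _ hπk2R x₀⟩ x₀ := hsym _ _
      rw [ht₀]
      linear_combination hr - h1
    have hstep9 : ∀ (y : M) (hy : y ∈ T), ∃ r,
        f' t₀ ⟨π * y, hπTmem _ hπR ⟨y, hy⟩⟩ = (ℓ : ℤ_[ℓ]) * r := by
      intro y hy
      obtain ⟨r, hr⟩ := hkey x₀ ⟨π * y, hπTmem _ hπR ⟨y, hy⟩⟩
      have hwy : w * y ∈ T := hRT _ hwR _ hy
      have e1 : (⟨π ^ (ℓ - 2) * (π * y), hπTmem _ hπk2R ⟨π * y, hπTmem _ hπR ⟨y, hy⟩⟩⟩ : T)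
          = (ℓ : ℤ_[ℓ]) • ⟨w * y, hwy⟩ := by
        apply Subtype.ext
        show π ^ (ℓ - 2) * (π * y) = (ℓ : ℤ_[ℓ]) • (w * y)
        rw [hℓsmul, ← mul_assoc, mul_comm (π ^ (ℓ - 2)) π, ← pow_succ']
        have e2 : ℓ - 2 + 1 = ℓ - 1 := by omega
        rw [e2, hπℓ]
        ring
      rw [e1, map_smul] at hr
      exact ⟨r - f' x₀ ⟨w * y, hwy⟩, by rw [hr, smul_eq_mul]; ring⟩
    have hstep10 : ∀ y : T, ∃ r, f' t₀ y = (ℓ : ℤ_[ℓ]) * r := by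
      intro y
      obtain ⟨b, s, hsT, hdecomp⟩ := hcyc y
      have e1 : y = b • x₀ + ⟨π * s, hπTmem _ hπR ⟨s, hsT⟩⟩ := by
        apply Subtype.ext
        rw [hdecomp]
        rfl
      obtain ⟨r1, hr1⟩ := hstep8
      obtain ⟨r2, hr2⟩ := hstep9 s hsT
      refine ⟨b * r1 + r2, ?_⟩
      rw [e1, map_add, map_smul, hr1, hr2, smul_eq_mul]
      ring
    -- construct φ with ℓ · φ = f' t₀ and derive the contradiction
    choose rr hrr using hstep10
    have hℓz0 : (ℓ : ℤ_[ℓ]) ≠ 0 := Nat.cast_ne_zero.mpr hprime.ne_zero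
    set φ : T →ₗ[ℤ_[ℓ]] ℤ_[ℓ] :=
      { toFun := rr
        map_add' := by
          intro y z
          apply mul_left_cancel₀ hℓz0
          rw [mul_add, ← hrr, ← hrr, ← hrr, map_add]
        map_smul' := by
          intro c y
          simp only [RingHom.id_apply]
          apply mul_left_cancel₀ hℓz0
          rw [← hrr, map_smul, smul_eq_mul, smul_eq_mul, hrr]
          ring } with hφ
    obtain ⟨S, hS⟩ := hbijA.2 φ
    have hft₀ : f' t₀ = f' ((ℓ : ℤ_[ℓ]) • S) := by
      apply LinearMap.ext
      intro y
      rw [map_smul, LinearMap.smul_apply, hS, smul_eq_mul]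
      rw [hrr y]
      rfl
    have ht₀S : t₀ = (ℓ : ℤ_[ℓ]) • S := hbijA.1 hft₀
    apply hx₀ (S : M) S.2
    have := congrArg (Subtype.val) ht₀S
    rw [ht₀] at this
    calc π ^ (ℓ - 2) * (x₀ : M) = ((ℓ : ℤ_[ℓ]) • S : T) := this
    _ = (ℓ : ℤ_[ℓ]) • (S : M) := rfl
    _ = (ℓ : M) * (S : M) := hℓsmul _
end

section
/- Let ℓ be an odd prime different from a prime p, let q = p if p is odd and q = 4 if p = 2, let K = Q_ℓ(ζ_q), and let W = K². Let N ⊆ SL₂(K) be the subgroup generated by diag(ζ_q, ζ_q^{-1}) and [[0,−1],[1,0]]. Then N is isomorphic to the generalized quaternion group Q_p of order 4p, and W is an absolutely simple faithful symplectic K[N]-module (with respect to the standard alternating form on K²). Moreover G = N × μ_ℓ is a group of inertia type for p. -/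
/-!
Put `D = diag(ζ, ζ⁻¹)`, `J = [[0, -1], [1, 0]]`, and `z = ζ` for `p = 2`, `z = -ζ` for odd
`p`. Then `z` is a primitive `2p`-th root of unity and, since `J² = -1`, `A = diag(z, z⁻¹)` and
`J` generate the same group `N` as `D` and `J`. They satisfy the relations of `Q_p`
(`A^{2p} = 1`, `J² = A^p`, `AJ = JA⁻¹`), and the induced map `Q_p → GL₂(K)` is injective
because `A` has order `2p` while `J` is not diagonal. Both generators have determinant one, so
`N` preserves the alternating form. Since `ζ ≠ ζ⁻¹`, the only `D`-stable lines are the two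
axes, which `J` swaps; this gives simplicity, and likewise forces an endomorphism commuting
with `N` to be scalar. Finally `N × μ_ℓ` maps onto a cyclic group of order prime to `p` with
`p`-group kernel: onto `μ_ℓ` when `p = 2`, and onto `ℤ/4 × μ_ℓ` through `Q_p/⟨a²⟩ ≅ ℤ/4`
when `p` is odd.
-/

open Matrix

theorem IsPrimitiveRoot.neg_of_odd {R : Type*} [CommRing R] [Nontrivial R]
    (hR : ringChar R ≠ 2) {ζ : R} {n : ℕ} (hζ : IsPrimitiveRoot ζ n) (hn : Odd n) :
    IsPrimitiveRoot (-ζ) (2 * n) := by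
  convert IsPrimitiveRoot.orderOf (-ζ)
  rw [neg_eq_neg_one_mul, (Commute.all _ _).orderOf_mul_eq_mul_orderOf_of_coprime,
    orderOf_neg_one, if_neg hR, ← hζ.eq_orderOf]
  rw [orderOf_neg_one, if_neg hR, ← hζ.eq_orderOf]
  exact Nat.coprime_two_left.mpr hn

theorem IsPrimitiveRoot.ne_inv {G : Type*} [CommGroup G] {ζ : G} {k : ℕ}
    (hζ : IsPrimitiveRoot ζ k) (hk : 2 < k) : ζ ≠ ζ⁻¹ := fun h ↦ by
  have := Nat.le_of_dvd two_pos <| hζ.dvd_of_pow_eq_one 2 <| by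
    rw [sq, mul_eq_one_iff_eq_inv]
    exact h
  omega

section ZModPow

variable {G : Type*} [Group G] {n : ℕ} [NeZero n] {A : G}

lemma pow_zmod_val_add (hA : A ^ n = 1) (i j : ZMod n) :
    A ^ (i + j).val = A ^ i.val * A ^ j.val := by
  rw [ZMod.val_add, ← pow_eq_pow_mod _ hA, pow_add]

omit [NeZero n] in
lemma pow_zmod_val_natCast (hA : A ^ n = 1) (k : ℕ) : A ^ (k : ZMod n).val = A ^ k := by
  rw [ZMod.val_natCast, ← pow_eq_pow_mod _ hA]

lemma pow_zmod_val_neg (hA : A ^ n = 1) (i : ZMod n) : A ^ (-i).val = (A ^ i.val)⁻¹ := by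
  rw [eq_inv_iff_mul_eq_one, ← pow_zmod_val_add hA, neg_add_cancel, ZMod.val_zero, pow_zero]

end ZModPow

namespace QuaternionGroup

variable {G : Type*} [Group G] {n : ℕ} [NeZero n]

def lift (A S : G) (hA : A ^ (2 * n) = 1) (hS : S * S = A ^ n) (hAS : A * S = S * A⁻¹) :
    QuaternionGroup n →* G where
  toFun
    | a i => A ^ i.val
    | xa i => S * A ^ i.val
  map_one' := show A ^ (0 : ZMod (2 * n)).val = 1 by rw [ZMod.val_zero, pow_zero]
  map_mul' := by
    have hconj (k : ℕ) : A ^ k * S = S * (A ^ k)⁻¹ := by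
      rw [← inv_pow, (SemiconjBy.pow_right (a := S) hAS.symm k).eq]
    rintro (i | i) (j | j)
    · exact pow_zmod_val_add hA i j
    · simp only [a_mul_xa, sub_eq_neg_add, pow_zmod_val_add hA, pow_zmod_val_neg hA]
      rw [← mul_assoc (A ^ i.val), hconj, mul_assoc]
    · simp only [xa_mul_a, pow_zmod_val_add hA, mul_assoc]
    · rw [xa_mul_xa, add_sub_assoc, sub_eq_neg_add]
      simp only [pow_zmod_val_add hA, pow_zmod_val_neg hA,
        pow_zmod_val_natCast hA]
      rw [mul_assoc, ← mul_assoc (A ^ i.val), hconj]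
      simp only [← mul_assoc, hS]

section Lift

variable {A S : G} (hA : A ^ (2 * n) = 1) (hS : S * S = A ^ n) (hAS : A * S = S * A⁻¹)

@[simp] lemma lift_a (i : ZMod (2 * n)) : lift A S hA hS hAS (a i) = A ^ i.val := rfl

@[simp] lemma lift_xa (i : ZMod (2 * n)) : lift A S hA hS hAS (xa i) = S * A ^ i.val := rfl

lemma lift_injective (hA' : orderOf A = 2 * n) (hS' : S ∉ Subgroup.zpowers A) :
    Function.Injective (lift A S hA hS hAS) := by
  refine (injective_iff_map_eq_one _).mpr ?_
  rintro (i | i) h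
  · rw [lift_a, ← orderOf_dvd_iff_pow_eq_one, hA'] at h
    rw [Nat.eq_zero_of_dvd_of_lt h (ZMod.val_lt i) |> (ZMod.val_eq_zero i).mp, a_zero]
  · exact (hS' (eq_inv_of_mul_eq_one_left h ▸ inv_mem (Subgroup.npow_mem_zpowers A i.val))).elim

lemma range_lift : (lift A S hA hS hAS).range = Subgroup.closure {A, S} := by
  have hAmem : A ∈ Subgroup.closure {A, S} := Subgroup.subset_closure (by simp)
  have hSmem : S ∈ Subgroup.closure {A, S} := Subgroup.subset_closure (by simp)
  refine le_antisymm ?_ ((Subgroup.closure_le _).mpr ?_)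
  · rintro _ ⟨i | i, rfl⟩
    · exact pow_mem hAmem _
    · exact mul_mem hSmem (pow_mem hAmem _)
  · rintro x (rfl | rfl)
    · exact ⟨a (1 : ℕ), by rw [lift_a, pow_zmod_val_natCast hA, pow_one]⟩
    · exact ⟨xa 0, by rw [lift_xa, ZMod.val_zero, pow_zero, mul_one]⟩

end Lift

/-- For odd `n` the relations hold in `ℤ/4` with `a ↦ 2`, `x ↦ 1`, as `2n ≡ 2 (mod 4)`. -/
def toZModFour (hn : Odd n) : QuaternionGroup n →* Multiplicative (ZMod 4) :=
  have h4 : (4 : ZMod 4) = 0 := rfl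
  lift (.ofAdd 2) (.ofAdd 1)
    (by rw [← ofAdd_nsmul, ofAdd_eq_one, nsmul_eq_mul]; push_cast
        linear_combination (n : ZMod 4) * h4)
    (by obtain ⟨m, rfl⟩ := hn
        rw [← ofAdd_add, ← ofAdd_nsmul, nsmul_eq_mul]; push_cast
        congr 1; linear_combination -(m : ZMod 4) * h4)
    (by decide)

lemma toZModFour_surjective (hn : Odd n) : Function.Surjective (toZModFour hn) := by
  rw [← MonoidHom.range_eq_top, toZModFour, range_lift, eq_top_iff]
  intro y _
  rw [← ofAdd_toAdd y, ← ZMod.natCast_zmod_val (Multiplicative.toAdd y), ← nsmul_one,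
    ofAdd_nsmul]
  exact pow_mem (Subgroup.subset_closure (by simp)) _

end QuaternionGroup

namespace Matrix

variable {R : Type*} [CommRing R]

def diagUnit : Rˣ →* (Matrix (Fin 2) (Fin 2) R)ˣ where
  toFun u :=
    { val := !![(u : R), 0; 0, ↑u⁻¹]
      inv := !![↑u⁻¹, 0; 0, (u : R)]
      val_inv := by simp [one_fin_two]
      inv_val := by simp [one_fin_two] }
  map_one' := by ext i j; fin_cases i <;> fin_cases j <;> simp
  map_mul' u v := by ext i j; fin_cases i <;> fin_cases j <;> simp [mul_comm]

variable (R) in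
def jUnit : (Matrix (Fin 2) (Fin 2) R)ˣ where
  val := !![0, -1; 1, 0]
  inv := !![0, 1; -1, 0]
  val_inv := by simp [one_fin_two]
  inv_val := by simp [one_fin_two]

@[simp] lemma coe_diagUnit (u : Rˣ) :
    (diagUnit u : Matrix (Fin 2) (Fin 2) R) = !![(u : R), 0; 0, ↑u⁻¹] := rfl

@[simp] lemma coe_jUnit : (jUnit R : Matrix (Fin 2) (Fin 2) R) = !![0, -1; 1, 0] := rfl

lemma diagUnit_mulVec (u : Rˣ) (x : Fin 2 → R) :
    (diagUnit u : Matrix (Fin 2) (Fin 2) R) *ᵥ x = ![u * x 0, ↑u⁻¹ * x 1] := by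
  simp [vecHead, vecTail]

lemma jUnit_mulVec (x : Fin 2 → R) :
    (jUnit R : Matrix (Fin 2) (Fin 2) R) *ᵥ x = ![-x 1, x 0] := by
  simp [vecHead, vecTail]

lemma jUnit_mul_jUnit : jUnit R * jUnit R = diagUnit (-1) := by
  ext i j; fin_cases i <;> fin_cases j <;> simp

lemma diagUnit_mul_jUnit (u : Rˣ) : diagUnit u * jUnit R = jUnit R * (diagUnit u)⁻¹ := by
  ext i j; fin_cases i <;> fin_cases j <;> simp [← map_inv]

lemma diagUnit_injective : Function.Injective (diagUnit (R := R)) := fun u v h ↦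
  Units.ext <| by
    simpa using congr_arg (fun M : Matrix (Fin 2) (Fin 2) R ↦ M 0 0) (Units.ext_iff.mp h)

lemma jUnit_notMem_range_diagUnit [Nontrivial R] : jUnit R ∉ (diagUnit (R := R)).range := by
  rintro ⟨u, hu⟩
  simpa using congr_arg (fun M : Matrix (Fin 2) (Fin 2) R ↦ M 0 0) (Units.ext_iff.mp hu)

lemma closure_diagUnit_neg_jUnit (u : Rˣ) :
    Subgroup.closure {diagUnit (-u), jUnit R} = Subgroup.closure {diagUnit u, jUnit R} := by
  have key (v : Rˣ) :
      Subgroup.closure {diagUnit (-v), jUnit R} ≤ Subgroup.closure {diagUnit v, jUnit R} := by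
    have hv : diagUnit v ∈ Subgroup.closure {diagUnit v, jUnit R} :=
      Subgroup.subset_closure (by simp)
    have hJ : jUnit R ∈ Subgroup.closure {diagUnit v, jUnit R} :=
      Subgroup.subset_closure (by simp)
    rw [Subgroup.closure_le, Set.insert_subset_iff, Set.singleton_subset_iff]
    refine ⟨?_, hJ⟩
    rw [neg_eq_neg_one_mul, map_mul, ← jUnit_mul_jUnit]
    exact mul_mem (mul_mem hJ hJ) hv
  exact le_antisymm (key u) (by simpa using key (-u))

lemma exists_isPrimitiveRoot_two_mul_closure_eq [Nontrivial R] (hR : ringChar R ≠ 2) {p : ℕ}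
    (hp : p.Prime) {ζ : Rˣ} (hζ : IsPrimitiveRoot ζ (if p = 2 then 4 else p)) :
    ∃ z : Rˣ, IsPrimitiveRoot z (2 * p) ∧
      Subgroup.closure {diagUnit z, jUnit R} = Subgroup.closure {diagUnit ζ, jUnit R} := by
  rcases eq_or_ne p 2 with rfl | hp2
  · exact ⟨ζ, by simpa using hζ, rfl⟩
  · rw [if_neg hp2] at hζ
    refine ⟨-ζ, IsPrimitiveRoot.coe_units_iff.mp ?_, closure_diagUnit_neg_jUnit ζ⟩
    simpa using (IsPrimitiveRoot.coe_units_iff.mpr hζ).neg_of_odd hR (hp.odd_of_ne_two hp2)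

lemma det_eq_one_of_mem_closure_diagUnit_jUnit {u : Rˣ} {g : (Matrix (Fin 2) (Fin 2) R)ˣ}
    (hg : g ∈ Subgroup.closure {diagUnit u, jUnit R}) :
    (g : Matrix (Fin 2) (Fin 2) R).det = 1 := by
  have h : Subgroup.closure {diagUnit u, jUnit R} ≤
      (Units.map (detMonoidHom (n := Fin 2))).ker := by
    rw [Subgroup.closure_le, Set.insert_subset_iff, Set.singleton_subset_iff]
    constructor <;> simp [Units.ext_iff, det_fin_two]
  simpa [Units.ext_iff] using h hg

lemma mulVec_mul_mulVec_sub (M : Matrix (Fin 2) (Fin 2) R) (x y : Fin 2 → R) :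
    (M *ᵥ x) 0 * (M *ᵥ y) 1 - (M *ᵥ x) 1 * (M *ᵥ y) 0 = M.det * (x 0 * y 1 - x 1 * y 0) := by
  simp only [mulVec_fin_two, det_fin_two, Matrix.cons_val_zero, Matrix.cons_val_one]
  ring

theorem nonempty_mulEquiv_quaternionGroup [IsDomain R] {n : ℕ} [NeZero n] {z : Rˣ}
    (hz : IsPrimitiveRoot z (2 * n)) :
    Nonempty (Subgroup.closure {diagUnit z, jUnit R} ≃* QuaternionGroup n) := by
  have hzn : z ^ n = -1 := Units.ext <| by
    simpa using ((IsPrimitiveRoot.coe_units_iff.mpr hz).pow (by have := NeZero.ne n; omega)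
      (mul_comm 2 n)).eq_neg_one_of_two_right
  have horder : orderOf (diagUnit z) = 2 * n := by
    rw [orderOf_injective _ diagUnit_injective, ← hz.eq_orderOf]
  have hJ : jUnit R ∉ Subgroup.zpowers (diagUnit z) := fun h ↦ jUnit_notMem_range_diagUnit <|
    Subgroup.zpowers_le.mpr (MonoidHom.mem_range.mpr ⟨z, rfl⟩) h
  have hA : diagUnit z ^ (2 * n) = 1 := horder ▸ pow_orderOf_eq_one _
  have hS : jUnit R * jUnit R = diagUnit z ^ n := by rw [jUnit_mul_jUnit, ← map_pow, hzn]
  have hAS := diagUnit_mul_jUnit z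
  exact ⟨((MonoidHom.ofInjective (QuaternionGroup.lift_injective hA hS hAS horder hJ)).trans
    (MulEquiv.subgroupCongr (QuaternionGroup.range_lift hA hS hAS))).symm⟩

section Field

variable {K : Type*} [Field K] {u : Kˣ}

lemma eq_bot_or_eq_top_of_forall_mulVec_mem (hu : u ≠ u⁻¹) (U : Submodule K (Fin 2 → K))
    (hD : ∀ x ∈ U, (diagUnit u : Matrix (Fin 2) (Fin 2) K) *ᵥ x ∈ U)
    (hJ : ∀ x ∈ U, (jUnit K : Matrix (Fin 2) (Fin 2) K) *ᵥ x ∈ U) :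
    U = ⊥ ∨ U = ⊤ := by
  refine or_iff_not_imp_left.mpr fun hU ↦ ?_
  obtain ⟨x, hx, hx0⟩ := U.exists_mem_ne_zero_of_ne_bot hU
  have hsub (c : K) : ![(u - c) * x 0, (↑u⁻¹ - c) * x 1] ∈ U := by
    have h := sub_mem (hD x hx) (U.smul_mem c hx)
    rw [diagUnit_mulVec] at h
    convert h using 1
    ext i; fin_cases i <;> simp [sub_mul]
  have hJ' (y : Fin 2 → K) (hy : y ∈ U) : ![-y 1, y 0] ∈ U := jUnit_mulVec y ▸ hJ y hy
  have he : ![(1 : K), 0] ∈ U ↔ ![0, 1] ∈ U :=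
    ⟨fun h ↦ by simpa using hJ' _ h, fun h ↦ by simpa using neg_mem (hJ' _ h)⟩
  have hab : (u : K) - ↑u⁻¹ ≠ 0 := sub_ne_zero.mpr (Units.val_injective.ne hu)
  have he₀ : ![(1 : K), 0] ∈ U := by
    by_cases h0 : x 0 = 0
    · have h1 : x 1 ≠ 0 := fun h1 ↦ hx0 (by ext i; fin_cases i <;> simp [h0, h1])
      have hc : (↑u⁻¹ - u) * x 1 ≠ 0 := mul_ne_zero (by rwa [← neg_sub, neg_ne_zero]) h1
      refine he.mpr ((U.smul_mem_iff hc).mp ?_)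
      convert hsub u using 1
      ext i; fin_cases i <;> simp
    · have hc : ((u : K) - ↑u⁻¹) * x 0 ≠ 0 := mul_ne_zero hab h0
      refine (U.smul_mem_iff hc).mp ?_
      convert hsub ↑u⁻¹ using 1
      ext i; fin_cases i <;> simp
  refine eq_top_iff.mpr fun v _ ↦ ?_
  rw [show v = v 0 • ![1, 0] + v 1 • ![0, 1] by ext i; fin_cases i <;> simp]
  exact add_mem (U.smul_mem _ he₀) (U.smul_mem _ (he.mp he₀))

lemma exists_eq_smul_id_of_forall_mulVec_comm (hu : u ≠ u⁻¹)
    (φ : (Fin 2 → K) →ₗ[K] (Fin 2 → K))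
    (hD : ∀ x, φ ((diagUnit u : Matrix (Fin 2) (Fin 2) K) *ᵥ x) =
      (diagUnit u : Matrix (Fin 2) (Fin 2) K) *ᵥ φ x)
    (hJ : ∀ x, φ ((jUnit K : Matrix (Fin 2) (Fin 2) K) *ᵥ x) =
      (jUnit K : Matrix (Fin 2) (Fin 2) K) *ᵥ φ x) :
    ∃ c : K, φ = c • LinearMap.id := by
  set c := φ ![1, 0] 0
  have h₀ : φ ![1, 0] = ![c, 0] := by
    have h := congr_fun (hD ![1, 0]) 1
    rw [diagUnit_mulVec, diagUnit_mulVec, show ![(u : K) * ![1, 0] 0, ↑u⁻¹ * ![(1 : K), 0] 1] =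
      (u : K) • ![1, 0] by ext i; fin_cases i <;> simp, map_smul] at h
    have h1 : φ ![1, 0] 1 = 0 := by
      refine (by simpa using h : _ ∨ _).resolve_left ?_
      rw [← Units.val_inv_eq_inv_val]
      exact Units.val_injective.ne hu
    ext i; fin_cases i <;> simp [c, h1]
  have h₁ : φ ![0, 1] = ![0, c] := by
    have h := hJ ![1, 0]
    rw [jUnit_mulVec, jUnit_mulVec, h₀] at h
    simpa using h
  refine ⟨c, LinearMap.ext fun x ↦ ?_⟩
  rw [show x = x 0 • ![1, 0] + x 1 • ![0, 1] by ext i; fin_cases i <;> simp, map_add, map_smul,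
    map_smul, h₀, h₁]
  ext i; fin_cases i <;> simp [mul_comm]

end Field

end Matrix

lemma Nat.card_multiplicative_zmod (n : ℕ) : Nat.card (Multiplicative (ZMod n)) = n :=
  (Nat.card_congr Multiplicative.toAdd).trans (Nat.card_zmod n)

def IsInertiaType (p : ℕ) (G : Type*) [Group G] : Prop :=
  ∃ (H : Subgroup G) (hH : H.Normal), IsPGroup p H ∧
    (letI := hH; IsCyclic (G ⧸ H) ∧ (Nat.card (G ⧸ H)).Coprime p)

lemma IsInertiaType.of_surjective {G C : Type*} [Group G] [Group C] [Finite C] [IsCyclic C]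
    {p k : ℕ} (Φ : G →* C) (hΦ : Function.Surjective Φ)
    (hcard : Nat.card G = p ^ k * Nat.card C) (hC : (Nat.card C).Coprime p) :
    IsInertiaType p G := by
  let e := QuotientGroup.quotientKerEquivOfSurjective Φ hΦ
  refine ⟨Φ.ker, inferInstance, IsPGroup.of_card (n := k) ?_,
    isCyclic_of_surjective e.symm e.symm.surjective, Nat.card_congr e.toEquiv ▸ hC⟩
  have h := Φ.ker.card_mul_index
  rw [Subgroup.index_ker, MonoidHom.range_eq_top.mpr hΦ, Subgroup.card_top, hcard] at h
  exact Nat.eq_of_mul_eq_mul_right Nat.card_pos h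

theorem isInertiaType_prod_multiplicative_zmod {N : Type*} [Group N] {p ℓ : ℕ} (hp : p.Prime)
    (e : N ≃* QuaternionGroup p) [Fact ℓ.Prime] (hodd : Odd ℓ) (hne : ℓ ≠ p) :
    IsInertiaType p (N × Multiplicative (ZMod ℓ)) := by
  have : NeZero p := ⟨hp.ne_zero⟩
  have hN : Nat.card N = 4 * p := by
    rw [Nat.card_congr e.toEquiv, Nat.card_eq_fintype_card, QuaternionGroup.card]
  rcases hp.eq_two_or_odd' with rfl | hpodd
  · refine .of_surjective (k := 3) (MonoidHom.snd _ _) Prod.snd_surjective ?_ ?_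
    · rw [Nat.card_prod, hN, Nat.card_multiplicative_zmod]; ring
    · rwa [Nat.card_multiplicative_zmod, Nat.coprime_two_right]
  · have h4ℓ : Nat.Coprime 4 ℓ := Nat.Coprime.pow_left 2 (Nat.coprime_two_left.mpr hodd)
    have : IsCyclic (Multiplicative (ZMod 4) × Multiplicative (ZMod ℓ)) :=
      Group.isCyclic_prod_iff.mpr ⟨inferInstance, inferInstance, by
        rwa [Nat.card_multiplicative_zmod, Nat.card_multiplicative_zmod]⟩
    refine .of_surjective (k := 1)
      (((QuaternionGroup.toZModFour hpodd).comp e.toMonoidHom).prodMap (MonoidHom.id _))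
      (((QuaternionGroup.toZModFour_surjective hpodd).comp e.surjective).prodMap
        Function.surjective_id) ?_ ?_
    · rw [Nat.card_prod, Nat.card_prod, hN, Nat.card_multiplicative_zmod,
        Nat.card_multiplicative_zmod]; ring
    · rw [Nat.card_prod, Nat.card_multiplicative_zmod, Nat.card_multiplicative_zmod]
      exact Nat.Coprime.mul_left (Nat.Coprime.pow_left 2 (Nat.coprime_two_left.mpr hpodd))
        ((Nat.coprime_primes Fact.out hp).mpr hne)

theorem stmt_19_general (p ℓ q : ℕ) (hp : p.Prime) [Fact ℓ.Prime] (hodd : Odd ℓ) (hne : ℓ ≠ p)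
    (hq : q = if p = 2 then 4 else p)
    (K : Type) [Field K] [Algebra ℚ_[ℓ] K]
    (ζq : K) (hζ : IsPrimitiveRoot ζq q) :
    ∀ Nsub : Subgroup (Matrix (Fin 2) (Fin 2) K)ˣ,
      Nsub = Subgroup.closure
        {u : (Matrix (Fin 2) (Fin 2) K)ˣ |
          (u : Matrix (Fin 2) (Fin 2) K) = !![ζq, 0; 0, ζq⁻¹] ∨
          (u : Matrix (Fin 2) (Fin 2) K) = !![0, -1; 1, 0]} →
      -- `N ≅ Q_p`, the generalized quaternion group of order `4p`:
      Nonempty (Nsub ≃* QuaternionGroup p) ∧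
      -- `N` preserves the standard alternating form on `K²` (it lies in `SL₂`):
      (∀ u ∈ Nsub, ∀ x y : Fin 2 → K,
        ((u : Matrix (Fin 2) (Fin 2) K).mulVec x 0) * ((u : Matrix (Fin 2) (Fin 2) K).mulVec y 1)
          - ((u : Matrix (Fin 2) (Fin 2) K).mulVec x 1) * ((u : Matrix (Fin 2) (Fin 2) K).mulVec y 0)
          = x 0 * y 1 - x 1 * y 0) ∧
      -- `W = K²` is a faithful `N`-module:
      (∀ u ∈ Nsub, (∀ x : Fin 2 → K, (u : Matrix (Fin 2) (Fin 2) K).mulVec x = x) → u = 1) ∧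
      -- `W` is a simple `N`-module:
      (∀ U : Submodule K (Fin 2 → K),
        (∀ u ∈ Nsub, ∀ x ∈ U, (u : Matrix (Fin 2) (Fin 2) K).mulVec x ∈ U) →
        U = ⊥ ∨ U = ⊤) ∧
      -- `W` is absolutely simple: the commutant of `N` consists of scalars:
      (∀ φ : (Fin 2 → K) →ₗ[K] (Fin 2 → K),
        (∀ u ∈ Nsub, ∀ x : Fin 2 → K,
          φ ((u : Matrix (Fin 2) (Fin 2) K).mulVec x) = (u : Matrix (Fin 2) (Fin 2) K).mulVec (φ x)) →
        ∃ c : K, φ = c • LinearMap.id) ∧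
      -- `G = N × μ_ℓ` is a group of inertia type for `p`:
      (∃ (H : Subgroup (Nsub × Multiplicative (ZMod ℓ))) (hH : H.Normal),
        IsPGroup p H ∧
        (letI := hH;
          IsCyclic ((Nsub × Multiplicative (ZMod ℓ)) ⧸ H) ∧
          (Nat.card ((Nsub × Multiplicative (ZMod ℓ)) ⧸ H)).Coprime p)) := by
  intro N hN
  have : NeZero p := ⟨hp.ne_zero⟩
  have : CharZero K := charZero_of_injective_algebraMap (algebraMap ℚ_[ℓ] K).injective
  have hq2 : 2 < q := by split_ifs at hq <;> have := hp.two_le <;> omega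
  obtain ⟨ζ, rfl⟩ : ∃ ζ : Kˣ, (ζ : K) = ζq := ⟨(hζ.isUnit (by omega)).unit, rfl⟩
  replace hζ : IsPrimitiveRoot ζ q := IsPrimitiveRoot.coe_units_iff.mp hζ
  replace hN : N = Subgroup.closure {diagUnit ζ, jUnit K} := by
    rw [hN]
    congr 1
    ext u
    simp [Units.ext_iff]
  obtain ⟨z, hz, hzζ⟩ :=
    exists_isPrimitiveRoot_two_mul_closure_eq (by simp [ringChar.eq_zero]) hp (hq ▸ hζ)
  have hD : diagUnit ζ ∈ N := hN ▸ Subgroup.subset_closure (by simp)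
  have hJ : jUnit K ∈ N := hN ▸ Subgroup.subset_closure (by simp)
  obtain ⟨e⟩ : Nonempty (N ≃* QuaternionGroup p) :=
    hN ▸ hzζ ▸ nonempty_mulEquiv_quaternionGroup hz
  refine ⟨⟨e⟩, fun u hu x y ↦ ?_, fun u _ hu ↦ ?_, fun U hU ↦ ?_, fun φ hφ ↦ ?_,
    isInertiaType_prod_multiplicative_zmod hp e hodd hne⟩
  · rw [mulVec_mul_mulVec_sub, det_eq_one_of_mem_closure_diagUnit_jUnit (hN ▸ hu), one_mul]
  · exact Units.ext (toLin'.injective (LinearMap.ext fun x ↦ by simpa using hu x))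
  · exact eq_bot_or_eq_top_of_forall_mulVec_mem (hζ.ne_inv hq2) U (hU _ hD) (hU _ hJ)
  · exact exists_eq_smul_id_of_forall_mulVec_comm (hζ.ne_inv hq2) φ (hφ _ hD) (hφ _ hJ)

/-- Proposition 6.3(a): let `ℓ ≠ p` be an odd prime, `q = p` for odd `p` and `q = 4` for
`p = 2`, `K = ℚ_ℓ(ζ_q)` and `W = K²`.  Let `N ⊆ SL₂(K)` be generated by
`diag(ζ_q, ζ_q⁻¹)` and `[[0,-1],[1,0]]`.  Then `N` is isomorphic to the generalized
quaternion group `Q_p` of order `4p`, `W` is an absolutely simple faithful symplectic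
`K[N]`-module for the standard alternating form, and `G = N × μ_ℓ` is a group of inertia
type for `p`. -/
theorem stmt_19 (p ℓ q : ℕ) (hp : p.Prime) [Fact ℓ.Prime] (hodd : Odd ℓ) (hne : ℓ ≠ p)
    (hq : q = if p = 2 then 4 else p)
    (K : Type) [Field K] [Algebra ℚ_[ℓ] K]
    (ζq : K) (hζ : IsPrimitiveRoot ζq q) (hK : Algebra.adjoin ℚ_[ℓ] {ζq} = ⊤) :
    ∀ Nsub : Subgroup (Matrix (Fin 2) (Fin 2) K)ˣ,
      Nsub = Subgroup.closure
        {u : (Matrix (Fin 2) (Fin 2) K)ˣ |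
          (u : Matrix (Fin 2) (Fin 2) K) = !![ζq, 0; 0, ζq⁻¹] ∨
          (u : Matrix (Fin 2) (Fin 2) K) = !![0, -1; 1, 0]} →
      -- `N ≅ Q_p`, the generalized quaternion group of order `4p`:
      Nonempty (Nsub ≃* QuaternionGroup p) ∧
      -- `N` preserves the standard alternating form on `K²` (it lies in `SL₂`):
      (∀ u ∈ Nsub, ∀ x y : Fin 2 → K,
        ((u : Matrix (Fin 2) (Fin 2) K).mulVec x 0) * ((u : Matrix (Fin 2) (Fin 2) K).mulVec y 1)
          - ((u : Matrix (Fin 2) (Fin 2) K).mulVec x 1) * ((u : Matrix (Fin 2) (Fin 2) K).mulVec y 0)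
          = x 0 * y 1 - x 1 * y 0) ∧
      -- `W = K²` is a faithful `N`-module:
      (∀ u ∈ Nsub, (∀ x : Fin 2 → K, (u : Matrix (Fin 2) (Fin 2) K).mulVec x = x) → u = 1) ∧
      -- `W` is a simple `N`-module:
      (∀ U : Submodule K (Fin 2 → K),
        (∀ u ∈ Nsub, ∀ x ∈ U, (u : Matrix (Fin 2) (Fin 2) K).mulVec x ∈ U) →
        U = ⊥ ∨ U = ⊤) ∧
      -- `W` is absolutely simple: the commutant of `N` consists of scalars:
      (∀ φ : (Fin 2 → K) →ₗ[K] (Fin 2 → K),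
        (∀ u ∈ Nsub, ∀ x : Fin 2 → K,
          φ ((u : Matrix (Fin 2) (Fin 2) K).mulVec x) = (u : Matrix (Fin 2) (Fin 2) K).mulVec (φ x)) →
        ∃ c : K, φ = c • LinearMap.id) ∧
      -- `G = N × μ_ℓ` is a group of inertia type for `p`:
      (∃ (H : Subgroup (Nsub × Multiplicative (ZMod ℓ))) (hH : H.Normal),
        IsPGroup p H ∧
        (letI := hH;
          IsCyclic ((Nsub × Multiplicative (ZMod ℓ)) ⧸ H) ∧
          (Nat.card ((Nsub × Multiplicative (ZMod ℓ)) ⧸ H)).Coprime p)) :=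
  stmt_19_general p ℓ q hp hodd hne hq K ζq hζ
end
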